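/- arXiv:1305.3319 — 8 statements merged into one kernel-verified Lean document; each statement's English description precedes it below -/
import Mathlib

section
/- Suppose m > 1 and let η ∈ (0,∞) be the unique positive root of ψ. Let W : [0,∞) → (0,∞) be a continuous function such that t ↦ e^{−ηt} W(t) is nondecreasing and ∫₀^∞ W(x) e^{−λx} dx = 1/ψ(λ) for every λ > η. Then e^{−ηt} W(t) → 1/ψ′(η) as t → ∞; equivalently, W(t) ∼ e^{ηt}/ψ′(η) as t → ∞. -/
open MeasureTheory Filter Set
open scoped ENNReal Topology

/-- Lemma 2.2 (i), behavior of W: in the supercritical case m > 1,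
if η is the unique positive root of ψ and W is the scale function
(continuous, positive, with t ↦ e^{−ηt}W(t) nondecreasing and Laplace transform
1/ψ(λ) for λ > η), then e^{−ηt} W(t) → 1/ψ′(η) as t → ∞, where
ψ′(η) = 1 − ∫ r e^{−ηr} Λ(dr) > 0. -/
theorem stmt_1
    (Λ : Measure ℝ) [IsFiniteMeasure Λ] (hΛne : Λ ≠ 0)
    (hsupp : Λ (Set.Iic 0) = 0)
    (hnoatom : ∀ x : ℝ, Λ {x} = 0)
    (m : ℝ≥0∞) (hm : m = ∫⁻ r, ENNReal.ofReal r ∂Λ) (hm1 : 1 < m)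
    (ψ : ℝ → ℝ) (hψ : ∀ l : ℝ, ψ l = l - ∫ r, (1 - Real.exp (-(l * r))) ∂Λ)
    (η : ℝ) (hη0 : 0 < η) (hηroot : ψ η = 0)
    (hηuniq : ∀ x : ℝ, 0 < x → ψ x = 0 → x = η)
    (dψ : ℝ) (hdψ : dψ = 1 - ∫ r, r * Real.exp (-(η * r)) ∂Λ)
    (hdψpos : 0 < dψ)
    (W : ℝ → ℝ)
    (hWcont : ContinuousOn W (Set.Ici 0))
    (hWpos : ∀ t : ℝ, 0 ≤ t → 0 < W t)
    (hWmono : MonotoneOn (fun t => Real.exp (-(η * t)) * W t) (Set.Ici 0))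
    (hLaplace : ∀ l : ℝ, η < l →
      ∫ x in Set.Ioi (0 : ℝ), W x * Real.exp (-(l * x)) = 1 / ψ l) :
    Tendsto (fun t => Real.exp (-(η * t)) * W t) atTop (𝓝 (1 / dψ)) := by
  set g : ℝ → ℝ := fun t => Real.exp (-(η * t)) * W t with hgdef
  -- a.e. positivity of r under Λ
  have haepos : ∀ᵐ r ∂Λ, 0 < r := by
    rw [ae_iff]
    have h : {r : ℝ | ¬ 0 < r} = Set.Iic 0 := by ext r; simp
    rw [h]; exact hsupp
  -- integrability of 1 - exp(-(l r))
  have hint1 : ∀ l : ℝ, 0 < l → Integrable (fun r => 1 - Real.exp (-(l * r))) Λ := by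
    intro l hl
    refine Integrable.mono' (integrable_const (1:ℝ)) ?_ ?_
    · exact (continuous_const.sub
        ((Real.continuous_exp.comp ((continuous_const.mul continuous_id).neg)))).aestronglyMeasurable
    · filter_upwards [haepos] with r hr
      have h1 : Real.exp (-(l * r)) ≤ 1 := by
        apply Real.exp_le_one_iff.2; nlinarith
      have h2 : 0 < Real.exp (-(l * r)) := Real.exp_pos _
      rw [Real.norm_eq_abs, abs_le]; constructor <;> nlinarith
  -- integrability of r * exp(-(η r)) with bound η⁻¹
  have hxexp : ∀ r : ℝ, 0 < r → r * Real.exp (-(η * r)) ≤ η⁻¹ := by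
    intro r hr
    have h1 : η * r ≤ Real.exp (η * r) := by
      have := Real.add_one_le_exp (η * r); linarith
    have h2 : 0 < Real.exp (η * r) := Real.exp_pos _
    rw [Real.exp_neg]
    have h3 : (Real.exp (η * r))⁻¹ ≤ (η * r)⁻¹ := by
      gcongr
    calc r * (Real.exp (η * r))⁻¹ ≤ r * (η * r)⁻¹ := by
          exact mul_le_mul_of_nonneg_left h3 hr.le
      _ = η⁻¹ := by field_simp [mul_comm]
  have hint2 : Integrable (fun r => r * Real.exp (-(η * r))) Λ := by
    refine Integrable.mono' (integrable_const (η⁻¹ : ℝ)) ?_ ?_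
    · exact (continuous_id.mul
        (Real.continuous_exp.comp ((continuous_const.mul continuous_id).neg))).aestronglyMeasurable
    · filter_upwards [haepos] with r hr
      rw [Real.norm_eq_abs, abs_of_nonneg (by positivity)]
      exact hxexp r hr
  -- ψ l ≠ 0 for l > η
  have hψne : ∀ l : ℝ, η < l → ψ l ≠ 0 := by
    intro l hl h0
    exact absurd (hηuniq l (hη0.trans hl) h0) (ne_of_gt hl)
  -- the right-derivative identity : ψ(η+s) = s - ∫ e^{-ηr}(1 - e^{-sr})
  have hψs : ∀ s : ℝ, 0 < s →
      ψ (η + s) = s - ∫ r, Real.exp (-(η * r)) * (1 - Real.exp (-(s * r))) ∂Λ := by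
    intro s hs
    have hη' : η = ∫ r, (1 - Real.exp (-(η * r))) ∂Λ := by
      have := hψ η; rw [hηroot] at this; linarith
    have hsub : ∫ r, Real.exp (-(η * r)) * (1 - Real.exp (-(s * r))) ∂Λ
        = (∫ r, (1 - Real.exp (-((η + s) * r))) ∂Λ) - ∫ r, (1 - Real.exp (-(η * r))) ∂Λ := by
      rw [← integral_sub (hint1 (η + s) (by linarith)) (hint1 η hη0)]
      congr 1; funext r
      have : Real.exp (-((η + s) * r)) = Real.exp (-(η * r)) * Real.exp (-(s * r)) := by
        rw [← Real.exp_add]; ring_nf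
      rw [this]; ring
    rw [hψ (η + s), hsub]
    linarith
  -- Tendsto ψ(η+s)/s → dψ as s → 0⁺
  have hΦ : Tendsto (fun s => ψ (η + s) / s) (𝓝[>] (0:ℝ)) (𝓝 dψ) := by
    have hDC : Tendsto (fun s => ∫ r, Real.exp (-(η * r)) * ((1 - Real.exp (-(s * r))) / s) ∂Λ)
        (𝓝[>] (0:ℝ)) (𝓝 (∫ r, r * Real.exp (-(η * r)) ∂Λ)) := by
      apply tendsto_integral_filter_of_dominated_convergence (fun _ => η⁻¹)
      · filter_upwards with s
        exact ((Real.continuous_exp.comp ((continuous_const.mul continuous_id).neg)).mul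
          ((continuous_const.sub
            (Real.continuous_exp.comp ((continuous_const.mul continuous_id).neg))).div_const s)).aestronglyMeasurable
      · filter_upwards [self_mem_nhdsWithin] with s hs
        have hs' : (0:ℝ) < s := hs
        filter_upwards [haepos] with r hr
        have h1 : 1 - Real.exp (-(s * r)) ≤ s * r := by
          have := Real.add_one_le_exp (-(s * r)); linarith
        have h2 : 0 ≤ 1 - Real.exp (-(s * r)) := by
          have : Real.exp (-(s * r)) ≤ 1 := Real.exp_le_one_iff.2 (by nlinarith)
          linarith
        have h3 : (1 - Real.exp (-(s * r))) / s ≤ r := by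
          rw [div_le_iff₀ hs']; nlinarith
        have h4 : 0 ≤ (1 - Real.exp (-(s * r))) / s := by positivity
        have h5 : 0 < Real.exp (-(η * r)) := Real.exp_pos _
        have h6 : Real.exp (-(η * r)) ≤ 1 := Real.exp_le_one_iff.2 (by nlinarith)
        rw [Real.norm_eq_abs, abs_of_nonneg (by positivity)]
        calc Real.exp (-(η * r)) * ((1 - Real.exp (-(s * r))) / s)
            ≤ Real.exp (-(η * r)) * r := by nlinarith
          _ = r * Real.exp (-(η * r)) := by ring
          _ ≤ η⁻¹ := hxexp r hr
      · exact integrable_const _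
      · filter_upwards [haepos] with r hr
        have hd : HasDerivAt (fun s : ℝ => 1 - Real.exp (-(s * r))) r 0 := by
          have h1 : HasDerivAt (fun s : ℝ => -(s * r)) (-(1 * r)) 0 :=
            ((hasDerivAt_id (0:ℝ)).mul_const r).neg
          have h2 := h1.exp
          have h3 := h2.const_sub 1
          refine h3.congr_deriv ?_
          simp
        have hslope := hasDerivAt_iff_tendsto_slope.1 hd
        have heq : ∀ s : ℝ, s ≠ 0 → slope (fun s : ℝ => 1 - Real.exp (-(s * r))) 0 s
            = (1 - Real.exp (-(s * r))) / s := by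
          intro s hs
          simp [slope_fun_def_field]
        have hslope' : Tendsto (fun s => (1 - Real.exp (-(s * r))) / s) (𝓝[>] (0:ℝ)) (𝓝 r) := by
          apply Tendsto.congr' _ (hslope.mono_left (nhdsWithin_mono 0 (fun x hx => ne_of_gt hx)))
          filter_upwards [self_mem_nhdsWithin] with s hs
          exact heq s (ne_of_gt hs)
        have := hslope'.const_mul (Real.exp (-(η * r)))
        convert this using 2
        ring
    have hbase : Tendsto (fun s => 1 - ∫ r, Real.exp (-(η * r)) * ((1 - Real.exp (-(s * r))) / s) ∂Λ)
        (𝓝[>] (0:ℝ)) (𝓝 dψ) := by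
      rw [hdψ]
      exact tendsto_const_nhds.sub hDC
    apply hbase.congr'
    filter_upwards [self_mem_nhdsWithin] with s hs
    have hs' : (0:ℝ) < s := hs
    rw [hψs s hs']
    rw [sub_div, ← integral_div]
    have : ∀ r : ℝ, Real.exp (-(η * r)) * (1 - Real.exp (-(s * r))) / s
        = Real.exp (-(η * r)) * ((1 - Real.exp (-(s * r))) / s) := fun r => by ring
    simp_rw [this]
    rw [div_self (ne_of_gt hs')]
  -- key Abelian limit : s / ψ(η+s) → 1/dψ
  have hkey : Tendsto (fun s => s / ψ (η + s)) (𝓝[>] (0:ℝ)) (𝓝 (1 / dψ)) := by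
    have := hΦ.inv₀ (ne_of_gt hdψpos)
    simp_rw [inv_div] at this
    rw [one_div]
    exact this
  -- integrability of the Laplace integrands
  have hWint : ∀ l : ℝ, η < l → IntegrableOn (fun x => W x * Real.exp (-(l * x))) (Ioi 0) := by
    intro l hl
    by_contra hni
    have h0 := integral_undef hni
    rw [hLaplace l hl, one_div, inv_eq_zero] at h0
    exact hψne l hl h0
  have heqfun : ∀ s : ℝ, (fun x => g x * Real.exp (-(s * x)))
      = (fun x => W x * Real.exp (-((η + s) * x))) := by
    intro s; funext x
    rw [hgdef]
    rw [show -((η + s) * x) = -(η * x) + -(s * x) by ring, Real.exp_add]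
    ring
  have hgInt : ∀ s : ℝ, 0 < s → IntegrableOn (fun x => g x * Real.exp (-(s * x))) (Ioi 0) := by
    intro s hs
    rw [heqfun s]
    exact hWint (η + s) (by linarith)
  have hgF : ∀ s : ℝ, 0 < s →
      ∫ x in Ioi (0:ℝ), g x * Real.exp (-(s * x)) = 1 / ψ (η + s) := by
    intro s hs
    rw [heqfun s]
    exact hLaplace (η + s) (by linarith)
  -- exponential integral computations
  have hexpint : ∀ T : ℝ, ∀ s : ℝ, 0 < s →
      ∫ x in Ioi T, Real.exp (-(s * x)) = s⁻¹ * Real.exp (-(s * T)) := by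
    intro T s hs
    have := integral_comp_mul_left_Ioi (fun u => Real.exp (-u)) T hs
    simp only [smul_eq_mul] at this
    simpa [integral_exp_neg_Ioi, integral_exp_Iic] using this
  have hexpIntOn : ∀ T : ℝ, ∀ s : ℝ, 0 < s →
      IntegrableOn (fun x => Real.exp (-(s * x))) (Ioi T) := by
    intro T s hs
    have := exp_neg_integrableOn_Ioi T hs
    simpa [neg_mul] using this
  have hgpos : ∀ t : ℝ, 0 ≤ t → 0 < g t := by
    intro t ht
    exact mul_pos (Real.exp_pos _) (hWpos t ht)
  -- the fundamental lower bound
  have hlow : ∀ T : ℝ, 0 ≤ T → ∀ s : ℝ, 0 < s →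
      g T * Real.exp (-(s * T)) ≤ s * ∫ x in Ioi (0:ℝ), g x * Real.exp (-(s * x)) := by
    intro T hT s hs
    have hInt0 := hgInt s hs
    have hIntT : IntegrableOn (fun x => g x * Real.exp (-(s * x))) (Ioi T) :=
      hInt0.mono_set (Ioi_subset_Ioi hT)
    have h1 : ∫ x in Ioi T, g T * Real.exp (-(s * x))
        ≤ ∫ x in Ioi T, g x * Real.exp (-(s * x)) := by
      apply setIntegral_mono_on ((hexpIntOn T s hs).const_mul _) hIntT measurableSet_Ioi
      intro x hx
      have hTx : T ≤ x := le_of_lt hx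
      have := hWmono hT (hT.trans hTx) hTx
      exact mul_le_mul_of_nonneg_right this (Real.exp_pos _).le
    have h2 : ∫ x in Ioi T, g x * Real.exp (-(s * x))
        ≤ ∫ x in Ioi (0:ℝ), g x * Real.exp (-(s * x)) := by
      apply setIntegral_mono_set hInt0
      · rw [EventuallyLE]
        rw [ae_restrict_iff' measurableSet_Ioi]
        filter_upwards with x hx
        exact le_of_lt (mul_pos (hgpos x (le_of_lt hx)) (Real.exp_pos _))
      · exact (Ioi_subset_Ioi hT).eventuallyLE
    have h3 : ∫ x in Ioi T, g T * Real.exp (-(s * x)) = g T * (s⁻¹ * Real.exp (-(s * T))) := by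
      rw [integral_const_mul, hexpint T s hs]
    have h4 : g T * (s⁻¹ * Real.exp (-(s * T))) ≤ ∫ x in Ioi (0:ℝ), g x * Real.exp (-(s * x)) := by
      rw [← h3]; exact h1.trans h2
    calc g T * Real.exp (-(s * T)) = s * (g T * (s⁻¹ * Real.exp (-(s * T)))) := by
          field_simp
      _ ≤ s * ∫ x in Ioi (0:ℝ), g x * Real.exp (-(s * x)) :=
          mul_le_mul_of_nonneg_left h4 hs.le
  -- combined : s * F s → 1/dψ
  have hkeyF : Tendsto (fun s => s * ∫ x in Ioi (0:ℝ), g x * Real.exp (-(s * x)))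
      (𝓝[>] (0:ℝ)) (𝓝 (1 / dψ)) := by
    apply hkey.congr'
    filter_upwards [self_mem_nhdsWithin] with s hs
    have hs' : (0:ℝ) < s := hs
    rw [hgF s hs']
    rw [div_eq_mul_inv, one_div, mul_comm]
  have hconte : ∀ T : ℝ, Tendsto (fun s : ℝ => g T * Real.exp (-(s * T)))
      (𝓝[>] (0:ℝ)) (𝓝 (g T)) := by
    intro T
    have hc : Continuous fun s : ℝ => g T * Real.exp (-(s * T)) := by
      exact continuous_const.mul (Real.continuous_exp.comp (continuous_id.mul continuous_const).neg)
    have := (hc.tendsto 0).mono_left (nhdsWithin_le_nhds (s := Ioi (0:ℝ)))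
    simpa using this
  by_cases hbdd : BddAbove (g '' Ici 0)
  · -- bounded case
    set L := sSup (g '' Ici 0) with hLdef
    have hne : (g '' Ici 0).Nonempty := ⟨g 0, ⟨0, Set.self_mem_Ici, rfl⟩⟩
    have hFL : Tendsto (fun s => s * ∫ x in Ioi (0:ℝ), g x * Real.exp (-(s * x)))
        (𝓝[>] (0:ℝ)) (𝓝 L) := by
      rw [tendsto_order]
      constructor
      · intro a ha
        obtain ⟨y, ⟨T, hT, rfl⟩, hya⟩ := exists_lt_of_lt_csSup hne ha
        filter_upwards [(hconte T).eventually (eventually_gt_nhds hya), self_mem_nhdsWithin]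
          with s hs1 hs2
        exact hs1.trans_le (hlow T hT s hs2)
      · intro a ha
        filter_upwards [self_mem_nhdsWithin] with s hs
        have hs' : (0:ℝ) < s := hs
        refine lt_of_le_of_lt ?_ ha
        have hub : ∫ x in Ioi (0:ℝ), g x * Real.exp (-(s * x))
            ≤ ∫ x in Ioi (0:ℝ), L * Real.exp (-(s * x)) := by
          apply setIntegral_mono_on (hgInt s hs') ((hexpIntOn 0 s hs').const_mul _)
            measurableSet_Ioi
          intro x hx
          have hgL : g x ≤ L := le_csSup hbdd (mem_image_of_mem _ (mem_Ici.2 (le_of_lt hx)))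
          exact mul_le_mul_of_nonneg_right hgL (Real.exp_pos _).le
        have hLv : ∫ x in Ioi (0:ℝ), L * Real.exp (-(s * x)) = L * s⁻¹ := by
          rw [integral_const_mul, hexpint 0 s hs']
          simp
        calc s * ∫ x in Ioi (0:ℝ), g x * Real.exp (-(s * x))
            ≤ s * (L * s⁻¹) := by
              rw [← hLv]; exact mul_le_mul_of_nonneg_left hub hs'.le
          _ = L := by field_simp
    have hLeq : L = 1 / dψ := tendsto_nhds_unique hFL hkeyF
    -- monotone convergence of g to L
    have hmono' : Monotone (fun t => g (max t 0)) := fun a b hab =>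
      hWmono (le_max_right a 0) (le_max_right b 0) (max_le_max hab le_rfl)
    have hbdd' : BddAbove (range fun t => g (max t 0)) := by
      obtain ⟨M, hM⟩ := hbdd
      refine ⟨M, ?_⟩
      rintro y ⟨t, rfl⟩
      exact hM (mem_image_of_mem _ (le_max_right t 0))
    have hsup : ⨆ t, g (max t 0) = L := by
      apply le_antisymm
      · exact ciSup_le fun t => le_csSup hbdd (mem_image_of_mem _ (le_max_right t 0))
      · apply csSup_le hne
        rintro y ⟨T, hT, rfl⟩
        have hmax : g T = g (max T 0) := by rw [max_eq_left hT]
        rw [hmax]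
        exact le_ciSup hbdd' T
    have htend := tendsto_atTop_ciSup hmono' hbdd'
    rw [hsup, hLeq] at htend
    apply htend.congr'
    filter_upwards [eventually_ge_atTop (0:ℝ)] with t ht
    rw [max_eq_left ht]
  · -- unbounded case: contradiction
    exfalso
    have htop : Tendsto (fun s => s * ∫ x in Ioi (0:ℝ), g x * Real.exp (-(s * x)))
        (𝓝[>] (0:ℝ)) atTop := by
      rw [tendsto_atTop]
      intro M
      obtain ⟨y, ⟨T, hT, rfl⟩, hMy⟩ := (not_bddAbove_iff.1 hbdd) M
      filter_upwards [(hconte T).eventually (eventually_gt_nhds hMy), self_mem_nhdsWithin]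
        with s hs1 hs2
      exact hs1.le.trans (hlow T hT s hs2)
    exact not_tendsto_atTop_of_tendsto_nhds hkeyF htop
end

section
/- Suppose m > 1, let η ∈ (0,∞) be the unique positive root of ψ, and let W : [0,∞) → (0,∞) be a continuously differentiable function such that t ↦ e^{−ηt} W(t) is nondecreasing, ∫₀^∞ W(x) e^{−λx} dx = 1/ψ(λ) for every λ > η, and W′(t) = b W(t) − ∫₀^t W(t−x) Λ(dx) for all t ≥ 0. Then e^{−ηt} W′(t) → η/ψ′(η) as t → ∞; equivalently, W′(t) ∼ (η/ψ′(η)) e^{ηt} as t → ∞. -/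
open MeasureTheory Filter Set
open scoped ENNReal Topology

lemma aux_exp_Ioi {e : ℝ} (he : 0 < e) (T : ℝ) :
    ∫ x in Set.Ioi T, Real.exp (-(e * x)) = Real.exp (-(e * T)) / e := by
  have hderiv : ∀ x ∈ Set.Ici T,
      HasDerivAt (fun x => -Real.exp (-(e * x)) / e) (Real.exp (-(e * x))) x := by
    intro x _
    have h1 : HasDerivAt (fun x : ℝ => -(e * x)) (-e) x := by
      exact (((hasDerivAt_id x).const_mul e).neg).congr_deriv (by simp)
    have h2 := (h1.exp).neg.div_const e
    exact h2.congr_deriv (by rw [div_eq_iff he.ne']; ring)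
  have hint : IntegrableOn (fun x => Real.exp (-(e * x))) (Set.Ioi T) := by
    simpa [neg_mul] using exp_neg_integrableOn_Ioi T he
  have htend : Tendsto (fun x => -Real.exp (-(e * x)) / e) atTop (𝓝 (-0 / e)) := by
    refine Tendsto.div_const (Tendsto.neg ?_) _
    refine Real.tendsto_exp_atBot.comp ?_
    simpa [neg_mul] using tendsto_id.const_mul_atTop_of_neg (neg_neg_iff_pos.2 he)
  have := integral_Ioi_of_hasDerivAt_of_tendsto' hderiv hint htend
  rw [this]
  ring

lemma aux_slope (r : ℝ) :
    Tendsto (fun e => (1 - Real.exp (-(e * r))) / e) (𝓝[>] (0:ℝ)) (𝓝 r) := by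
  have hD : HasDerivAt (fun e : ℝ => 1 - Real.exp (-(e * r))) r 0 := by
    have h1 : HasDerivAt (fun e : ℝ => -(e * r)) (-r) 0 := by
      exact (((hasDerivAt_id (0:ℝ)).mul_const r).neg).congr_deriv (by simp)
    have h3 := (hasDerivAt_const (0:ℝ) (1:ℝ)).sub h1.exp
    exact h3.congr_deriv (by simp)
  have h2 : Tendsto (slope (fun e : ℝ => 1 - Real.exp (-(e * r))) 0) (𝓝[>] (0:ℝ)) (𝓝 r) :=
    (hasDerivAt_iff_tendsto_slope.mp hD).mono_left (nhdsWithin_mono _ (fun x hx => ne_of_gt hx))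
  refine h2.congr (fun e => ?_)
  simp [slope_def_field, div_eq_mul_inv, mul_comm]

/-- Lemma 2.2 (i), behavior of W′: in the supercritical case m > 1,
if η is the unique positive root of ψ and W is the (continuously differentiable)
scale function, with t ↦ e^{−ηt}W(t) nondecreasing, Laplace transform 1/ψ(λ) for
λ > η, and W′(t) = bW(t) − ∫₀^t W(t−x) Λ(dx), then e^{−ηt} W′(t) → η/ψ′(η). -/
theorem stmt_2
    (Λ : Measure ℝ) [IsFiniteMeasure Λ] (hΛne : Λ ≠ 0)
    (hsupp : Λ (Set.Iic 0) = 0)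
    (hnoatom : ∀ x : ℝ, Λ {x} = 0)
    (b : ℝ) (hb : b = (Λ Set.univ).toReal)
    (m : ℝ≥0∞) (hm : m = ∫⁻ r, ENNReal.ofReal r ∂Λ) (hm1 : 1 < m)
    (ψ : ℝ → ℝ) (hψ : ∀ l : ℝ, ψ l = l - ∫ r, (1 - Real.exp (-(l * r))) ∂Λ)
    (η : ℝ) (hη0 : 0 < η) (hηroot : ψ η = 0)
    (hηuniq : ∀ x : ℝ, 0 < x → ψ x = 0 → x = η)
    (dψ : ℝ) (hdψ : dψ = 1 - ∫ r, r * Real.exp (-(η * r)) ∂Λ)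
    (hdψpos : 0 < dψ)
    (W W' : ℝ → ℝ)
    (hWpos : ∀ t : ℝ, 0 ≤ t → 0 < W t)
    (hWderiv : ∀ t ∈ Set.Ici (0 : ℝ), HasDerivWithinAt W (W' t) (Set.Ici 0) t)
    (hW'cont : ContinuousOn W' (Set.Ici 0))
    (hWmono : MonotoneOn (fun t => Real.exp (-(η * t)) * W t) (Set.Ici 0))
    (hLaplace : ∀ l : ℝ, η < l →
      ∫ x in Set.Ioi (0 : ℝ), W x * Real.exp (-(l * x)) = 1 / ψ l)
    (hW'eq : ∀ t : ℝ, 0 ≤ t →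
      W' t = b * W t - ∫ x in Set.Ioc (0 : ℝ) t, W (t - x) ∂Λ) :
    Tendsto (fun t => Real.exp (-(η * t)) * W' t) atTop (𝓝 (η / dψ)) := by
  -- a.e. positivity of Λ
  have hae : ∀ᵐ r ∂Λ, 0 < r := by
    rw [ae_iff]
    refine measure_mono_null (fun r hr => ?_) hsupp
    simpa using not_lt.mp hr
  -- integrability helpers
  have hint_exp : ∀ l : ℝ, 0 < l → Integrable (fun r => Real.exp (-(l * r))) Λ := by
    intro l hl
    refine Integrable.mono' (integrable_const 1) ?_ ?_
    · exact (Real.continuous_exp.comp (continuous_const.mul continuous_id).neg).aestronglyMeasurable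
    · filter_upwards [hae] with r hr
      rw [Real.norm_eq_abs, abs_of_pos (Real.exp_pos _), ← Real.exp_zero]
      exact Real.exp_le_exp.mpr (by nlinarith)
  have hint_one_sub : ∀ l : ℝ, 0 < l → Integrable (fun r => 1 - Real.exp (-(l * r))) Λ :=
    fun l hl => (integrable_const 1).sub (hint_exp l hl)
  have hbnd : ∀ᵐ r ∂Λ, r * Real.exp (-(η * r)) ≤ 1/η := by
    filter_upwards [hae] with r hr
    have hE : η * r + 1 ≤ Real.exp (η * r) := Real.add_one_le_exp _
    have h3 : Real.exp (-(η * r)) * Real.exp (η * r) = 1 := by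
      rw [← Real.exp_add]; simp
    rw [le_div_iff₀ hη0]
    set x := Real.exp (-(η * r)) with hx
    have hxpos : (0:ℝ) < x := Real.exp_pos _
    nlinarith [mul_le_mul_of_nonneg_right hE hxpos.le, h3]
  have hint_rexp : Integrable (fun r => r * Real.exp (-(η * r))) Λ := by
    refine Integrable.mono' (integrable_const (1/η)) ?_ ?_
    · exact (continuous_id.mul (Real.continuous_exp.comp
        (continuous_const.mul continuous_id).neg)).aestronglyMeasurable
    · filter_upwards [hae, hbnd] with r hr hbr
      rw [Real.norm_eq_abs, abs_of_pos (by positivity)]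
      exact hbr
  -- b - I = η
  set I : ℝ := ∫ r, Real.exp (-(η * r)) ∂Λ with hIdef
  have hbI : b - I = η := by
    have h0 := hψ η
    rw [hηroot] at h0
    have h1 : ∫ r, (1 - Real.exp (-(η * r))) ∂Λ = b - I := by
      rw [integral_sub (integrable_const 1) (hint_exp η hη0), integral_const, hb]
      simp; rfl
    rw [h1] at h0
    linarith
  -- right derivative of ψ at η
  have hslope : Tendsto (fun e => ψ (η + e) / e) (𝓝[>] (0:ℝ)) (𝓝 dψ) := by
    have key : ∀ e : ℝ, 0 < e →
        ψ (η + e) / e = 1 - ∫ r, Real.exp (-(η * r)) * ((1 - Real.exp (-(e * r))) / e) ∂Λ := by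
      intro e he
      have hsplit : ∀ r : ℝ, (1 - Real.exp (-((η + e) * r)))
          = (1 - Real.exp (-(η * r))) + Real.exp (-(η * r)) * (1 - Real.exp (-(e * r))) := by
        intro r
        have : Real.exp (-((η + e) * r)) = Real.exp (-(η * r)) * Real.exp (-(e * r)) := by
          rw [← Real.exp_add]; ring_nf
        rw [this]; ring
      have hint2 : Integrable (fun r => Real.exp (-(η * r)) * (1 - Real.exp (-(e * r)))) Λ := by
        have := (hint_one_sub (η + e) (by linarith)).sub (hint_one_sub η hη0)
        refine this.congr (Eventually.of_forall (fun r => ?_))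
        simp only [Pi.sub_apply]
        rw [hsplit r]; ring
      have h1 : ∫ r, (1 - Real.exp (-((η + e) * r))) ∂Λ
          = (∫ r, (1 - Real.exp (-(η * r))) ∂Λ)
            + ∫ r, Real.exp (-(η * r)) * (1 - Real.exp (-(e * r))) ∂Λ := by
        rw [← integral_add (hint_one_sub η hη0) hint2]
        exact integral_congr_ae (Eventually.of_forall (fun r => hsplit r))
      have h0 := hψ η
      rw [hηroot] at h0
      have h2 : ψ (η + e) = e - ∫ r, Real.exp (-(η * r)) * (1 - Real.exp (-(e * r))) ∂Λ := by
        rw [hψ (η + e), h1]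
        linarith
      rw [h2, sub_div, ← integral_div, div_self (ne_of_gt he)]
      congr 1
      simp_rw [mul_div_assoc]
    have hDCT : Tendsto (fun e => ∫ r, Real.exp (-(η * r)) * ((1 - Real.exp (-(e * r))) / e) ∂Λ)
        (𝓝[>] (0:ℝ)) (𝓝 (∫ r, r * Real.exp (-(η * r)) ∂Λ)) := by
      refine tendsto_integral_filter_of_dominated_convergence (fun _ => 1/η) ?_ ?_
        (integrable_const _) ?_
      · filter_upwards [self_mem_nhdsWithin] with e he
        exact ((Real.continuous_exp.comp (continuous_const.mul continuous_id).neg).mul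
          ((continuous_const.sub (Real.continuous_exp.comp
            (continuous_const.mul continuous_id).neg)).div_const e)).aestronglyMeasurable
      · filter_upwards [self_mem_nhdsWithin] with e he
        have he' : (0:ℝ) < e := he
        filter_upwards [hae, hbnd] with r hr hbr
        have h1 : (1 - Real.exp (-(e * r))) / e ≤ r := by
          rw [div_le_iff₀ he']
          have := Real.add_one_le_exp (-(e * r))
          nlinarith
        have h2 : 0 ≤ (1 - Real.exp (-(e * r))) / e := by
          apply div_nonneg _ he'.le
          have : Real.exp (-(e * r)) ≤ 1 := by
            rw [← Real.exp_zero]; exact Real.exp_le_exp.mpr (by nlinarith)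
          linarith
        rw [Real.norm_eq_abs, abs_of_nonneg (by positivity)]
        calc Real.exp (-(η * r)) * ((1 - Real.exp (-(e * r))) / e)
            ≤ Real.exp (-(η * r)) * r := mul_le_mul_of_nonneg_left h1 (Real.exp_pos _).le
          _ = r * Real.exp (-(η * r)) := by ring
          _ ≤ 1/η := hbr
      · filter_upwards [hae] with r hr
        simpa [mul_comm] using (aux_slope r).const_mul (Real.exp (-(η * r)))
    have hfin : Tendsto (fun e => 1 - ∫ r, Real.exp (-(η * r)) * ((1 - Real.exp (-(e * r))) / e) ∂Λ)
        (𝓝[>] (0:ℝ)) (𝓝 dψ) := by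
      rw [hdψ]
      exact tendsto_const_nhds.sub hDCT
    refine hfin.congr' ?_
    filter_upwards [self_mem_nhdsWithin] with e he
    exact (key e he).symm
  have hinv : Tendsto (fun e => e / ψ (η + e)) (𝓝[>] (0:ℝ)) (𝓝 (1/dψ)) := by
    have := hslope.inv₀ (ne_of_gt hdψpos)
    rw [← one_div] at this
    exact this.congr (fun e => inv_div _ _)
  have hψne : ∀ e : ℝ, 0 < e → ψ (η + e) ≠ 0 := by
    intro e he h
    have := hηuniq (η + e) (by linarith) h
    linarith
  -- the monotone function f
  set f : ℝ → ℝ := fun t => Real.exp (-(η * t)) * W t with hfdef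
  have hfpos : ∀ t : ℝ, 0 ≤ t → 0 < f t :=
    fun t ht => mul_pos (Real.exp_pos _) (hWpos t ht)
  -- Laplace transform of f
  have hLap : ∀ e : ℝ, 0 < e →
      ∫ x in Set.Ioi (0:ℝ), f x * Real.exp (-(e * x)) = 1 / ψ (η + e) := by
    intro e he
    have := hLaplace (η + e) (by linarith)
    rw [← this]
    refine integral_congr_ae (Eventually.of_forall (fun x => ?_))
    show Real.exp (-(η * x)) * W x * Real.exp (-(e * x)) = W x * Real.exp (-((η + e) * x))
    rw [show Real.exp (-((η + e) * x)) = Real.exp (-(η * x)) * Real.exp (-(e * x)) by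
      rw [← Real.exp_add]; ring_nf]
    ring
  have hIntf : ∀ e : ℝ, 0 < e →
      IntegrableOn (fun x => f x * Real.exp (-(e * x))) (Set.Ioi (0:ℝ)) := by
    intro e he
    by_contra hcon
    have h0 := integral_undef hcon
    rw [hLap e he] at h0
    exact (one_div_ne_zero (hψne e he)) h0
  -- lower bound: f T ≤ 1/dψ
  have hlow : ∀ T : ℝ, 0 ≤ T → ∀ e : ℝ, 0 < e →
      f T * Real.exp (-(e * T)) ≤ e / ψ (η + e) := by
    intro T hT e he
    have hsub : Set.Ioi T ⊆ Set.Ioi (0:ℝ) := fun x hx => lt_of_le_of_lt hT hx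
    have hint1 : IntegrableOn (fun x => f x * Real.exp (-(e * x))) (Set.Ioi T) :=
      (hIntf e he).mono_set hsub
    have hint2 : IntegrableOn (fun x => f T * Real.exp (-(e * x))) (Set.Ioi T) := by
      exact IntegrableOn.congr_fun ((exp_neg_integrableOn_Ioi T he).const_mul (f T))
        (fun x _ => by rw [neg_mul]) measurableSet_Ioi
    have step1 : f T * (Real.exp (-(e * T)) / e) = ∫ x in Set.Ioi T, f T * Real.exp (-(e * x)) := by
      rw [integral_const_mul, aux_exp_Ioi he]
    have step2 : (∫ x in Set.Ioi T, f T * Real.exp (-(e * x)))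
        ≤ ∫ x in Set.Ioi T, f x * Real.exp (-(e * x)) := by
      refine setIntegral_mono_on hint2 hint1 measurableSet_Ioi (fun x hx => ?_)
      have hfx : f T ≤ f x := hWmono hT (le_trans hT (le_of_lt hx)) (le_of_lt hx)
      exact mul_le_mul_of_nonneg_right hfx (Real.exp_pos _).le
    have step3 : (∫ x in Set.Ioi T, f x * Real.exp (-(e * x)))
        ≤ ∫ x in Set.Ioi (0:ℝ), f x * Real.exp (-(e * x)) := by
      refine setIntegral_mono_set (hIntf e he) ?_ (HasSubset.Subset.eventuallyLE hsub)
      refine (ae_restrict_iff' measurableSet_Ioi).mpr (Eventually.of_forall (fun x hx => ?_))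
      have := hfpos x (le_of_lt hx)
      positivity
    have : f T * (Real.exp (-(e * T)) / e) ≤ 1 / ψ (η + e) := by
      rw [step1, ← hLap e he]
      exact le_trans step2 step3
    rw [← mul_div_assoc, div_le_iff₀ he] at this
    calc f T * Real.exp (-(e * T)) ≤ 1 / ψ (η + e) * e := this
      _ = e / ψ (η + e) := by ring
  have hfT : ∀ T : ℝ, 0 ≤ T → f T ≤ 1/dψ := by
    intro T hT
    have hlhs : Tendsto (fun e => f T * Real.exp (-(e * T))) (𝓝[>] (0:ℝ)) (𝓝 (f T)) := by
      have hc : Continuous (fun e : ℝ => f T * Real.exp (-(e * T))) :=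
        continuous_const.mul (Real.continuous_exp.comp (continuous_id.mul continuous_const).neg)
      simpa using (hc.tendsto 0).mono_left (nhdsWithin_le_nhds (s := Set.Ioi (0:ℝ)))
    refine le_of_tendsto_of_tendsto hlhs hinv ?_
    filter_upwards [self_mem_nhdsWithin] with e he
    exact hlow T hT e he
  -- the limit L of f
  set g : ℝ → ℝ := fun t => f (max t 0) with hgdef
  have hg_mono : Monotone g := fun s t hst =>
    hWmono (le_max_right s 0) (le_max_right t 0) (max_le_max hst le_rfl)
  have hbdd : BddAbove (Set.range g) := by
    refine ⟨1/dψ, ?_⟩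
    rintro _ ⟨t, rfl⟩
    exact hfT (max t 0) (le_max_right t 0)
  set L : ℝ := ⨆ t, g t with hLdef
  have hgL : Tendsto g atTop (𝓝 L) := tendsto_atTop_ciSup hg_mono hbdd
  have hfL : Tendsto f atTop (𝓝 L) := by
    refine hgL.congr' ?_
    filter_upwards [eventually_ge_atTop (0:ℝ)] with t ht
    simp [hgdef, max_eq_left ht]
  have hf_le : ∀ x : ℝ, 0 ≤ x → f x ≤ L := by
    intro x hx
    have h := le_ciSup hbdd x
    simpa [hgdef, max_eq_left hx] using h
  have hL_le : L ≤ 1/dψ := ciSup_le (fun t => hfT _ (le_max_right t 0))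
  have hLpos : 0 < L := lt_of_lt_of_le (hfpos 0 le_rfl) (hf_le 0 le_rfl)
  have hup : ∀ e : ℝ, 0 < e → e / ψ (η + e) ≤ L := by
    intro e he
    have hintL : IntegrableOn (fun x => L * Real.exp (-(e * x))) (Set.Ioi (0:ℝ)) :=
      IntegrableOn.congr_fun ((exp_neg_integrableOn_Ioi 0 he).const_mul L)
        (fun x _ => by rw [neg_mul]) measurableSet_Ioi
    have h1 : (1:ℝ) / ψ (η + e) ≤ L / e := by
      rw [← hLap e he]
      calc (∫ x in Set.Ioi (0:ℝ), f x * Real.exp (-(e * x)))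
          ≤ ∫ x in Set.Ioi (0:ℝ), L * Real.exp (-(e * x)) := by
            refine setIntegral_mono_on (hIntf e he) hintL measurableSet_Ioi (fun x hx => ?_)
            exact mul_le_mul_of_nonneg_right (hf_le x (le_of_lt hx)) (Real.exp_pos _).le
        _ = L * (Real.exp (-(e * 0)) / e) := by rw [integral_const_mul, aux_exp_Ioi he]
        _ = L / e := by simp [div_eq_mul_inv]
    calc e / ψ (η + e) = (1 / ψ (η + e)) * e := by ring
      _ ≤ (L / e) * e := mul_le_mul_of_nonneg_right h1 he.le
      _ = L := by field_simp
  have hL_ge : 1/dψ ≤ L := by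
    refine le_of_tendsto hinv ?_
    filter_upwards [self_mem_nhdsWithin] with e he
    exact hup e he
  have hL : L = 1/dψ := le_antisymm hL_le hL_ge
  -- final dominated convergence
  have hWcont : ContinuousOn W (Set.Ici 0) := fun x hx => (hWderiv x hx).continuousWithinAt
  have hfcont : ContinuousOn f (Set.Ici 0) :=
    ((Real.continuous_exp.comp (continuous_const.mul continuous_id).neg).continuousOn).mul hWcont
  set F : ℝ → ℝ → ℝ :=
    fun t => (Set.Ioc (0:ℝ) t).indicator (fun x => Real.exp (-(η * x)) * f (t - x)) with hFdef
  have hW'rw : ∀ t : ℝ, 0 ≤ t →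
      Real.exp (-(η * t)) * W' t = b * f t - ∫ x, F t x ∂Λ := by
    intro t ht
    rw [hW'eq t ht, mul_sub]
    congr 1
    · show Real.exp (-(η * t)) * (b * W t) = b * f t
      rw [hfdef]; ring
    · have hxeq : ∀ x : ℝ, Real.exp (-(η * t)) * W (t - x)
          = Real.exp (-(η * x)) * f (t - x) := by
        intro x
        show _ = Real.exp (-(η * x)) * (Real.exp (-(η * (t - x))) * W (t - x))
        rw [← mul_assoc, ← Real.exp_add]
        have harg : -(η * x) + -(η * (t - x)) = -(η * t) := by ring
        rw [harg]
      calc Real.exp (-(η * t)) * ∫ x in Set.Ioc (0:ℝ) t, W (t - x) ∂Λ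
          = ∫ x in Set.Ioc (0:ℝ) t, Real.exp (-(η * t)) * W (t - x) ∂Λ :=
            (integral_const_mul _ _).symm
        _ = ∫ x in Set.Ioc (0:ℝ) t, Real.exp (-(η * x)) * f (t - x) ∂Λ := by simp_rw [hxeq]
        _ = ∫ x, F t x ∂Λ := (integral_indicator measurableSet_Ioc).symm
  have hFtend : Tendsto (fun t => ∫ x, F t x ∂Λ) atTop
      (𝓝 (∫ x, Real.exp (-(η * x)) * L ∂Λ)) := by
    refine tendsto_integral_filter_of_dominated_convergence (fun _ => L) ?_ ?_
      (integrable_const _) ?_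
    · filter_upwards [eventually_ge_atTop (0:ℝ)] with t ht
      show AEStronglyMeasurable
        ((Set.Ioc (0:ℝ) t).indicator fun x => Real.exp (-(η * x)) * f (t - x)) Λ
      refine (aestronglyMeasurable_indicator_iff measurableSet_Ioc).mpr ?_
      refine ContinuousOn.aestronglyMeasurable ?_ measurableSet_Ioc
      refine ContinuousOn.mul (Real.continuous_exp.comp (continuous_const.mul continuous_id).neg).continuousOn ?_
      refine hfcont.comp (Continuous.continuousOn (continuous_const.sub continuous_id)) ?_
      intro x hx
      exact sub_nonneg.mpr hx.2
    · filter_upwards [eventually_ge_atTop (0:ℝ)] with t ht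
      filter_upwards [hae] with x hx
      show ‖(Set.Ioc (0:ℝ) t).indicator (fun x => Real.exp (-(η * x)) * f (t - x)) x‖ ≤ L
      by_cases hmem : x ∈ Set.Ioc (0:ℝ) t
      · rw [Set.indicator_of_mem hmem]
        have h1 : 0 ≤ t - x := sub_nonneg.mpr hmem.2
        have h2 : f (t - x) ≤ L := hf_le _ h1
        have h3 : 0 < f (t - x) := hfpos _ h1
        have h4 : Real.exp (-(η * x)) ≤ 1 := by
          rw [← Real.exp_zero]; exact Real.exp_le_exp.mpr (by nlinarith)
        rw [Real.norm_eq_abs, abs_of_pos (mul_pos (Real.exp_pos _) h3)]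
        calc Real.exp (-(η * x)) * f (t - x) ≤ 1 * L := mul_le_mul h4 h2 h3.le zero_le_one
          _ = L := one_mul L
      · rw [Set.indicator_of_notMem hmem]
        simpa using hLpos.le
    · filter_upwards [hae] with x hx
      have htail : Tendsto (fun t : ℝ => f (t - x)) atTop (𝓝 L) := by
        have := hfL.comp (tendsto_atTop_add_const_right atTop (-x) tendsto_id)
        simpa [Function.comp_def, sub_eq_add_neg] using this
      refine Tendsto.congr' ?_ (htail.const_mul (Real.exp (-(η * x))))
      filter_upwards [eventually_ge_atTop x] with t ht
      show Real.exp (-(η * x)) * f (t - x)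
        = (Set.Ioc (0:ℝ) t).indicator (fun x => Real.exp (-(η * x)) * f (t - x)) x
      rw [Set.indicator_of_mem (Set.mem_Ioc.mpr ⟨hx, ht⟩)]
  have h2 : (∫ x, Real.exp (-(η * x)) * L ∂Λ) = I * L := by
    rw [show (fun x => Real.exp (-(η * x)) * L) = (fun x => L * Real.exp (-(η * x))) from
      funext (fun x => mul_comm _ _), integral_const_mul, hIdef]
    ring
  rw [h2] at hFtend
  have hmain : Tendsto (fun t => b * f t - ∫ x, F t x ∂Λ) atTop (𝓝 (b * L - I * L)) :=
    (hfL.const_mul b).sub hFtend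
  have heq : b * L - I * L = η / dψ := by
    have h3 : b * L - I * L = (b - I) * L := by ring
    rw [h3, hbI, hL, mul_one_div]
  rw [heq] at hmain
  refine Tendsto.congr' ?_ hmain
  filter_upwards [eventually_ge_atTop (0:ℝ)] with t ht
  exact (hW'rw t ht).symm
end

section
/- Let f : [0,∞) → [0,∞) be a continuous function, a ∈ ℝ and l ≥ 0 such that lim_{t→∞} e^{at} f(t) = l. Then for every integer i ≥ 1, one has sup_{t ∈ (0,∞)} e^{at} f^{⋆(i)}(t)/t^{i−1} < ∞ and lim_{t→∞} e^{at} f^{⋆(i)}(t)/t^{i−1} = l^{i}/(i−1)!. -/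
open MeasureTheory Filter Set
open scoped Topology

/-- Convolution of two functions on [0,∞): (f⋆g)(t) = ∫₀^t f(t−x) g(x) dx. -/
noncomputable def conv (f g : ℝ → ℝ) : ℝ → ℝ :=
  fun t => ∫ x in (0 : ℝ)..t, f (t - x) * g x

/-- Convolution powers: `convPow f n` is f^{⋆(n+1)}, i.e. `convPow f 0 = f^{⋆(1)} = f`
and `convPow f n = f ⋆ (convPow f (n-1)) = f^{⋆(n+1)}`. -/
noncomputable def convPow (f : ℝ → ℝ) : ℕ → ℝ → ℝ
  | 0 => f
  | n + 1 => conv f (convPow f n)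

lemma conv_continuous {u v : ℝ → ℝ} (hu : Continuous u) (hv : Continuous v) :
    Continuous (conv u v) := by
  have h : Continuous (Function.uncurry fun t x => u (t - x) * v x) :=
    (hu.comp (continuous_fst.sub continuous_snd)).mul (hv.comp continuous_snd)
  exact intervalIntegral.continuous_parametric_intervalIntegral_of_continuous
    (μ := volume) h continuous_id

lemma convPow_continuous {g : ℝ → ℝ} (hg : Continuous g) (n : ℕ) :
    Continuous (convPow g n) := by
  induction n with
  | zero => exact hg
  | succ n ih => exact conv_continuous hg ih

lemma convPow_exp (f : ℝ → ℝ) (a : ℝ) (n : ℕ) (t : ℝ) :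
    convPow (fun s => Real.exp (a * s) * f s) n t = Real.exp (a * t) * convPow f n t := by
  induction n generalizing t with
  | zero => rfl
  | succ n ih =>
    show (∫ x in (0:ℝ)..t, (Real.exp (a * (t - x)) * f (t - x)) *
        convPow (fun s => Real.exp (a * s) * f s) n x) = _
    have h1 : ∀ x : ℝ, (Real.exp (a * (t - x)) * f (t - x)) *
        convPow (fun s => Real.exp (a * s) * f s) n x
        = Real.exp (a * t) * (f (t - x) * convPow f n x) := by
      intro x
      rw [ih x]
      rw [show Real.exp (a * t) = Real.exp (a * (t - x)) * Real.exp (a * x) by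
        rw [← Real.exp_add]; ring_nf]
      ring
    simp only [h1]
    rw [intervalIntegral.integral_const_mul]
    rfl

lemma convPow_congr {f f' : ℝ → ℝ} (h : ∀ x, 0 ≤ x → f x = f' x) (n : ℕ) :
    ∀ t, 0 ≤ t → convPow f n t = convPow f' n t := by
  induction n with
  | zero => exact h
  | succ n ih =>
    intro t ht
    show (∫ x in (0:ℝ)..t, f (t - x) * convPow f n x)
        = ∫ x in (0:ℝ)..t, f' (t - x) * convPow f' n x
    apply intervalIntegral.integral_congr
    intro x hx
    rw [uIcc_of_le ht] at hx
    simp only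
    rw [h (t - x) (by linarith [hx.1, hx.2]), ih x hx.1]

lemma mydiv {a b c : ℝ} (h : a ≤ b) (hc : 0 < c) : a / c ≤ b / c := by gcongr

lemma key_tendsto {u v : ℝ → ℝ} (hu : Continuous u) (hv : Continuous v)
    (hunn : ∀ x, 0 ≤ x → 0 ≤ u x) (hvnn : ∀ x, 0 ≤ x → 0 ≤ v x)
    {c d : ℝ} (hc : 0 ≤ c) (hd : 0 ≤ d) (n : ℕ) {Cu Cv : ℝ}
    (hCu : ∀ x, 0 ≤ x → u x ≤ Cu) (hCv : ∀ x, 0 ≤ x → v x ≤ Cv * x ^ n)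
    (hul : Tendsto u atTop (𝓝 c))
    (hvl : Tendsto (fun x => v x / x ^ n) atTop (𝓝 d)) :
    Tendsto (fun t => conv u v t / t ^ (n + 1)) atTop (𝓝 (c * d / ((n : ℝ) + 1))) := by
  have hCu0 : 0 ≤ Cu := (hunn 0 le_rfl).trans (hCu 0 le_rfl)
  have hCv0 : 0 ≤ Cv := by
    have := (hvnn 1 zero_le_one).trans (hCv 1 zero_le_one); simpa using this
  have hint : ∀ t p q : ℝ, IntervalIntegrable (fun x => u (t - x) * v x) volume p q :=
    fun t p q => ((hu.comp (continuous_const.sub continuous_id)).mul hv).intervalIntegrable p q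
  refine tendsto_order.2 ⟨?_, ?_⟩
  · -- lower bound
    intro b hb
    have hcont : Continuous fun δ : ℝ => max (c - δ) 0 * max (d - δ) 0 / ((n : ℝ) + 1) := by
      fun_prop
    have hb' : b < max (c - (0:ℝ)) 0 * max (d - (0:ℝ)) 0 / ((n : ℝ) + 1) := by
      rw [sub_zero, sub_zero, max_eq_left hc, max_eq_left hd]; exact hb
    have hev : ∀ᶠ δ in 𝓝 (0:ℝ), b < max (c - δ) 0 * max (d - δ) 0 / ((n : ℝ) + 1) :=
      (hcont.tendsto 0).eventually (eventually_gt_nhds hb')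
    obtain ⟨δ, hδb, hδpos⟩ :=
      ((hev.filter_mono (nhdsWithin_le_nhds (s := Set.Ioi (0:ℝ)))).and self_mem_nhdsWithin).exists
    set c' := max (c - δ) 0 with hc'def
    set d' := max (d - δ) 0 with hd'def
    have hc'0 : 0 ≤ c' := le_max_right _ _
    have hd'0 : 0 ≤ d' := le_max_right _ _
    have h1 : ∀ᶠ x in atTop, c - δ < u x :=
      hul.eventually (eventually_gt_nhds (by linarith))
    have h2 : ∀ᶠ x in atTop, d - δ < v x / x ^ n :=
      hvl.eventually (eventually_gt_nhds (by linarith))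
    obtain ⟨T₀, hT₀⟩ := eventually_atTop.1 (h1.and h2)
    set T := max T₀ 1 with hTdef
    have hT1 : (1:ℝ) ≤ T := le_max_right _ _
    have hT0 : (0:ℝ) ≤ T := by linarith
    have hTprop : ∀ x, T ≤ x → c' ≤ u x ∧ d' * x ^ n ≤ v x := by
      intro x hx
      have hx0 : (0:ℝ) ≤ x := le_trans hT0 hx
      have hxpos : (0:ℝ) < x := lt_of_lt_of_le (by linarith) hx
      have hxpow : (0:ℝ) < x ^ n := pow_pos hxpos n
      obtain ⟨ha, hb2⟩ := hT₀ x (le_trans (le_max_left _ _) hx)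
      refine ⟨max_le ha.le (hunn x hx0), ?_⟩
      rcases le_or_gt (d - δ) 0 with h | h
      · rw [hd'def, max_eq_right h, zero_mul]; exact hvnn x hx0
      · rw [hd'def, max_eq_left h.le]
        exact (le_div_iff₀ hxpow).mp hb2.le
    have key1 : Tendsto (fun t : ℝ => ((t - T) ^ (n+1) - T ^ (n+1)) / t ^ (n+1))
        atTop (𝓝 1) := by
      have ha : Tendsto (fun t : ℝ => (t - T) / t) atTop (𝓝 1) := by
        have heq : (fun t : ℝ => 1 - T / t) =ᶠ[atTop] fun t => (t - T) / t := by
          filter_upwards [eventually_ne_atTop (0:ℝ)] with t ht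
          field_simp
        refine Tendsto.congr' heq ?_
        have h3 : Tendsto (fun t : ℝ => T / t) atTop (𝓝 0) :=
          tendsto_const_nhds.div_atTop tendsto_id
        simpa using tendsto_const_nhds.sub h3
      have hb3 : Tendsto (fun t : ℝ => T ^ (n+1) / t ^ (n+1)) atTop (𝓝 0) :=
        tendsto_const_nhds.div_atTop (tendsto_pow_atTop (Nat.succ_ne_zero n))
      have h2' := (ha.pow (n+1)).sub hb3
      rw [one_pow, sub_zero] at h2'
      exact h2'.congr fun t => by rw [div_pow, ← sub_div]
    have hLo : Tendsto
        (fun t : ℝ => c' * d' / ((n:ℝ)+1) * (((t - T) ^ (n+1) - T ^ (n+1)) / t ^ (n+1)))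
        atTop (𝓝 (c' * d' / ((n:ℝ)+1))) := by
      simpa using tendsto_const_nhds.mul key1
    filter_upwards [eventually_ge_atTop (2 * T), hLo.eventually (eventually_gt_nhds hδb)]
      with t ht hlt
    refine hlt.trans_le ?_
    have ht0 : (0:ℝ) < t := by linarith
    have htT : T ≤ t - T := by linarith
    have hsplit : conv u v t = ((∫ x in (0:ℝ)..T, u (t - x) * v x)
        + ∫ x in T..(t - T), u (t - x) * v x) + ∫ x in (t - T)..t, u (t - x) * v x := by
      rw [intervalIntegral.integral_add_adjacent_intervals (hint t 0 T) (hint t T (t - T)),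
          intervalIntegral.integral_add_adjacent_intervals (hint t 0 (t - T)) (hint t (t - T) t)]
      rfl
    have hI1 : 0 ≤ ∫ x in (0:ℝ)..T, u (t - x) * v x := by
      apply intervalIntegral.integral_nonneg hT0
      intro x hx
      exact mul_nonneg (hunn _ (by linarith [hx.1, hx.2])) (hvnn _ hx.1)
    have hI3 : 0 ≤ ∫ x in (t - T)..t, u (t - x) * v x := by
      apply intervalIntegral.integral_nonneg (by linarith)
      intro x hx
      exact mul_nonneg (hunn _ (by linarith [hx.2])) (hvnn _ (by linarith [hx.1]))
    have hI2 : c' * d' * (((t - T) ^ (n+1) - T ^ (n+1)) / ((n:ℝ)+1))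
        ≤ ∫ x in T..(t - T), u (t - x) * v x := by
      calc c' * d' * (((t - T) ^ (n+1) - T ^ (n+1)) / ((n:ℝ)+1))
          = ∫ x in T..(t - T), c' * (d' * x ^ n) := by
            rw [intervalIntegral.integral_const_mul, intervalIntegral.integral_const_mul,
              integral_pow]
            push_cast
            ring
        _ ≤ ∫ x in T..(t - T), u (t - x) * v x := by
            refine intervalIntegral.integral_mono_on htT ?_ (hint t T (t - T)) ?_
            · exact (continuous_const.mul (continuous_const.mul (continuous_pow n))).intervalIntegrable _ _
            · intro x hx
              have hA := hTprop x hx.1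
              have hB := hTprop (t - x) (by linarith [hx.2])
              exact mul_le_mul hB.1 hA.2
                (mul_nonneg hd'0 (pow_nonneg (by linarith [hx.1]) n))
                (hunn _ (by linarith [hx.1, hx.2]))
    have hre : c' * d' / ((n:ℝ)+1) * (((t - T) ^ (n+1) - T ^ (n+1)) / t ^ (n+1))
        = (c' * d' * (((t - T) ^ (n+1) - T ^ (n+1)) / ((n:ℝ)+1))) / t ^ (n+1) := by ring
    rw [hre, hsplit]
    exact mydiv (by linarith) (pow_pos ht0 (n+1))
  · -- upper bound
    intro b hb
    have hcont : Continuous fun δ : ℝ => (c + δ) * (d + δ) / ((n : ℝ) + 1) := by fun_prop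
    have hb' : (c + (0:ℝ)) * (d + (0:ℝ)) / ((n : ℝ) + 1) < b := by
      rw [add_zero, add_zero]; exact hb
    have hev : ∀ᶠ δ in 𝓝 (0:ℝ), (c + δ) * (d + δ) / ((n : ℝ) + 1) < b :=
      (hcont.tendsto 0).eventually (eventually_lt_nhds hb')
    obtain ⟨δ, hδb, hδpos⟩ :=
      ((hev.filter_mono (nhdsWithin_le_nhds (s := Set.Ioi (0:ℝ)))).and self_mem_nhdsWithin).exists
    have h1 : ∀ᶠ x in atTop, u x < c + δ :=
      hul.eventually (eventually_lt_nhds (by linarith))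
    have h2 : ∀ᶠ x in atTop, v x / x ^ n < d + δ :=
      hvl.eventually (eventually_lt_nhds (by linarith))
    obtain ⟨T₀, hT₀⟩ := eventually_atTop.1 (h1.and h2)
    set T := max T₀ 1 with hTdef
    have hT1 : (1:ℝ) ≤ T := le_max_right _ _
    have hT0 : (0:ℝ) ≤ T := by linarith
    have hTprop : ∀ x, T ≤ x → u x ≤ c + δ ∧ v x ≤ (d + δ) * x ^ n := by
      intro x hx
      have hxpos : (0:ℝ) < x := lt_of_lt_of_le (by linarith) hx
      have hxpow : (0:ℝ) < x ^ n := pow_pos hxpos n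
      obtain ⟨ha, hb2⟩ := hT₀ x (le_trans (le_max_left _ _) hx)
      exact ⟨ha.le, (div_le_iff₀ hxpow).mp hb2.le⟩
    set K := Cu * Cv * T ^ (n+1) / ((n:ℝ)+1) with hKdef
    set P := (c + δ) * (d + δ) with hPdef
    set Q := Cu * Cv * T with hQdef
    have hU : Tendsto (fun t : ℝ => K / t ^ (n+1) + P / ((n:ℝ)+1) + Q / t)
        atTop (𝓝 (P / ((n:ℝ)+1))) := by
      have hA : Tendsto (fun t : ℝ => K / t ^ (n+1)) atTop (𝓝 0) :=
        tendsto_const_nhds.div_atTop (tendsto_pow_atTop (Nat.succ_ne_zero n))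
      have hB : Tendsto (fun t : ℝ => Q / t) atTop (𝓝 0) :=
        tendsto_const_nhds.div_atTop tendsto_id
      simpa using (hA.add tendsto_const_nhds).add hB
    filter_upwards [eventually_ge_atTop (2 * T), hU.eventually (eventually_lt_nhds hδb)]
      with t ht hlt
    refine lt_of_le_of_lt ?_ hlt
    have ht0 : (0:ℝ) < t := by linarith
    have htT : T ≤ t - T := by linarith
    have hsplit : conv u v t = ((∫ x in (0:ℝ)..T, u (t - x) * v x)
        + ∫ x in T..(t - T), u (t - x) * v x) + ∫ x in (t - T)..t, u (t - x) * v x := by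
      rw [intervalIntegral.integral_add_adjacent_intervals (hint t 0 T) (hint t T (t - T)),
          intervalIntegral.integral_add_adjacent_intervals (hint t 0 (t - T)) (hint t (t - T) t)]
      rfl
    have hI1 : (∫ x in (0:ℝ)..T, u (t - x) * v x) ≤ K := by
      calc (∫ x in (0:ℝ)..T, u (t - x) * v x) ≤ ∫ x in (0:ℝ)..T, Cu * (Cv * x ^ n) := by
            refine intervalIntegral.integral_mono_on hT0 (hint t 0 T) ?_ ?_
            · exact (continuous_const.mul (continuous_const.mul (continuous_pow n))).intervalIntegrable _ _
            · intro x hx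
              exact mul_le_mul (hCu _ (by linarith [hx.1, hx.2])) (hCv _ hx.1)
                (hvnn _ hx.1) hCu0
        _ = K := by
            rw [intervalIntegral.integral_const_mul, intervalIntegral.integral_const_mul,
              integral_pow, hKdef]
            rw [zero_pow (Nat.succ_ne_zero n)]
            push_cast
            ring
    have hI2 : (∫ x in T..(t - T), u (t - x) * v x) ≤ P * t ^ (n+1) / ((n:ℝ)+1) := by
      have hstep1 : (∫ x in T..(t - T), u (t - x) * v x)
          ≤ ∫ x in T..(t - T), (c + δ) * ((d + δ) * x ^ n) := by
        refine intervalIntegral.integral_mono_on htT (hint t T (t - T)) ?_ ?_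
        · exact (continuous_const.mul (continuous_const.mul (continuous_pow n))).intervalIntegrable _ _
        · intro x hx
          have hA := hTprop x hx.1
          have hB := hTprop (t - x) (by linarith [hx.2])
          exact mul_le_mul hB.1 hA.2 (hvnn _ (by linarith [hx.1]))
            (by linarith)
      have hstep2 : (∫ x in T..(t - T), (c + δ) * ((d + δ) * x ^ n))
          ≤ ∫ x in (0:ℝ)..t, (c + δ) * ((d + δ) * x ^ n) := by
        refine intervalIntegral.integral_mono_interval hT0 htT (by linarith) ?_ ?_
        · refine (ae_restrict_iff' measurableSet_Ioc).2 (Eventually.of_forall ?_)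
          intro x hx
          have : (0:ℝ) ≤ x := le_of_lt hx.1
          positivity
        · exact (continuous_const.mul (continuous_const.mul (continuous_pow n))).intervalIntegrable _ _
      have hstep3 : (∫ x in (0:ℝ)..t, (c + δ) * ((d + δ) * x ^ n))
          = P * t ^ (n+1) / ((n:ℝ)+1) := by
        rw [intervalIntegral.integral_const_mul, intervalIntegral.integral_const_mul,
          integral_pow, zero_pow (Nat.succ_ne_zero n), hPdef]
        push_cast
        ring
      linarith
    have hI3 : (∫ x in (t - T)..t, u (t - x) * v x) ≤ Q * t ^ n := by
      calc (∫ x in (t - T)..t, u (t - x) * v x)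
          ≤ ∫ _x in (t - T)..t, Cu * (Cv * t ^ n) := by
            refine intervalIntegral.integral_mono_on (by linarith) (hint t (t - T) t) ?_ ?_
            · exact intervalIntegrable_const
            · intro x hx
              have hx0 : (0:ℝ) ≤ x := by linarith [hx.1]
              refine mul_le_mul (hCu _ (by linarith [hx.2])) ?_ (hvnn _ hx0) hCu0
              exact le_trans (hCv _ hx0)
                (mul_le_mul_of_nonneg_left (pow_le_pow_left₀ hx0 hx.2 n) hCv0)
        _ = Q * t ^ n := by
            rw [intervalIntegral.integral_const]
            rw [hQdef]
            simp only [smul_eq_mul]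
            ring
    calc conv u v t / t ^ (n+1)
        ≤ (K + P * t ^ (n+1) / ((n:ℝ)+1) + Q * t ^ n) / t ^ (n+1) := by
          rw [hsplit]
          exact mydiv (by linarith) (pow_pos ht0 (n+1))
      _ = K / t ^ (n+1) + P / ((n:ℝ)+1) + Q / t := by
          have htne : t ≠ 0 := ne_of_gt ht0
          field_simp
          ring

lemma convPow_prop {g : ℝ → ℝ} (hg : Continuous g) (hgnn : ∀ x, 0 ≤ x → 0 ≤ g x)
    {c : ℝ} (hc : 0 ≤ c) (hgl : Tendsto g atTop (𝓝 c)) (n : ℕ) :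
    (∀ x, 0 ≤ x → 0 ≤ convPow g n x) ∧
    (∃ C, 0 ≤ C ∧ ∀ x, 0 ≤ x → convPow g n x ≤ C * x ^ n) ∧
    Tendsto (fun x => convPow g n x / x ^ n) atTop
      (𝓝 (c ^ (n + 1) / (n.factorial : ℝ))) := by
  obtain ⟨T, hT⟩ := eventually_atTop.1 (hgl.eventually (eventually_le_nhds (lt_add_one c)))
  obtain ⟨M0, hM0⟩ :=
    (isCompact_Icc (a := (0:ℝ)) (b := max T 0)).exists_bound_of_continuousOn hg.continuousOn
  set M := max M0 (c + 1) with hMdef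
  have hgM : ∀ x, 0 ≤ x → g x ≤ M := by
    intro x hx
    rcases le_total x (max T 0) with h | h
    · exact le_trans (le_trans (le_abs_self _) (hM0 x ⟨hx, h⟩)) (le_max_left _ _)
    · exact le_trans (hT x (le_trans (le_max_left _ _) h)) (le_max_right _ _)
  have hMnn : 0 ≤ M := le_trans (hgnn 0 le_rfl) (hgM 0 le_rfl)
  induction n with
  | zero =>
    refine ⟨hgnn, ⟨M, hMnn, fun x hx => by simpa [convPow] using hgM x hx⟩, ?_⟩
    have h : (fun x : ℝ => convPow g 0 x / x ^ 0) = g := by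
      funext x; simp [convPow]
    rw [h]
    simpa using hgl
  | succ n ih =>
    obtain ⟨ihnn, ⟨C, hC0, hCb⟩, ihlim⟩ := ih
    have hcontn : Continuous (convPow g n) := convPow_continuous hg n
    have hnn : ∀ x, 0 ≤ x → 0 ≤ convPow g (n + 1) x := by
      intro x hx
      show 0 ≤ ∫ y in (0:ℝ)..x, g (x - y) * convPow g n y
      apply intervalIntegral.integral_nonneg hx
      intro y hy
      exact mul_nonneg (hgnn _ (by linarith [hy.1, hy.2])) (ihnn _ hy.1)
    refine ⟨hnn, ⟨M * C, mul_nonneg hMnn hC0, ?_⟩, ?_⟩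
    · intro x hx
      have h1 : convPow g (n + 1) x ≤ ∫ y in (0:ℝ)..x, M * (C * y ^ n) := by
        show (∫ y in (0:ℝ)..x, g (x - y) * convPow g n y) ≤ _
        refine intervalIntegral.integral_mono_on hx
          (((hg.comp (continuous_const.sub continuous_id)).mul hcontn).intervalIntegrable _ _)
          ((continuous_const.mul (continuous_const.mul (continuous_pow n))).intervalIntegrable _ _)
          ?_
        intro y hy
        exact mul_le_mul (hgM _ (by linarith [hy.1, hy.2])) (hCb _ hy.1) (ihnn _ hy.1) hMnn
      have h2 : (∫ y in (0:ℝ)..x, M * (C * y ^ n)) = M * C * (x ^ (n+1) / ((n:ℝ)+1)) := by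
        rw [intervalIntegral.integral_const_mul, intervalIntegral.integral_const_mul,
          integral_pow, zero_pow (Nat.succ_ne_zero n)]
        ring
      have h3 : M * C * (x ^ (n+1) / ((n:ℝ)+1)) ≤ M * C * x ^ (n+1) := by
        refine mul_le_mul_of_nonneg_left ?_ (mul_nonneg hMnn hC0)
        refine div_le_self (pow_nonneg hx _) ?_
        have : (0:ℝ) ≤ (n:ℝ) := Nat.cast_nonneg n
        linarith
      linarith
    · have hd : (0:ℝ) ≤ c ^ (n + 1) / (n.factorial : ℝ) := by positivity
      have hkey := key_tendsto hg hcontn hgnn ihnn hc hd n hgM hCb hgl ihlim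
      have heq : c * (c ^ (n + 1) / (n.factorial : ℝ)) / ((n:ℝ) + 1)
          = c ^ (n + 1 + 1) / ((n + 1).factorial : ℝ) := by
        rw [Nat.factorial_succ]
        have h1 : (n.factorial : ℝ) ≠ 0 := Nat.cast_ne_zero.2 n.factorial_ne_zero
        have h2 : ((n:ℝ) + 1) ≠ 0 := by positivity
        push_cast
        field_simp
        ring
      rw [heq] at hkey
      exact hkey


/-- Lemma 4.3: if f : [0,∞) → [0,∞) is continuous and
e^{at} f(t) → l as t → ∞, then for every i ≥ 1 the quantity
e^{at} f^{⋆(i)}(t) / t^{i−1} is bounded over t ∈ (0,∞) and converges to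
l^i/(i−1)! as t → ∞. -/
theorem stmt_7
    (f : ℝ → ℝ) (hfcont : ContinuousOn f (Set.Ici 0))
    (hfnn : ∀ t : ℝ, 0 ≤ t → 0 ≤ f t)
    (a l : ℝ) (hl : 0 ≤ l)
    (hlim : Tendsto (fun t => Real.exp (a * t) * f t) atTop (𝓝 l))
    (i : ℕ) (hi : 1 ≤ i) :
    (∃ C : ℝ, ∀ t : ℝ, 0 < t →
      Real.exp (a * t) * convPow f (i - 1) t / t ^ (i - 1) ≤ C) ∧
    Tendsto (fun t => Real.exp (a * t) * convPow f (i - 1) t / t ^ (i - 1))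
      atTop (𝓝 (l ^ i / ((i - 1).factorial : ℝ))) := by
  obtain ⟨n, rfl⟩ : ∃ n, i = n + 1 := ⟨i - 1, (Nat.succ_pred_eq_of_pos hi).symm⟩
  simp only [Nat.add_sub_cancel]
  set F : ℝ → ℝ := fun s => f (max s 0) with hF
  have hFcont : Continuous F :=
    hfcont.comp_continuous (continuous_id.max continuous_const) fun x => Set.mem_Ici.2 (le_max_right _ _)
  set g : ℝ → ℝ := fun s => Real.exp (a * s) * F s with hgdef
  have hgcont : Continuous g :=
    (Real.continuous_exp.comp (continuous_const.mul continuous_id)).mul hFcont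
  have hgnn : ∀ x, 0 ≤ x → 0 ≤ g x :=
    fun x _ => mul_nonneg (Real.exp_pos _).le (hfnn _ (le_max_right _ _))
  have hgl : Tendsto g atTop (𝓝 l) := by
    refine hlim.congr' ?_
    filter_upwards [eventually_ge_atTop (0:ℝ)] with s hs
    simp [hgdef, hF, max_eq_left hs]
  obtain ⟨hnn, ⟨C, hC0, hCb⟩, hlim'⟩ := convPow_prop hgcont hgnn hl hgl n
  have hkey : ∀ t : ℝ, 0 ≤ t → Real.exp (a * t) * convPow f n t = convPow g n t := by
    intro t ht
    have h1 : convPow g n t = Real.exp (a * t) * convPow F n t := convPow_exp F a n t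
    have h2 : convPow F n t = convPow f n t :=
      convPow_congr (fun x hx => by simp [hF, max_eq_left hx]) n t ht
    rw [h1, h2]
  constructor
  · refine ⟨C, fun t ht => ?_⟩
    rw [hkey t ht.le, div_le_iff₀ (pow_pos ht n)]
    exact hCb t ht.le
  · have heq : (fun t => Real.exp (a * t) * convPow f n t / t ^ n)
        =ᶠ[atTop] fun t => convPow g n t / t ^ n := by
      filter_upwards [eventually_ge_atTop (0:ℝ)] with t ht
      rw [hkey t ht]
    exact hlim'.congr' heq.symm
end

section
/- Let f, g : [0,∞) → (0,∞) be continuous functions such that f(t) converges to a finite limit as t → ∞, and suppose that for some a > 0, some integer i ≥ 0 and some l′ ≥ 0, lim_{t→∞} e^{−at} t^{−i} g(t) = l′. Then ∫₀^∞ e^{−ax} f(x) dx < ∞ and lim_{t→∞} e^{−at} t^{−i} (f⋆g)(t) = l′ ∫₀^∞ e^{−ax} f(x) dx; in particular, if l′ > 0, then (f⋆g)(t) ∼ l′ e^{at} t^{i} ∫₀^∞ e^{−ax} f(x) dx as t → ∞. -/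
open MeasureTheory Filter Set Asymptotics
open scoped Topology

lemma bdd_aux {φ : ℝ → ℝ} {M : ℝ} (hc : ContinuousOn φ (Set.Ici 0))
    (hφ : Tendsto φ atTop (𝓝 M)) : ∃ C, 0 < C ∧ ∀ s, 0 ≤ s → |φ s| ≤ C := by
  have h1 : ∀ᶠ s in atTop, |φ s - M| < 1 := hφ.eventually (eventually_abs_sub_lt M one_pos)
  obtain ⟨T, hT⟩ := h1.exists_forall_of_atTop
  set T' := max T 0 with hT'
  obtain ⟨C1, hC1⟩ := (isCompact_Icc (a := (0:ℝ)) (b := T')).exists_bound_of_continuousOn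
    (hc.mono (fun x hx => hx.1))
  refine ⟨max (max C1 (|M| + 1)) 1, lt_of_lt_of_le one_pos (le_max_right _ _), fun s hs => ?_⟩
  rcases le_or_gt s T' with h | h
  · exact le_trans (hC1 s ⟨hs, h⟩) (le_trans (le_max_left _ _) (le_max_left _ _))
  · have := hT s (le_trans (le_max_left T 0) h.le)
    have : |φ s| ≤ |M| + 1 := by
      have := abs_sub_abs_le_abs_sub (φ s) M
      linarith [abs_sub_abs_le_abs_sub (φ s) M]
    exact le_trans this (le_trans (le_max_right _ _) (le_max_left _ _))

lemma g_bound_aux {g : ℝ → ℝ} {a : ℝ} {i : ℕ} {l' : ℝ} (hl' : 0 ≤ l')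
    (hgcont : ContinuousOn g (Set.Ici 0))
    (hgl : Tendsto (fun t => Real.exp (-(a * t)) * g t / t ^ i) atTop (𝓝 l')) :
    ∃ C, 0 < C ∧ ∀ s, 0 ≤ s → Real.exp (-(a * s)) * g s ≤ C * (1 + s ^ i) := by
  have h1 : ∀ᶠ t in atTop, |Real.exp (-(a * t)) * g t / t ^ i - l'| < 1 :=
    hgl.eventually (eventually_abs_sub_lt l' one_pos)
  obtain ⟨T, hT⟩ := h1.exists_forall_of_atTop
  set T' := max T 1 with hT'def
  have hcont : ContinuousOn (fun s => Real.exp (-(a * s)) * g s) (Set.Icc 0 T') :=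
    (((Real.continuous_exp.comp (continuous_const.mul continuous_id).neg).continuousOn).mul
      (hgcont.mono (fun x hx => hx.1)))
  obtain ⟨C1, hC1⟩ := (isCompact_Icc (a := (0:ℝ)) (b := T')).exists_bound_of_continuousOn hcont
  have hC1nn : 0 ≤ C1 := le_trans (norm_nonneg _) (hC1 0 ⟨le_refl 0, le_trans zero_le_one (le_max_right T 1)⟩)
  refine ⟨max (l' + 1) (max C1 1), lt_of_lt_of_le one_pos (le_trans (le_max_right C1 1) (le_max_right _ _)),
    fun s hs => ?_⟩
  have h1s : (1:ℝ) ≤ 1 + s ^ i := le_add_of_nonneg_right (pow_nonneg hs i)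
  rcases le_or_gt s T' with h | h
  · calc Real.exp (-(a * s)) * g s ≤ |Real.exp (-(a * s)) * g s| := le_abs_self _
    _ ≤ C1 := hC1 s ⟨hs, h⟩
    _ ≤ C1 * (1 + s ^ i) := le_mul_of_one_le_right hC1nn h1s
    _ ≤ max (l' + 1) (max C1 1) * (1 + s ^ i) := by
        apply mul_le_mul_of_nonneg_right (le_trans (le_max_left C1 1) (le_max_right _ _)) (by positivity)
  · have hs1 : (1:ℝ) ≤ s := le_trans (le_max_right T 1) h.le
    have hsp : (0:ℝ) < s ^ i := by positivity
    have := hT s (le_trans (le_max_left T 1) h.le)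
    have h2 : Real.exp (-(a * s)) * g s / s ^ i ≤ l' + 1 := by
      have := abs_lt.mp this
      linarith [this.2]
    have h3 : Real.exp (-(a * s)) * g s ≤ (l' + 1) * s ^ i := by
      rwa [div_le_iff₀ hsp] at h2
    calc Real.exp (-(a * s)) * g s ≤ (l' + 1) * s ^ i := h3
    _ ≤ (l' + 1) * (1 + s ^ i) := by nlinarith [hsp, hl']
    _ ≤ max (l' + 1) (max C1 1) * (1 + s ^ i) :=
        mul_le_mul_of_nonneg_right (le_max_left _ _) (by positivity)

/-- Lemma 4.5: if f, g : [0,∞) → (0,∞) are continuous, f(t)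
converges as t → ∞, a > 0 and e^{−at} t^{−i} g(t) → l′, then
∫₀^∞ e^{−ax} f(x) dx < ∞, e^{−at} t^{−i} (f⋆g)(t) → l′ ∫₀^∞ e^{−ax} f(x) dx, and
if l′ > 0 then (f⋆g)(t) ∼ l′ e^{at} t^i ∫₀^∞ e^{−ax} f(x) dx as t → ∞. -/
theorem stmt_8
    (f g : ℝ → ℝ)
    (hfcont : ContinuousOn f (Set.Ici 0)) (hgcont : ContinuousOn g (Set.Ici 0))
    (hfpos : ∀ t : ℝ, 0 ≤ t → 0 < f t) (hgpos : ∀ t : ℝ, 0 ≤ t → 0 < g t)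
    (L : ℝ) (hfL : Tendsto f atTop (𝓝 L))
    (a : ℝ) (ha : 0 < a) (i : ℕ) (l' : ℝ) (hl' : 0 ≤ l')
    (hgl : Tendsto (fun t => Real.exp (-(a * t)) * g t / t ^ i) atTop (𝓝 l')) :
    IntegrableOn (fun x => Real.exp (-(a * x)) * f x) (Set.Ioi 0) ∧
    Tendsto (fun t => Real.exp (-(a * t)) * conv f g t / t ^ i) atTop
      (𝓝 (l' * ∫ x in Set.Ioi (0 : ℝ), Real.exp (-(a * x)) * f x)) ∧
    (0 < l' →
      (fun t => conv f g t) ~[atTop]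
        fun t => l' * Real.exp (a * t) * t ^ i *
          ∫ x in Set.Ioi (0 : ℝ), Real.exp (-(a * x)) * f x) := by
  obtain ⟨Cf, hCfpos, hCf⟩ := bdd_aux hfcont hfL
  obtain ⟨Cg, hCgpos, hCg⟩ := g_bound_aux hl' hgcont hgl
  -- Part 1: integrability
  have hint : IntegrableOn (fun x => Real.exp (-(a * x)) * f x) (Set.Ioi 0) := by
    apply Integrable.mono' (g := fun x => Cf * Real.exp (-a * x))
      ((exp_neg_integrableOn_Ioi 0 ha).const_mul Cf)
    · exact (((Real.continuous_exp.comp (continuous_const.mul continuous_id).neg).continuousOn).mul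
        (hfcont.mono (fun x hx => le_of_lt hx))).aestronglyMeasurable measurableSet_Ioi
    · filter_upwards [ae_restrict_mem measurableSet_Ioi] with x hx
      have hx0 : (0:ℝ) ≤ x := le_of_lt hx
      rw [Real.norm_eq_abs, abs_mul, abs_of_pos (Real.exp_pos _), neg_mul, mul_comm Cf]
      exact mul_le_mul_of_nonneg_left (hCf x hx0) (Real.exp_pos _).le
  -- the pointwise kernel
  set F : ℝ → ℝ → ℝ := fun t u =>
    (Real.exp (-(a * u)) * f u) * (Real.exp (-(a * (t - u))) * g (t - u) / t ^ i) with hFdef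
  -- DCT
  have htend : Tendsto (fun t => ∫ u in Set.Ioi (0:ℝ), (Set.Ioc 0 t).indicator (F t) u) atTop
      (𝓝 (∫ u in Set.Ioi (0:ℝ), l' * (Real.exp (-(a * u)) * f u))) := by
    apply MeasureTheory.tendsto_integral_filter_of_dominated_convergence
      (bound := fun u => (Cf * (2 * Cg)) * Real.exp (-a * u))
    · -- measurability
      filter_upwards [] with t
      rw [aestronglyMeasurable_indicator_iff measurableSet_Ioc,
        Measure.restrict_restrict measurableSet_Ioc,
        Set.inter_eq_self_of_subset_left Set.Ioc_subset_Ioi_self]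
      have hc : ContinuousOn (F t) (Set.Ioc 0 t) := by
        apply ContinuousOn.mul
        · exact ((Real.continuous_exp.comp (continuous_const.mul continuous_id).neg).continuousOn).mul
            (hfcont.mono (fun x hx => le_of_lt hx.1))
        · apply ContinuousOn.div_const
          apply ContinuousOn.mul
          · exact (Real.continuous_exp.comp (continuous_const.mul
              (continuous_const.sub continuous_id)).neg).continuousOn
          · exact hgcont.comp (continuous_const.sub continuous_id).continuousOn
              (fun u hu => sub_nonneg.mpr hu.2)
      exact hc.aestronglyMeasurable measurableSet_Ioc
    · -- bound
      filter_upwards [eventually_ge_atTop (1:ℝ)] with t ht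
      filter_upwards [] with u
      by_cases hu : u ∈ Set.Ioc 0 t
      · rw [Set.indicator_of_mem hu]
        have hu0 : (0:ℝ) ≤ u := le_of_lt hu.1
        have htu : (0:ℝ) ≤ t - u := sub_nonneg.mpr hu.2
        have ht0 : (0:ℝ) < t := lt_of_lt_of_le one_pos ht
        have htp : (0:ℝ) < t ^ i := pow_pos ht0 i
        have ht1 : (1:ℝ) ≤ t ^ i := by simpa using pow_le_pow_left₀ zero_le_one ht i
        have hgb := hCg (t - u) htu
        have htui : (t - u) ^ i ≤ t ^ i := pow_le_pow_left₀ htu (by linarith) i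
        have hB0 : 0 ≤ Real.exp (-(a * (t - u))) * g (t - u) / t ^ i :=
          div_nonneg (mul_nonneg (Real.exp_pos _).le (hgpos _ htu).le) htp.le
        have hBle : Real.exp (-(a * (t - u))) * g (t - u) / t ^ i ≤ 2 * Cg := by
          rw [div_le_iff₀ htp]
          nlinarith [hgb, htui, ht1, hCgpos,
            mul_le_mul_of_nonneg_left htui hCgpos.le,
            mul_le_mul_of_nonneg_left ht1 hCgpos.le]
        have hA0 : 0 ≤ Real.exp (-(a * u)) * f u :=
          mul_nonneg (Real.exp_pos _).le (hfpos u hu0).le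
        have hAle : Real.exp (-(a * u)) * f u ≤ Real.exp (-(a * u)) * Cf :=
          mul_le_mul_of_nonneg_left (le_trans (le_abs_self _) (hCf u hu0)) (Real.exp_pos _).le
        rw [Real.norm_eq_abs, hFdef, abs_mul, abs_of_nonneg hA0, abs_of_nonneg hB0]
        calc Real.exp (-(a * u)) * f u * (Real.exp (-(a * (t - u))) * g (t - u) / t ^ i)
            ≤ (Real.exp (-(a * u)) * Cf) * (2 * Cg) :=
              mul_le_mul hAle hBle hB0 (mul_nonneg (Real.exp_pos _).le hCfpos.le)
          _ = Cf * (2 * Cg) * Real.exp (-a * u) := by rw [neg_mul]; ring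
      · rw [Set.indicator_of_notMem hu, norm_zero]
        positivity
    · simpa [neg_mul] using ((exp_neg_integrableOn_Ioi 0 ha).const_mul (Cf * (2 * Cg)))
    · -- pointwise limit
      filter_upwards [ae_restrict_mem measurableSet_Ioi] with u hu
      have hu0 : (0:ℝ) < u := hu
      have hAeq : Tendsto (fun t => F t u) atTop (𝓝 ((Real.exp (-(a * u)) * f u) * l')) := by
        apply Tendsto.const_mul
        -- B t → l'
        have h1 : Tendsto (fun t : ℝ => Real.exp (-(a * (t - u))) * g (t - u) / (t - u) ^ i)
            atTop (𝓝 l') := by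
          have := hgl.comp (tendsto_atTop_add_const_right atTop (-u) tendsto_id)
          simpa [Function.comp_def, sub_eq_add_neg] using this
        have h2' : Tendsto (fun t : ℝ => (t - u) / t) atTop (𝓝 1) := by
          have h : Tendsto (fun t : ℝ => 1 - u / t) atTop (𝓝 (1 - 0)) :=
            (tendsto_const_nhds : Tendsto (fun _ : ℝ => (1:ℝ)) atTop (𝓝 1)).sub
              ((tendsto_const_nhds : Tendsto (fun _ : ℝ => u) atTop (𝓝 u)).div_atTop tendsto_id)
          rw [sub_zero] at h
          apply h.congr'
          filter_upwards [eventually_gt_atTop (0:ℝ)] with t ht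
          rw [sub_div, div_self (ne_of_gt ht)]
        have h2 : Tendsto (fun t : ℝ => ((t - u) / t) ^ i) atTop (𝓝 1) := by
          simpa using h2'.pow i
        have h3 := h1.mul h2
        rw [mul_one] at h3
        apply h3.congr'
        filter_upwards [eventually_gt_atTop (max u 0)] with t ht
        have htu : (0:ℝ) < t - u := sub_pos.mpr (lt_of_le_of_lt (le_max_left u 0) ht)
        have ht0 : (0:ℝ) < t := lt_of_le_of_lt (le_max_right u 0) ht
        rw [div_pow, div_mul_div_comm, mul_comm (Real.exp (-(a * (t - u))) * g (t - u)) ((t-u)^i),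
          mul_div_mul_left _ _ (ne_of_gt (pow_pos htu i))]
      rw [mul_comm]
      apply hAeq.congr'
      filter_upwards [eventually_ge_atTop u] with t ht
      rw [Set.indicator_of_mem (Set.mem_Ioc.mpr ⟨hu0, ht⟩)]
  -- rewrite the DCT limit
  rw [integral_const_mul] at htend
  -- eventual equality of the two expressions
  have heq : ∀ t : ℝ, 1 ≤ t → Real.exp (-(a * t)) * conv f g t / t ^ i
      = ∫ u in Set.Ioi (0:ℝ), (Set.Ioc 0 t).indicator (F t) u := by
    intro t ht
    have ht0 : (0:ℝ) ≤ t := le_trans zero_le_one ht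
    have hsub : conv f g t = ∫ u in (0:ℝ)..t, f u * g (t - u) := by
      rw [conv]
      have := intervalIntegral.integral_comp_sub_left (a := (0:ℝ)) (b := t) (fun u => f u * g (t - u)) t
      simp only [sub_sub_cancel, sub_self, sub_zero] at this
      exact this
    rw [hsub]
    rw [MeasureTheory.integral_indicator measurableSet_Ioc,
      Measure.restrict_restrict measurableSet_Ioc,
      Set.inter_eq_self_of_subset_left Set.Ioc_subset_Ioi_self,
      ← intervalIntegral.integral_of_le ht0]
    rw [← intervalIntegral.integral_const_mul, ← intervalIntegral.integral_div]
    apply intervalIntegral.integral_congr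
    intro u hu
    rw [Set.uIcc_of_le ht0] at hu
    have hexp : Real.exp (-(a * u)) * Real.exp (-(a * (t - u))) = Real.exp (-(a * t)) := by
      rw [← Real.exp_add]; ring_nf
    calc Real.exp (-(a * t)) * (f u * g (t - u)) / t ^ i
        = (Real.exp (-(a * u)) * Real.exp (-(a * (t - u)))) * (f u * g (t - u)) / t ^ i := by
          rw [hexp]
      _ = F t u := by rw [hFdef]; ring
  have htend2 : Tendsto (fun t => Real.exp (-(a * t)) * conv f g t / t ^ i) atTop
      (𝓝 (l' * ∫ x in Set.Ioi (0:ℝ), Real.exp (-(a * x)) * f x)) := by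
    apply htend.congr'
    filter_upwards [eventually_ge_atTop (1:ℝ)] with t ht
    exact (heq t ht).symm
  refine ⟨hint, htend2, fun hl'pos => ?_⟩
  -- Part 3
  have hIpos : 0 < ∫ x in Set.Ioi (0:ℝ), Real.exp (-(a * x)) * f x := by
    rw [MeasureTheory.setIntegral_pos_iff_support_of_nonneg_ae _ hint]
    · refine lt_of_lt_of_le ?_ (measure_mono (?_ : Set.Ioi (0:ℝ) ⊆ _))
      · simp [Real.volume_Ioi]
      · intro x hx
        exact ⟨ne_of_gt (mul_pos (Real.exp_pos _) (hfpos x (le_of_lt hx))), hx⟩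
    · filter_upwards [ae_restrict_mem measurableSet_Ioi] with x hx
      exact le_of_lt (mul_pos (Real.exp_pos _) (hfpos x (le_of_lt hx)))
  set I := ∫ x in Set.Ioi (0:ℝ), Real.exp (-(a * x)) * f x with hIdef
  have hcne : l' * I ≠ 0 := ne_of_gt (mul_pos hl'pos hIpos)
  rw [isEquivalent_iff_tendsto_one]
  · have h4 : Tendsto (fun t => (Real.exp (-(a * t)) * conv f g t / t ^ i) * (l' * I)⁻¹) atTop
        (𝓝 ((l' * I) * (l' * I)⁻¹)) := htend2.mul_const _
    rw [mul_inv_cancel₀ hcne] at h4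
    apply h4.congr'
    filter_upwards [eventually_gt_atTop (0:ℝ)] with t ht
    have hexpne : Real.exp (a * t) ≠ 0 := Real.exp_ne_zero _
    have htine : t ^ i ≠ 0 := ne_of_gt (pow_pos ht i)
    simp only [Pi.div_apply]
    simp only [Real.exp_neg, div_eq_mul_inv, mul_inv]
    ring
  · filter_upwards [eventually_gt_atTop (0:ℝ)] with t ht
    exact ne_of_gt (mul_pos (mul_pos (mul_pos hl'pos (Real.exp_pos _)) (pow_pos ht i)) hIpos)
end

section
/- Let f, g : [0,∞) → [0,∞) be continuous functions and a ∈ ℝ such that lim_{t→∞} e^{at} f(t) = l and lim_{t→∞} e^{at} g(t) = c for some l, c ≥ 0. Then for every integer i ≥ 1, lim_{t→∞} e^{at} (f^{⋆(i)} ⋆ g)(t)/t^{i} = l^{i} c / i!. -/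
open MeasureTheory Filter Set
open scoped Topology

/- ## Auxiliary lemmas -/

/-- Congruence for `conv` on `[0,∞)`. -/
lemma conv_congr {u U v V : ℝ → ℝ} (hu : Set.EqOn u U (Set.Ici 0))
    (hv : Set.EqOn v V (Set.Ici 0)) {t : ℝ} (ht : 0 ≤ t) :
    conv u v t = conv U V t := by
  unfold conv
  apply intervalIntegral.integral_congr
  intro x hx
  rw [Set.uIcc_of_le ht] at hx
  have hx0 : (0:ℝ) ≤ x := hx.1
  have hxt : x ≤ t := hx.2
  show u (t - x) * v x = U (t - x) * V x
  rw [hu (by simp [sub_nonneg.2 hxt] : t - x ∈ Set.Ici (0:ℝ)),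
    hv (hx0 : x ∈ Set.Ici (0:ℝ))]

lemma convPow_congr_s9 {u U : ℝ → ℝ} (hu : Set.EqOn u U (Set.Ici 0)) (n : ℕ) :
    Set.EqOn (convPow u n) (convPow U n) (Set.Ici 0) := by
  induction n with
  | zero => exact hu
  | succ n ih =>
      intro t ht
      exact conv_congr hu ih ht

/-- Commutativity of `conv`. -/
lemma conv_comm (u v : ℝ → ℝ) (t : ℝ) : conv u v t = conv v u t := by
  unfold conv
  have := intervalIntegral.integral_comp_sub_left (fun y => u y * v (t - y)) t
    (a := 0) (b := t)
  simp only [sub_self, sub_zero] at this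
  rw [show (∫ x in (0:ℝ)..t, u (t - x) * v x)
      = ∫ x in (0:ℝ)..t, (fun y => u y * v (t - y)) (t - x) by
    apply intervalIntegral.integral_congr; intro x _; simp [sub_sub_cancel]]
  rw [this]
  apply intervalIntegral.integral_congr
  intro x _
  simp [mul_comm]

/-- Exponential factors through convolution. -/
lemma exp_conv (a : ℝ) (u v : ℝ → ℝ) (t : ℝ) :
    Real.exp (a * t) * conv u v t
      = conv (fun s => Real.exp (a * s) * u s) (fun s => Real.exp (a * s) * v s) t := by
  unfold conv
  rw [← intervalIntegral.integral_const_mul]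
  apply intervalIntegral.integral_congr
  intro x _
  have : Real.exp (a * t) = Real.exp (a * (t - x)) * Real.exp (a * x) := by
    rw [← Real.exp_add]; ring_nf
  rw [this]; ring

lemma exp_convPow (a : ℝ) (u : ℝ → ℝ) (n : ℕ) (t : ℝ) :
    Real.exp (a * t) * convPow u n t
      = convPow (fun s => Real.exp (a * s) * u s) n t := by
  induction n generalizing t with
  | zero => rfl
  | succ n ih =>
      show Real.exp (a * t) * conv u (convPow u n) t = _
      rw [exp_conv]
      show conv _ (fun s => Real.exp (a * s) * convPow u n s) t = _
      unfold conv
      apply intervalIntegral.integral_congr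
      intro x _
      simp only [ih]

/-- A continuous function with a limit at infinity is bounded on `[0,∞)`. -/
lemma bounded_of_tendsto {u : ℝ → ℝ} (hu : Continuous u) {L : ℝ}
    (h : Tendsto u atTop (𝓝 L)) :
    ∃ C : ℝ, 0 ≤ C ∧ ∀ x : ℝ, 0 ≤ x → |u x| ≤ C := by
  have h1 : ∀ᶠ x in atTop, dist (u x) L ≤ 1 :=
    h.eventually (Metric.closedBall_mem_nhds L one_pos)
  obtain ⟨T, hT⟩ := eventually_atTop.1 h1
  obtain ⟨C, hC⟩ := (isCompact_Icc (a := (0:ℝ)) (b := T)).exists_bound_of_continuousOn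
    hu.continuousOn
  refine ⟨max (max C (|L| + 1)) 0, le_max_right _ _, fun x hx => ?_⟩
  rcases le_total x T with hxT | hxT
  · exact le_trans (hC x ⟨hx, hxT⟩) (le_max_of_le_left (le_max_left _ _))
  · have := hT x hxT
    rw [Real.dist_eq] at this
    have : |u x| ≤ |L| + 1 := by
      calc |u x| = |(u x - L) + L| := by ring_nf
        _ ≤ |u x - L| + |L| := abs_add_le _ _
        _ ≤ |L| + 1 := by linarith
    exact le_trans this (le_max_of_le_left (le_max_right _ _))

/-- Pointwise bound on the convolution. -/
lemma conv_bound {u v : ℝ → ℝ} (hu : Continuous u) (hv : Continuous v)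
    {Cu Cv : ℝ} (n : ℕ) (hCu : ∀ x : ℝ, 0 ≤ x → |u x| ≤ Cu)
    (hCv : ∀ x : ℝ, 0 ≤ x → |v x| ≤ Cv * (1 + x) ^ n) (hCu0 : 0 ≤ Cu) (hCv0 : 0 ≤ Cv) :
    ∀ t : ℝ, 0 ≤ t → |conv u v t| ≤ Cu * Cv * (1 + t) ^ (n + 1) := by
  intro t ht
  have hb : ∀ x ∈ Set.uIoc (0:ℝ) t, ‖u (t - x) * v x‖ ≤ Cu * (Cv * (1 + t) ^ n) := by
    intro x hx
    rw [Set.uIoc_of_le ht] at hx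
    have hx0 : (0:ℝ) ≤ x := le_of_lt hx.1
    have hxt : x ≤ t := hx.2
    rw [Real.norm_eq_abs, abs_mul]
    have h1 : |u (t - x)| ≤ Cu := hCu _ (by linarith)
    have h2 : |v x| ≤ Cv * (1 + t) ^ n := by
      refine le_trans (hCv x hx0) ?_
      have : (1 + x) ^ n ≤ (1 + t) ^ n := by
        apply pow_le_pow_left₀ (by linarith) (by linarith) n
      nlinarith [pow_nonneg (by linarith : (0:ℝ) ≤ 1 + x) n]
    exact mul_le_mul h1 h2 (abs_nonneg _) hCu0
  have := intervalIntegral.norm_integral_le_of_norm_le_const hb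
  rw [Real.norm_eq_abs] at this
  refine le_trans this ?_
  have habs : |t - 0| = t := by rw [sub_zero, abs_of_nonneg ht]
  rw [habs, pow_succ]
  have hp : (0:ℝ) ≤ (1 + t) ^ n := pow_nonneg (by linarith) n
  nlinarith [mul_nonneg (mul_nonneg hCu0 hCv0) hp]

set_option maxHeartbeats 1000000 in
/-- Generalized Cesàro: if `ψ(x)/x^n → 0` then `(∫₀^t ψ)/t^(n+1) → 0`. -/
lemma cesaro_aux (n : ℕ) {ψ : ℝ → ℝ} (hψc : Continuous ψ) (hψ0 : ∀ x, 0 ≤ ψ x)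
    (hψ : Tendsto (fun t => ψ t / t ^ n) atTop (𝓝 0)) :
    Tendsto (fun t => (∫ x in (0:ℝ)..t, ψ x) / t ^ (n + 1)) atTop (𝓝 0) := by
  rw [Metric.tendsto_atTop]
  intro ε hε
  have h2 : ∀ᶠ x in atTop, ψ x / x ^ n < ε / 4 := hψ.eventually_lt_const (by positivity)
  obtain ⟨A₀, hA₀⟩ := eventually_atTop.1 h2
  set A := max A₀ 1 with hAdef
  have hA1 : (1:ℝ) ≤ A := le_max_right _ _
  have hA0 : (0:ℝ) ≤ A := by linarith
  have htail : ∀ x : ℝ, A ≤ x → ψ x ≤ ε / 4 * x ^ n := by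
    intro x hx
    have hx1 : (1:ℝ) ≤ x := le_trans hA1 hx
    have h3 := hA₀ x (le_trans (le_max_left _ _) hx)
    have hxn : (0:ℝ) < x ^ n := by positivity
    rw [div_lt_iff₀ hxn] at h3
    linarith
  set K := ∫ x in (0:ℝ)..A, ψ x with hK
  have hKlim : Tendsto (fun t : ℝ => K / t ^ (n + 1)) atTop (𝓝 0) := by
    have h4 : Tendsto (fun t : ℝ => (t ^ (n + 1))⁻¹) atTop (𝓝 0) :=
      (tendsto_pow_atTop (Nat.succ_ne_zero n)).inv_tendsto_atTop
    simpa [div_eq_mul_inv] using h4.const_mul K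
  have h5 : ∀ᶠ t : ℝ in atTop, K / t ^ (n + 1) < ε / 2 :=
    hKlim.eventually_lt_const (by positivity)
  obtain ⟨N₀, hN₀⟩ := eventually_atTop.1 h5
  refine ⟨max A N₀, fun t ht => ?_⟩
  have htA : A ≤ t := le_trans (le_max_left _ _) ht
  have ht1 : (1:ℝ) ≤ t := le_trans hA1 htA
  have ht0 : (0:ℝ) ≤ t := by linarith
  have htp : (0:ℝ) < t ^ (n + 1) := by positivity
  have hint : ∀ a b : ℝ, IntervalIntegrable ψ volume a b := fun a b =>
    hψc.intervalIntegrable a b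
  have hsplit : (∫ x in (0:ℝ)..t, ψ x) = K + ∫ x in A..t, ψ x := by
    rw [hK, intervalIntegral.integral_add_adjacent_intervals (hint 0 A) (hint A t)]
  have hmono : (∫ x in A..t, ψ x) ≤ ∫ x in A..t, ε / 4 * x ^ n := by
    apply intervalIntegral.integral_mono_on htA (hint A t)
      ((continuous_const.mul (continuous_pow n)).intervalIntegrable _ _)
    intro x hx
    exact htail x hx.1
  have hval : (∫ x in A..t, ε / 4 * x ^ n) ≤ ε / 4 * t ^ (n + 1) := by
    rw [intervalIntegral.integral_const_mul, integral_pow]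
    have hAp : (0:ℝ) ≤ A ^ (n + 1) := by positivity
    have htp' : (0:ℝ) ≤ t ^ (n + 1) := by positivity
    have hnp : (0:ℝ) < (n:ℝ) + 1 := by positivity
    have hn0 : (0:ℝ) ≤ (n:ℝ) := Nat.cast_nonneg n
    have key : (t ^ (n + 1) - A ^ (n + 1)) / ((n:ℝ) + 1) ≤ t ^ (n + 1) := by
      rw [div_le_iff₀ hnp]
      nlinarith [mul_nonneg hn0 htp']
    have hε4 : (0:ℝ) ≤ ε / 4 := by positivity
    exact mul_le_mul_of_nonneg_left key hε4
  have hnn : 0 ≤ ∫ x in (0:ℝ)..t, ψ x :=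
    intervalIntegral.integral_nonneg ht0 (fun x _ => hψ0 x)
  have hub : (∫ x in (0:ℝ)..t, ψ x) / t ^ (n + 1) ≤ K / t ^ (n + 1) + ε / 4 := by
    have hnum : (∫ x in (0:ℝ)..t, ψ x) ≤ K + ε / 4 * t ^ (n + 1) := by
      rw [hsplit]; linarith [le_trans hmono hval]
    calc (∫ x in (0:ℝ)..t, ψ x) / t ^ (n + 1)
        ≤ (K + ε / 4 * t ^ (n + 1)) / t ^ (n + 1) := by gcongr
      _ = K / t ^ (n + 1) + ε / 4 := by
          rw [add_div, mul_div_assoc, div_self (ne_of_gt htp), mul_one]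
  rw [Real.dist_eq, sub_zero, abs_of_nonneg (div_nonneg hnn (le_of_lt htp))]
  have h7 := hN₀ t (le_trans (le_max_right _ _) ht)
  linarith

set_option maxHeartbeats 2000000 in
/-- Key step lemma. -/
lemma key_step (n : ℕ) {u v : ℝ → ℝ} (hu : Continuous u) (hv : Continuous v)
    {L M Cv : ℝ} (huL : Tendsto u atTop (𝓝 L))
    (hCv : ∀ x : ℝ, 0 ≤ x → |v x| ≤ Cv * (1 + x) ^ n)
    (hvM : Tendsto (fun t => v t / t ^ n) atTop (𝓝 M)) :
    Tendsto (fun t => conv u v t / t ^ (n + 1)) atTop (𝓝 (L * M / (n + 1))) := by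
  have hCv0 : 0 ≤ Cv := by
    have h0 := hCv 0 le_rfl
    simp only [add_zero, one_pow, mul_one] at h0
    exact le_trans (abs_nonneg _) h0
  set ψu : ℝ → ℝ := fun s => |u s - L| with hψu
  have hψuc : Continuous ψu := (hu.sub continuous_const).abs
  have hψu0 : ∀ x, 0 ≤ ψu x := fun x => abs_nonneg _
  have hψulim : Tendsto (fun t => ψu t / t ^ 0) atTop (𝓝 0) := by
    simp only [pow_zero, div_one, hψu]
    have h1 := (huL.sub_const L).abs
    simpa using h1
  have hG := cesaro_aux 0 hψuc hψu0 hψulim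
  set ψv : ℝ → ℝ := fun x => |v x - M * x ^ n| with hψv
  have hψvc : Continuous ψv := (hv.sub (continuous_const.mul (continuous_pow n))).abs
  have hψv0 : ∀ x, 0 ≤ ψv x := fun x => abs_nonneg _
  have hψvlim : Tendsto (fun t => ψv t / t ^ n) atTop (𝓝 0) := by
    have h1 : Tendsto (fun t => |v t / t ^ n - M|) atTop (𝓝 0) := by
      have h2 := (hvM.sub_const M).abs
      simpa using h2
    apply h1.congr'
    filter_upwards [eventually_gt_atTop (0:ℝ)] with t ht
    have htn : (0:ℝ) < t ^ n := by positivity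
    have h3 : v t / t ^ n - M = (v t - M * t ^ n) / t ^ n := by field_simp
    rw [h3, abs_div, abs_of_pos htn, hψv]
  have hHv := cesaro_aux n hψvc hψv0 hψvlim
  have hnne : ((n:ℝ) + 1) ≠ 0 := by positivity
  have hsplit : ∀ t : ℝ, 0 < t → conv u v t / t ^ (n + 1)
      = (∫ x in (0:ℝ)..t, (u (t - x) - L) * v x) / t ^ (n + 1)
        + (∫ x in (0:ℝ)..t, L * (v x - M * x ^ n)) / t ^ (n + 1)
        + L * M / ((n:ℝ) + 1) := by
    intro t ht
    have htp : (0:ℝ) < t ^ (n + 1) := by positivity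
    have i1 : IntervalIntegrable (fun x => (u (t - x) - L) * v x) volume 0 t :=
      (((hu.comp (continuous_const.sub continuous_id)).sub continuous_const).mul
        hv).intervalIntegrable _ _
    have i2 : IntervalIntegrable (fun x => L * (v x - M * x ^ n)) volume 0 t :=
      (continuous_const.mul
        (hv.sub (continuous_const.mul (continuous_pow n)))).intervalIntegrable _ _
    have i3 : IntervalIntegrable (fun x => L * M * x ^ n) volume 0 t :=
      (continuous_const.mul (continuous_pow n)).intervalIntegrable _ _
    have e1 : conv u v t = ∫ x in (0:ℝ)..t,
        ((u (t - x) - L) * v x + L * (v x - M * x ^ n) + L * M * x ^ n) := by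
      unfold conv
      apply intervalIntegral.integral_congr
      intro x _
      ring
    rw [e1, intervalIntegral.integral_add (i1.add i2) i3,
      intervalIntegral.integral_add i1 i2]
    have e2 : (∫ x in (0:ℝ)..t, L * M * x ^ n) = L * M * (t ^ (n + 1) / ((n:ℝ) + 1)) := by
      rw [intervalIntegral.integral_const_mul, integral_pow]
      norm_num
    rw [e2, add_div, add_div]
    congr 1
    field_simp
  have hT2 : Tendsto
      (fun t => (∫ x in (0:ℝ)..t, L * (v x - M * x ^ n)) / t ^ (n + 1)) atTop (𝓝 0) := by
    have htend : Tendsto (fun t => |L| * ((∫ x in (0:ℝ)..t, ψv x) / t ^ (n + 1)))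
        atTop (𝓝 0) := by
      have := hHv.const_mul |L|
      simpa using this
    apply squeeze_zero_norm' _ htend
    filter_upwards [eventually_gt_atTop (0:ℝ)] with t ht
    have htp : (0:ℝ) < t ^ (n + 1) := by positivity
    rw [Real.norm_eq_abs, abs_div, abs_of_pos htp, mul_div_assoc']
    apply div_le_div_of_nonneg_right _ htp.le
    rw [intervalIntegral.integral_const_mul, abs_mul]
    apply mul_le_mul_of_nonneg_left _ (abs_nonneg L)
    have h4 := intervalIntegral.norm_integral_le_integral_norm
      (f := fun x => v x - M * x ^ n) (μ := volume) (a := 0) (b := t) (le_of_lt ht)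
    simpa [Real.norm_eq_abs, hψv] using h4
  have hT1 : Tendsto
      (fun t => (∫ x in (0:ℝ)..t, (u (t - x) - L) * v x) / t ^ (n + 1)) atTop (𝓝 0) := by
    set B : ℝ → ℝ := fun t => Cv * ((1 + t) / t) ^ n *
      ((∫ x in (0:ℝ)..t, ψu x) / t ^ (0 + 1)) with hB
    have hBlim : Tendsto B atTop (𝓝 0) := by
      have hq : Tendsto (fun t : ℝ => (1 + t) / t) atTop (𝓝 1) := by
        have h1 : Tendsto (fun t : ℝ => t⁻¹ + 1) atTop (𝓝 (0 + 1)) :=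
          tendsto_inv_atTop_zero.add tendsto_const_nhds
        rw [show (0:ℝ) + 1 = 1 by norm_num] at h1
        apply h1.congr'
        filter_upwards [eventually_gt_atTop (0:ℝ)] with t ht
        rw [add_div, div_self (ne_of_gt ht), one_div]
      have h2 : Tendsto B atTop (𝓝 (Cv * 1 ^ n * 0)) :=
        (tendsto_const_nhds.mul (hq.pow n)).mul hG
      simpa using h2
    apply squeeze_zero_norm' _ hBlim
    filter_upwards [eventually_gt_atTop (0:ℝ)] with t ht
    have htp : (0:ℝ) < t ^ (n + 1) := by positivity
    have htn : (0:ℝ) < t ^ n := by positivity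
    rw [Real.norm_eq_abs, abs_div, abs_of_pos htp]
    have step1 : |∫ x in (0:ℝ)..t, (u (t - x) - L) * v x|
        ≤ Cv * (1 + t) ^ n * ∫ x in (0:ℝ)..t, ψu x := by
      have s1 : |∫ x in (0:ℝ)..t, (u (t - x) - L) * v x|
          ≤ ∫ x in (0:ℝ)..t, |u (t - x) - L| * |v x| := by
        have h5 := intervalIntegral.norm_integral_le_integral_norm
          (f := fun x => (u (t - x) - L) * v x) (μ := volume) (a := 0) (b := t)
          (le_of_lt ht)
        simpa [Real.norm_eq_abs] using h5
      have s2 : (∫ x in (0:ℝ)..t, |u (t - x) - L| * |v x|)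
          ≤ ∫ x in (0:ℝ)..t, ψu (t - x) * (Cv * (1 + t) ^ n) := by
        apply intervalIntegral.integral_mono_on (le_of_lt ht)
        · exact ((((hu.comp (continuous_const.sub continuous_id)).sub
            continuous_const).abs.mul hv.abs)).intervalIntegrable _ _
        · exact ((hψuc.comp (continuous_const.sub continuous_id)).mul
            continuous_const).intervalIntegrable _ _
        · intro x hx
          have hb : |v x| ≤ Cv * (1 + t) ^ n := by
            refine le_trans (hCv x hx.1) ?_
            apply mul_le_mul_of_nonneg_left _ hCv0
            exact pow_le_pow_left₀ (by linarith [hx.1]) (by linarith [hx.2]) n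
          calc |u (t - x) - L| * |v x| ≤ |u (t - x) - L| * (Cv * (1 + t) ^ n) :=
                mul_le_mul_of_nonneg_left hb (abs_nonneg _)
            _ = ψu (t - x) * (Cv * (1 + t) ^ n) := by rw [hψu]
      have s3 : (∫ x in (0:ℝ)..t, ψu (t - x) * (Cv * (1 + t) ^ n))
          = Cv * (1 + t) ^ n * ∫ x in (0:ℝ)..t, ψu x := by
        rw [intervalIntegral.integral_mul_const]
        have h6 : (∫ x in (0:ℝ)..t, ψu (t - x)) = ∫ x in (0:ℝ)..t, ψu x := by
          have h7 := intervalIntegral.integral_comp_sub_left ψu t (a := (0:ℝ)) (b := t)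
          simpa using h7
        rw [h6]
        ring
      linarith [le_trans s1 (le_trans s2 (le_of_eq s3))]
    have heq : (Cv * (1 + t) ^ n * ∫ x in (0:ℝ)..t, ψu x) / t ^ (n + 1) = B t := by
      rw [hB]
      simp only
      rw [div_pow, pow_succ, zero_add, pow_one]
      field_simp
    calc |∫ x in (0:ℝ)..t, (u (t - x) - L) * v x| / t ^ (n + 1)
        ≤ (Cv * (1 + t) ^ n * ∫ x in (0:ℝ)..t, ψu x) / t ^ (n + 1) :=
          div_le_div_of_nonneg_right step1 htp.le -- may need name fix
      _ = B t := heq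
  have hsum : Tendsto (fun t =>
      (∫ x in (0:ℝ)..t, (u (t - x) - L) * v x) / t ^ (n + 1)
        + (∫ x in (0:ℝ)..t, L * (v x - M * x ^ n)) / t ^ (n + 1)
        + L * M / ((n:ℝ) + 1)) atTop (𝓝 (0 + 0 + L * M / ((n:ℝ) + 1))) :=
    (hT1.add hT2).add tendsto_const_nhds
  rw [show (0:ℝ) + 0 + L * M / ((n:ℝ) + 1) = L * M / ((n:ℝ) + 1) by ring] at hsum
  apply hsum.congr'
  filter_upwards [eventually_gt_atTop (0:ℝ)] with t ht
  exact (hsplit t ht).symm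

/-- Asymptotics of convolution powers. -/
lemma convPow_asymp {H : ℝ → ℝ} (hHc : Continuous H) {l CH : ℝ}
    (hCH0 : 0 ≤ CH) (hCH : ∀ x : ℝ, 0 ≤ x → |H x| ≤ CH)
    (hHlim : Tendsto H atTop (𝓝 l)) (n : ℕ) :
    Continuous (convPow H n) ∧
    (∀ x : ℝ, 0 ≤ x → |convPow H n x| ≤ CH ^ (n + 1) * (1 + x) ^ n) ∧
    Tendsto (fun t => convPow H n t / t ^ n) atTop (𝓝 (l ^ (n + 1) / (n.factorial : ℝ))) := by
  induction n with
  | zero =>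
      refine ⟨hHc, ?_, ?_⟩
      · intro x hx
        simpa [convPow] using hCH x hx
      · simpa [convPow] using hHlim
  | succ n ih =>
      obtain ⟨ihc, ihb, ihl⟩ := ih
      have hCpow0 : (0:ℝ) ≤ CH ^ (n + 1) := pow_nonneg hCH0 _
      have hdef : convPow H (n + 1) = conv H (convPow H n) := rfl
      refine ⟨hdef ▸ conv_continuous hHc ihc, ?_, ?_⟩
      · intro x hx
        have hb := conv_bound hHc ihc n hCH ihb hCH0 hCpow0 x hx
        rw [hdef]
        calc |conv H (convPow H n) x| ≤ CH * CH ^ (n + 1) * (1 + x) ^ (n + 1) := hb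
          _ = CH ^ (n + 1 + 1) * (1 + x) ^ (n + 1) := by ring
      · have hk := key_step n hHc ihc hHlim ihb ihl
        have harith : l ^ (n + 1 + 1) / ((n + 1).factorial : ℝ)
            = l * (l ^ (n + 1) / (n.factorial : ℝ)) / ((n:ℝ) + 1) := by
          rw [Nat.factorial_succ]
          have h1 : ((n.factorial : ℝ)) ≠ 0 := Nat.cast_ne_zero.2 n.factorial_ne_zero
          have h2 : ((n:ℝ) + 1) ≠ 0 := by positivity
          push_cast
          field_simp
          ring
        rw [harith, hdef]
        exact hk

/-- if f, g : [0,∞) → [0,∞) are continuous with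
e^{at} f(t) → l and e^{at} g(t) → c as t → ∞, then for every i ≥ 1,
e^{at} (f^{⋆(i)} ⋆ g)(t) / t^i → l^i c / i! as t → ∞. -/
theorem stmt_9
    (f g : ℝ → ℝ)
    (hfcont : ContinuousOn f (Set.Ici 0)) (hgcont : ContinuousOn g (Set.Ici 0))
    (hfnn : ∀ t : ℝ, 0 ≤ t → 0 ≤ f t) (hgnn : ∀ t : ℝ, 0 ≤ t → 0 ≤ g t)
    (a l c : ℝ) (hl : 0 ≤ l) (hc : 0 ≤ c)
    (hflim : Tendsto (fun t => Real.exp (a * t) * f t) atTop (𝓝 l))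
    (hglim : Tendsto (fun t => Real.exp (a * t) * g t) atTop (𝓝 c))
    (i : ℕ) (hi : 1 ≤ i) :
    Tendsto (fun t => Real.exp (a * t) * conv (convPow f (i - 1)) g t / t ^ i)
      atTop (𝓝 (l ^ i * c / (i.factorial : ℝ))) := by
  obtain ⟨n, rfl⟩ : ∃ n, i = n + 1 := ⟨i - 1, (Nat.succ_pred_eq_of_pos hi).symm⟩
  simp only [Nat.add_sub_cancel]
  have hexp : Continuous fun s : ℝ => Real.exp (a * s) :=
    Real.continuous_exp.comp (continuous_const.mul continuous_id)
  set h : ℝ → ℝ := fun s => Real.exp (a * s) * f s with hhdef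
  set k : ℝ → ℝ := fun s => Real.exp (a * s) * g s with hkdef
  have hhcont : ContinuousOn h (Set.Ici 0) := hexp.continuousOn.mul hfcont
  have hkcont : ContinuousOn k (Set.Ici 0) := hexp.continuousOn.mul hgcont
  set H : ℝ → ℝ := fun s => h (max s 0) with hHdef
  set K : ℝ → ℝ := fun s => k (max s 0) with hKdef
  have hmax : Continuous fun s : ℝ => max s 0 := continuous_id.max continuous_const
  have hmem : ∀ s : ℝ, max s 0 ∈ Set.Ici (0:ℝ) := fun s => Set.mem_Ici.2 (le_max_right _ _)
  have hHc : Continuous H := hhcont.comp_continuous hmax hmem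
  have hKc : Continuous K := hkcont.comp_continuous hmax hmem
  have heqH : Set.EqOn h H (Set.Ici 0) := by
    intro s hs
    rw [hHdef]
    simp only
    rw [max_eq_left (mem_Ici.1 hs)]
  have heqK : Set.EqOn k K (Set.Ici 0) := by
    intro s hs
    rw [hKdef]
    simp only
    rw [max_eq_left (mem_Ici.1 hs)]
  have hHlim : Tendsto H atTop (𝓝 l) := by
    apply hflim.congr'
    filter_upwards [eventually_ge_atTop (0:ℝ)] with s hs
    exact heqH hs
  have hKlim : Tendsto K atTop (𝓝 c) := by
    apply hglim.congr'
    filter_upwards [eventually_ge_atTop (0:ℝ)] with s hs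
    exact heqK hs
  obtain ⟨CH, hCH0, hCH⟩ := bounded_of_tendsto hHc hHlim
  obtain ⟨Sc, Sb, Sl⟩ := convPow_asymp hHc hCH0 hCH hHlim n
  have hmain := key_step n hKc Sc hKlim Sb Sl
  have harith : l ^ (n + 1) * c / (((n + 1).factorial : ℕ) : ℝ)
      = c * (l ^ (n + 1) / (n.factorial : ℝ)) / ((n:ℝ) + 1) := by
    rw [Nat.factorial_succ]
    have h1 : ((n.factorial : ℝ)) ≠ 0 := Nat.cast_ne_zero.2 n.factorial_ne_zero
    have h2 : ((n:ℝ) + 1) ≠ 0 := by positivity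
    push_cast
    field_simp
  rw [harith]
  apply hmain.congr'
  filter_upwards [eventually_ge_atTop (0:ℝ)] with t ht
  have e3 : (fun s => Real.exp (a * s) * convPow f n s) = convPow h n :=
    funext fun s => exp_convPow a f n s
  have key : conv K (convPow H n) t = Real.exp (a * t) * conv (convPow f n) g t := by
    calc conv K (convPow H n) t = conv (convPow H n) K t := conv_comm K _ t
      _ = conv (convPow h n) k t :=
          (conv_congr (convPow_congr_s9 heqH n) heqK (mem_Ici.1 ht)).symm
      _ = Real.exp (a * t) * conv (convPow f n) g t := by
          rw [exp_conv a (convPow f n) g t, e3]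
  rw [key]
end

section
/- Suppose (1−p) m > 1 and σ² := ∫_{(0,∞)} r² Λ(dr) < ∞, and let η_c > 0 be the largest root of ψ_c. Fix a real number A. Then there is at most one function f : [0,∞) → [0,1] satisfying: (i) f is continuous on [0,∞) and f(0) = 1; (ii) f is differentiable at 0 with f′(0) = A; (iii) for every a > 0, f(a) = (1/b) ∫_{(0,∞)} exp{ b(1−p) ∫₀^z ( f(a e^{−η_c u}) − 1 ) du } Λ(dz). -/
set_option maxHeartbeats 4000000


open MeasureTheory Filter Set
open scoped Topology

/-- Lemma 4.7, uniqueness: suppose (1−p)m > 1 and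
σ² = ∫ r² Λ(dr) < ∞, and let η_c > 0 be the largest root of ψ_c. For any fixed
real A, there is at most one function f : [0,∞) → [0,1] which is continuous with
f(0) = 1, differentiable at 0 with f′(0) = A, and satisfies the functional
equation f(a) = (1/b) ∫ exp{b(1−p) ∫₀^z (f(a e^{−η_c u}) − 1) du} Λ(dz)
for all a > 0. -/
theorem stmt_10
    (Λ : Measure ℝ) [IsFiniteMeasure Λ] (hΛne : Λ ≠ 0)
    (hsupp : Λ (Set.Iic 0) = 0)
    (hnoatom : ∀ x : ℝ, Λ {x} = 0)
    (b : ℝ) (hb : b = (Λ Set.univ).toReal)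
    (p : ℝ) (hp : p ∈ Set.Ioo (0 : ℝ) 1)
    (hmint : Integrable (fun r : ℝ => r) Λ)
    (hm : 1 < (1 - p) * ∫ r, r ∂Λ)
    (hσint : Integrable (fun r : ℝ => r ^ 2) Λ)
    (ψc : ℝ → ℝ)
    (hψc : ∀ l : ℝ, ψc l = l - (1 - p) * ∫ r, (1 - Real.exp (-(l * r))) ∂Λ)
    (ηc : ℝ) (hηc0 : 0 < ηc) (hηcroot : ψc ηc = 0)
    (hηclargest : ∀ x : ℝ, ψc x = 0 → x ≤ ηc)
    (A : ℝ)
    (f g : ℝ → ℝ)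
    (hf01 : ∀ a : ℝ, 0 ≤ a → f a ∈ Set.Icc (0 : ℝ) 1)
    (hg01 : ∀ a : ℝ, 0 ≤ a → g a ∈ Set.Icc (0 : ℝ) 1)
    (hfcont : ContinuousOn f (Set.Ici 0)) (hgcont : ContinuousOn g (Set.Ici 0))
    (hf0 : f 0 = 1) (hg0 : g 0 = 1)
    (hfd : HasDerivWithinAt f A (Set.Ici 0) 0)
    (hgd : HasDerivWithinAt g A (Set.Ici 0) 0)
    (hfeq : ∀ a : ℝ, 0 < a → f a = (1 / b) *
      ∫ z, Real.exp (b * (1 - p) *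
        ∫ u in (0 : ℝ)..z, (f (a * Real.exp (-(ηc * u))) - 1)) ∂Λ)
    (hgeq : ∀ a : ℝ, 0 < a → g a = (1 / b) *
      ∫ z, Real.exp (b * (1 - p) *
        ∫ u in (0 : ℝ)..z, (g (a * Real.exp (-(ηc * u))) - 1)) ∂Λ) :
    ∀ a : ℝ, 0 ≤ a → f a = g a := by
  have hp1 : 0 < 1 - p := by linarith [hp.2]
  have hbuniv : Λ Set.univ ≠ 0 :=
    fun h => hΛne (Measure.measure_univ_eq_zero.mp h)
  have hb0 : 0 < b := by
    rw [hb]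
    exact ENNReal.toReal_pos hbuniv (measure_ne_top Λ _)
  have hΛae : ∀ᵐ z ∂Λ, z ∈ Set.Ioi (0:ℝ) := by
    rw [ae_iff]
    refine measure_mono_null ?_ hsupp
    intro x hx
    simp only [mem_setOf_eq, mem_Ioi, not_lt] at hx
    exact hx
  -- D = |f - g|
  set D : ℝ → ℝ := fun s => |f s - g s| with hD
  have hDcont : ContinuousOn D (Set.Ici 0) := (hfcont.sub hgcont).abs
  have hD1 : ∀ s : ℝ, 0 ≤ s → D s ≤ 1 := by
    intro s hs
    have h1 := hf01 s hs; have h2 := hg01 s hs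
    rw [abs_sub_le_iff]
    constructor <;> linarith [h1.1, h1.2, h2.1, h2.2]
  -- choose ε₀ with Λ (Ioi ε₀) > 0
  obtain ⟨ε₀, hε₀pos, hΛε₀⟩ : ∃ e : ℝ, 0 < e ∧ 0 < Λ (Set.Ioi e) := by
    by_contra hcon
    push_neg at hcon
    have hz : ∀ n : ℕ, Λ (Set.Ioi (1 / (n+1) : ℝ)) = 0 := by
      intro n
      have := hcon (1/(n+1) : ℝ) (by positivity)
      exact le_antisymm this (zero_le)
    have hU : Set.Ioi (0:ℝ) ⊆ ⋃ n : ℕ, Set.Ioi (1/(n+1) : ℝ) := by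
      intro x hx
      obtain ⟨n, hn⟩ := exists_nat_one_div_lt (show (0:ℝ) < x from hx)
      exact Set.mem_iUnion.2 ⟨n, hn⟩
    have : Λ (Set.Ioi (0:ℝ)) = 0 :=
      measure_mono_null hU (measure_iUnion_null hz)
    have : Λ Set.univ = 0 := by
      have : Λ (Set.Iic 0 ∪ Set.Ioi 0) = 0 :=
        measure_union_null hsupp this
      simpa [Set.Iic_union_Ioi] using this
    exact hbuniv this
  set q : ℝ := Real.exp (-(ηc * ε₀)) with hq
  have hq0 : 0 < q := Real.exp_pos _
  have hq1 : q < 1 := by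
    rw [hq, Real.exp_lt_one_iff]
    nlinarith
  -- primitive of exp(-(ηc u))
  have hexpint : ∀ l r : ℝ, IntervalIntegrable (fun u => Real.exp (-(ηc * u))) volume l r :=
    fun l r => (Real.continuous_exp.comp (by continuity)).intervalIntegrable l r
  have hF : ∀ l r : ℝ, (∫ u in l..r, Real.exp (-(ηc * u)))
      = (Real.exp (-(ηc * l)) - Real.exp (-(ηc * r))) / ηc := by
    intro l r
    have hd : ∀ u : ℝ, HasDerivAt (fun u : ℝ => -(Real.exp (-(ηc * u)) / ηc))
        (Real.exp (-(ηc * u))) u := by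
      intro u
      have h1 : HasDerivAt (fun u : ℝ => -(ηc * u)) (-ηc) u := by
        simpa using ((hasDerivAt_id u).const_mul ηc).fun_neg
      have h3 := ((h1.exp).div_const ηc).fun_neg
      refine h3.congr_deriv ?_
      field_simp
    rw [intervalIntegral.integral_eq_sub_of_hasDerivAt (fun u _ => hd u) (hexpint l r)]
    field_simp
    ring
  set I1 : ℝ → ℝ := fun z => ∫ u in (0:ℝ)..(min z ε₀), Real.exp (-(ηc * u)) with hI1
  set I2 : ℝ → ℝ := fun z => ∫ u in (min z ε₀)..z, Real.exp (-(ηc * u)) with hI2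
  have hI1eq : ∀ z : ℝ, I1 z = (1 - Real.exp (-(ηc * min z ε₀))) / ηc := by
    intro z
    rw [hI1]
    simp only [hF 0 (min z ε₀), mul_zero, neg_zero, Real.exp_zero]
  have hI2eq : ∀ z : ℝ, I2 z = (Real.exp (-(ηc * min z ε₀)) - Real.exp (-(ηc * z))) / ηc := by
    intro z
    rw [hI2]
    simp only [hF (min z ε₀) z]
  have hI1cont : Continuous I1 := by
    have : Continuous fun z : ℝ => (1 - Real.exp (-(ηc * min z ε₀))) / ηc := by continuity
    exact this.congr fun z => (hI1eq z).symm
  have hI2cont : Continuous I2 := by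
    have : Continuous fun z : ℝ =>
        (Real.exp (-(ηc * min z ε₀)) - Real.exp (-(ηc * z))) / ηc := by continuity
    exact this.congr fun z => (hI2eq z).symm
  have hI2nonneg : ∀ z : ℝ, 0 ≤ I2 z := by
    intro z
    exact intervalIntegral.integral_nonneg (min_le_left z ε₀) (fun u _ => (Real.exp_pos _).le)
  have hI1bound : ∀ z : ℝ, 0 < z → 0 ≤ I1 z ∧ I1 z ≤ 1/ηc := by
    intro z hz
    rw [hI1eq]
    have hm0 : 0 < min z ε₀ := lt_min hz hε₀pos
    have he1 : Real.exp (-(ηc * min z ε₀)) ≤ 1 := Real.exp_le_one_iff.2 (by nlinarith)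
    have he0 : 0 < Real.exp (-(ηc * min z ε₀)) := Real.exp_pos _
    constructor
    · apply div_nonneg (by linarith) hηc0.le
    · rw [div_le_div_iff₀ hηc0 hηc0]
      nlinarith
  have hI2bound : ∀ z : ℝ, 0 < z → I2 z ≤ 1/ηc := by
    intro z hz
    rw [hI2eq]
    have he1 : Real.exp (-(ηc * min z ε₀)) ≤ 1 := by
      apply Real.exp_le_one_iff.2
      have hm0 : 0 < min z ε₀ := lt_min hz hε₀pos
      nlinarith
    have he0 : 0 < Real.exp (-(ηc * z)) := Real.exp_pos _
    rw [div_le_div_iff₀ hηc0 hηc0]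
    nlinarith
  -- generic integrability
  have hint : ∀ (h : ℝ → ℝ) (M : ℝ), Continuous h → (∀ z : ℝ, 0 < z → |h z| ≤ M) →
      Integrable h Λ := by
    intro h M hc hbd
    refine Integrable.mono' (integrable_const M) hc.aestronglyMeasurable ?_
    filter_upwards [hΛae] with z hz
    simpa [Real.norm_eq_abs] using hbd z hz
  have hI1int : Integrable I1 Λ := hint I1 (1/ηc) hI1cont (fun z hz => by
    rw [abs_of_nonneg (hI1bound z hz).1]; exact (hI1bound z hz).2)
  have hI2int : Integrable I2 Λ := hint I2 (1/ηc) hI2cont (fun z hz => by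
    rw [abs_of_nonneg (hI2nonneg z)]; exact hI2bound z hz)
  set α : ℝ := (1-p) * ∫ z, I1 z ∂Λ with hα
  set β : ℝ := (1-p) * ∫ z, I2 z ∂Λ with hβ
  have hηsum : (1-p) * ∫ z, (1 - Real.exp (-(ηc * z))) ∂Λ = ηc := by
    have := hψc ηc
    rw [hηcroot] at this
    linarith
  have hαβ : α + β = 1 := by
    have h1 : (∫ z, I1 z ∂Λ) + (∫ z, I2 z ∂Λ)
        = ∫ z, (1 - Real.exp (-(ηc * z))) / ηc ∂Λ := by
      rw [← integral_add hI1int hI2int]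
      apply integral_congr_ae (Eventually.of_forall fun z => ?_)
      rw [hI1eq, hI2eq]
      ring
    have h2 : ∫ z, (1 - Real.exp (-(ηc * z))) / ηc ∂Λ
        = (∫ z, (1 - Real.exp (-(ηc * z))) ∂Λ) / ηc := integral_div ηc _
    rw [hα, hβ, ← mul_add, h1, h2, ← mul_div_assoc, hηsum, div_self hηc0.ne']
  have hβpos : 0 < β := by
    have hpos : 0 < ∫ z, I2 z ∂Λ := by
      rw [integral_pos_iff_support_of_nonneg (fun z => hI2nonneg z) hI2int]
      refine lt_of_lt_of_le hΛε₀ (measure_mono ?_)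
      intro z hz
      simp only [mem_Ioi] at hz
      have hmin : min z ε₀ = ε₀ := min_eq_right (le_of_lt hz)
      have : 0 < I2 z := by
        rw [hI2eq, hmin]
        apply div_pos ?_ hηc0
        have := Real.exp_lt_exp.2 (show -(ηc * z) < -(ηc * ε₀) by nlinarith)
        linarith
      exact Function.mem_support.2 (ne_of_gt this)
    exact mul_pos hp1 hpos
  have hα0 : 0 ≤ α := by
    apply mul_nonneg hp1.le
    apply integral_nonneg_of_ae
    filter_upwards [hΛae] with z hz
    exact (hI1bound z hz).1
  have hα1 : α < 1 := by linarith
  -- the exp Lipschitz bound on nonpositive reals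
  have hexplip : ∀ x y : ℝ, x ≤ 0 → y ≤ 0 → |Real.exp x - Real.exp y| ≤ |x - y| := by
    intro x y hx hy
    wlog hxy : x ≤ y generalizing x y
    · rw [abs_sub_comm, abs_sub_comm x y]; exact this y x hy hx (le_of_not_ge hxy)
    rw [abs_of_nonpos (by simp [Real.exp_le_exp, hxy] : Real.exp x - Real.exp y ≤ 0),
      abs_of_nonpos (by linarith)]
    have h1 : Real.exp y - Real.exp x ≤ Real.exp y * (y - x) := by
      have h2 : Real.exp x = Real.exp y * Real.exp (x - y) := by
        rw [← Real.exp_add]; ring_nf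
      rw [h2]
      have h3 : 1 - Real.exp (x - y) ≤ -(x - y) := by
        nlinarith [Real.add_one_le_exp (x - y)]
      nlinarith [Real.exp_pos y]
    nlinarith [Real.exp_le_one_iff.2 hy, Real.exp_pos y]
  -- KEY LEMMA A
  have keyA : ∀ t : ℝ, 0 < t → ∀ C : ℝ, 0 ≤ C → ∀ C' : ℝ, 0 ≤ C' →
      (∀ s ∈ Set.Ioc (0:ℝ) t, D s ≤ C * s) →
      (∀ s ∈ Set.Ioc (0:ℝ) (q*t), D s ≤ C' * s) →
      ∀ a ∈ Set.Ioc (0:ℝ) t, D a ≤ (α*C + β*C') * a := by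
    intro t ht C hC C' hC' hCb hC'b a haIoc
    obtain ⟨ha0, hat⟩ := haIoc
    set φf : ℝ → ℝ := fun u => f (a * Real.exp (-(ηc * u))) with hφf
    set φg : ℝ → ℝ := fun u => g (a * Real.exp (-(ηc * u))) with hφg
    have hmem : ∀ u : ℝ, a * Real.exp (-(ηc * u)) ∈ Set.Ici (0:ℝ) :=
      fun u => le_of_lt (show (0:ℝ) < a * Real.exp (-(ηc * u)) by positivity)
    have hcneg : Continuous fun u : ℝ => -(ηc * u) := (continuous_const.mul continuous_id).neg
    have hce : Continuous fun u : ℝ => Real.exp (-(ηc * u)) := Real.continuous_exp.comp hcneg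
    have hcexp : Continuous fun u : ℝ => a * Real.exp (-(ηc * u)) := continuous_const.mul hce
    have hφfc : Continuous φf := hfcont.comp_continuous hcexp hmem
    have hφgc : Continuous φg := hgcont.comp_continuous hcexp hmem
    set Xf : ℝ → ℝ := fun z => b * (1-p) * ∫ u in (0:ℝ)..z, (φf u - 1) with hXf
    set Xg : ℝ → ℝ := fun z => b * (1-p) * ∫ u in (0:ℝ)..z, (φg u - 1) with hXg
    have hφfint : ∀ l r : ℝ, IntervalIntegrable (fun u => φf u - 1) volume l r :=
      fun l r => (hφfc.sub continuous_const).intervalIntegrable l r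
    have hφgint : ∀ l r : ℝ, IntervalIntegrable (fun u => φg u - 1) volume l r :=
      fun l r => (hφgc.sub continuous_const).intervalIntegrable l r
    have hXfc : Continuous Xf :=
      continuous_const.mul (intervalIntegral.continuous_primitive hφfint 0)
    have hXgc : Continuous Xg :=
      continuous_const.mul (intervalIntegral.continuous_primitive hφgint 0)
    have hbp : (0:ℝ) ≤ b * (1-p) := by positivity
    have hXf0 : ∀ z : ℝ, 0 < z → Xf z ≤ 0 := by
      intro z hz
      apply mul_nonpos_of_nonneg_of_nonpos hbp
      have h := intervalIntegral.integral_mono_on hz.le (hφfint 0 z)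
        (intervalIntegrable_const (c := (0:ℝ)))
        (fun u _ => by linarith [(hf01 _ (hmem u)).2])
      simpa using h
    have hXg0 : ∀ z : ℝ, 0 < z → Xg z ≤ 0 := by
      intro z hz
      apply mul_nonpos_of_nonneg_of_nonpos hbp
      have h := intervalIntegral.integral_mono_on hz.le (hφgint 0 z)
        (intervalIntegrable_const (c := (0:ℝ)))
        (fun u _ => by linarith [(hg01 _ (hmem u)).2])
      simpa using h
    set G : ℝ → ℝ := fun z => ∫ u in (0:ℝ)..z, D (a * Real.exp (-(ηc * u))) with hG
    have hintD : ∀ l r : ℝ,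
        IntervalIntegrable (fun u => D (a * Real.exp (-(ηc * u)))) volume l r :=
      fun l r => ((hφfc.sub hφgc).abs).intervalIntegrable l r
    have hGc : Continuous G := intervalIntegral.continuous_primitive hintD 0
    have hGnn : ∀ z : ℝ, 0 < z → 0 ≤ G z :=
      fun z hz => intervalIntegral.integral_nonneg hz.le (fun u _ => abs_nonneg _)
    have hGbound : ∀ z : ℝ, 0 < z → G z ≤ z := by
      intro z hz
      calc G z ≤ ∫ u in (0:ℝ)..z, (1:ℝ) :=
            intervalIntegral.integral_mono_on hz.le (hintD 0 z)
              (intervalIntegrable_const) (fun u _ => hD1 _ (hmem u))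
        _ = z := by simp
    have hexpfint : Integrable (fun z => Real.exp (Xf z)) Λ := by
      apply hint (fun z => Real.exp (Xf z)) 1 hXfc.rexp
      intro z hz
      rw [abs_of_pos (Real.exp_pos _)]
      exact Real.exp_le_one_iff.2 (hXf0 z hz)
    have hexpgint : Integrable (fun z => Real.exp (Xg z)) Λ := by
      apply hint (fun z => Real.exp (Xg z)) 1 hXgc.rexp
      intro z hz
      rw [abs_of_pos (Real.exp_pos _)]
      exact Real.exp_le_one_iff.2 (hXg0 z hz)
    have hGint : Integrable G Λ := by
      refine Integrable.mono' hmint hGc.aestronglyMeasurable ?_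
      filter_upwards [hΛae] with z hz
      rw [Real.norm_eq_abs, abs_of_nonneg (hGnn z hz)]
      exact hGbound z hz
    have hGint' : Integrable (fun z => b * (1-p) * G z) Λ := hGint.const_mul _
    -- step 1
    have step1 : D a ≤ (1-p) * ∫ z, G z ∂Λ := by
      have hfa := hfeq a ha0
      have hga := hgeq a ha0
      have hdiff : f a - g a = (1/b) * ∫ z, (Real.exp (Xf z) - Real.exp (Xg z)) ∂Λ := by
        rw [hfa, hga, ← mul_sub, ← integral_sub hexpfint hexpgint]
      have hb1 : (0:ℝ) < 1/b := by positivity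
      calc D a = (1/b) * |∫ z, (Real.exp (Xf z) - Real.exp (Xg z)) ∂Λ| := by
            rw [hD]
            simp only
            rw [hdiff, abs_mul, abs_of_pos hb1]
        _ ≤ (1/b) * ∫ z, |Real.exp (Xf z) - Real.exp (Xg z)| ∂Λ := by
            apply mul_le_mul_of_nonneg_left ?_ hb1.le
            have := norm_integral_le_integral_norm
              (fun z => Real.exp (Xf z) - Real.exp (Xg z)) (μ := Λ)
            simpa [Real.norm_eq_abs] using this
        _ ≤ (1/b) * ∫ z, b * (1-p) * G z ∂Λ := by
            apply mul_le_mul_of_nonneg_left ?_ hb1.le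
            apply integral_mono_ae ((hexpfint.sub hexpgint).abs) hGint'
            filter_upwards [hΛae] with z hz
            have h1 : |Real.exp (Xf z) - Real.exp (Xg z)| ≤ |Xf z - Xg z| :=
              hexplip _ _ (hXf0 z hz) (hXg0 z hz)
            have h2 : Xf z - Xg z = b * (1-p) * ∫ u in (0:ℝ)..z, (φf u - φg u) := by
              rw [hXf, hXg]
              simp only
              rw [← mul_sub, ← intervalIntegral.integral_sub (hφfint 0 z) (hφgint 0 z)]
              congr 1
              apply intervalIntegral.integral_congr
              intro u _
              ring
            have h3 : |∫ u in (0:ℝ)..z, (φf u - φg u)| ≤ G z := by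
              have := intervalIntegral.abs_integral_le_integral_abs
                (f := fun u => φf u - φg u) (μ := volume) hz.le
              exact this
            calc |Real.exp (Xf z) - Real.exp (Xg z)| ≤ |Xf z - Xg z| := h1
              _ = b * (1-p) * |∫ u in (0:ℝ)..z, (φf u - φg u)| := by
                  rw [h2, abs_mul, abs_of_nonneg hbp]
              _ ≤ b * (1-p) * G z := mul_le_mul_of_nonneg_left h3 hbp
        _ = (1-p) * ∫ z, G z ∂Λ := by
            rw [integral_const_mul]
            field_simp
    -- step 2 : pointwise bound on G
    have step2 : ∀ z : ℝ, 0 < z → G z ≤ a * (C * I1 z + C' * I2 z) := by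
      intro z hz
      have hm0 : 0 < min z ε₀ := lt_min hz hε₀pos
      have hmz : min z ε₀ ≤ z := min_le_left _ _
      have hsplit : G z = (∫ u in (0:ℝ)..(min z ε₀), D (a * Real.exp (-(ηc * u))))
          + ∫ u in (min z ε₀)..z, D (a * Real.exp (-(ηc * u))) := by
        rw [hG]
        simp only
        rw [intervalIntegral.integral_add_adjacent_intervals (hintD 0 (min z ε₀))
          (hintD (min z ε₀) z)]
      have hpiece1 : (∫ u in (0:ℝ)..(min z ε₀), D (a * Real.exp (-(ηc * u))))
          ≤ C * a * I1 z := by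
        have hmono : (∫ u in (0:ℝ)..(min z ε₀), D (a * Real.exp (-(ηc * u))))
            ≤ ∫ u in (0:ℝ)..(min z ε₀), C * a * Real.exp (-(ηc * u)) := by
          apply intervalIntegral.integral_mono_on hm0.le (hintD 0 (min z ε₀))
            ((continuous_const.mul hce).intervalIntegrable _ _)
          intro u hu
          have hu0 : 0 ≤ u := hu.1
          have hexple : Real.exp (-(ηc * u)) ≤ 1 :=
            Real.exp_le_one_iff.2 (by nlinarith)
          have hmemIoc : a * Real.exp (-(ηc * u)) ∈ Set.Ioc (0:ℝ) t := by
            constructor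
            · positivity
            · nlinarith [Real.exp_pos (-(ηc * u))]
          have := hCb _ hmemIoc
          calc D (a * Real.exp (-(ηc * u))) ≤ C * (a * Real.exp (-(ηc * u))) := this
            _ = C * a * Real.exp (-(ηc * u)) := by ring
        calc (∫ u in (0:ℝ)..(min z ε₀), D (a * Real.exp (-(ηc * u))))
            ≤ ∫ u in (0:ℝ)..(min z ε₀), C * a * Real.exp (-(ηc * u)) := hmono
          _ = C * a * I1 z := by
              rw [hI1]
              simp only
              rw [intervalIntegral.integral_const_mul]
      rcases le_or_gt z ε₀ with hle | hgt
      · have hminz : min z ε₀ = z := min_eq_left hle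
        have hI2z : I2 z = 0 := by
          rw [hI2]
          simp only [hminz, intervalIntegral.integral_same]
        have hpiece2 : (∫ u in (min z ε₀)..z, D (a * Real.exp (-(ηc * u)))) = 0 := by
          rw [hminz, intervalIntegral.integral_same]
        rw [hsplit, hpiece2, hI2z, add_zero]
        calc (∫ u in (0:ℝ)..(min z ε₀), D (a * Real.exp (-(ηc * u))))
            ≤ C * a * I1 z := hpiece1
          _ = a * (C * I1 z + C' * 0) := by ring
      · have hminz : min z ε₀ = ε₀ := min_eq_right hgt.le
        have hpiece2 : (∫ u in (min z ε₀)..z, D (a * Real.exp (-(ηc * u))))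
            ≤ C' * a * I2 z := by
          have hmono : (∫ u in (min z ε₀)..z, D (a * Real.exp (-(ηc * u))))
              ≤ ∫ u in (min z ε₀)..z, C' * a * Real.exp (-(ηc * u)) := by
            apply intervalIntegral.integral_mono_on (by rw [hminz]; exact hgt.le)
              (hintD _ _) ((continuous_const.mul hce).intervalIntegrable _ _)
            intro u hu
            rw [hminz] at hu
            have huε : ε₀ ≤ u := hu.1
            have hexple : Real.exp (-(ηc * u)) ≤ q := by
              rw [hq]
              apply Real.exp_le_exp.2
              nlinarith
            have hmemIoc : a * Real.exp (-(ηc * u)) ∈ Set.Ioc (0:ℝ) (q * t) := by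
              constructor
              · positivity
              · nlinarith [Real.exp_pos (-(ηc * u))]
            have := hC'b _ hmemIoc
            calc D (a * Real.exp (-(ηc * u))) ≤ C' * (a * Real.exp (-(ηc * u))) := this
              _ = C' * a * Real.exp (-(ηc * u)) := by ring
          calc (∫ u in (min z ε₀)..z, D (a * Real.exp (-(ηc * u))))
              ≤ ∫ u in (min z ε₀)..z, C' * a * Real.exp (-(ηc * u)) := hmono
            _ = C' * a * I2 z := by
                rw [hI2]
                simp only
                rw [intervalIntegral.integral_const_mul]
        rw [hsplit]
        calc (∫ u in (0:ℝ)..(min z ε₀), D (a * Real.exp (-(ηc * u))))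
            + (∫ u in (min z ε₀)..z, D (a * Real.exp (-(ηc * u))))
            ≤ C * a * I1 z + C' * a * I2 z := add_le_add hpiece1 hpiece2
          _ = a * (C * I1 z + C' * I2 z) := by ring
    -- step 3
    have hbnd : Integrable (fun z => a * (C * I1 z + C' * I2 z)) Λ :=
      (((hI1int.const_mul C).add (hI2int.const_mul C')).const_mul a)
    calc D a ≤ (1-p) * ∫ z, G z ∂Λ := step1
      _ ≤ (1-p) * ∫ z, a * (C * I1 z + C' * I2 z) ∂Λ := by
          apply mul_le_mul_of_nonneg_left ?_ hp1.le
          apply integral_mono_ae hGint hbnd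
          filter_upwards [hΛae] with z hz
          exact step2 z hz
      _ = (α*C + β*C') * a := by
          rw [integral_const_mul,
            integral_add (hI1int.const_mul C) (hI2int.const_mul C'),
            integral_const_mul, integral_const_mul, hα, hβ]
          ring
  -- smallness at 0
  have hsmall : ∀ ε : ℝ, 0 < ε → ∃ δ : ℝ, 0 < δ ∧ ∀ s ∈ Set.Ioc (0:ℝ) δ, D s ≤ ε * s := by
    have hsub : HasDerivWithinAt (fun s => f s - g s) 0 (Set.Ici 0) 0 := by
      simpa using hfd.fun_sub hgd
    rw [hasDerivWithinAt_iff_tendsto_slope] at hsub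
    intro ε hε
    obtain ⟨δ, hδ, hh⟩ := Metric.tendsto_nhdsWithin_nhds.mp hsub ε hε
    refine ⟨δ/2, by positivity, fun s hs => ?_⟩
    have hsm : s ∈ Set.Ici (0:ℝ) \ {0} := ⟨le_of_lt hs.1, ne_of_gt hs.1⟩
    have hd : dist s 0 < δ := by
      rw [Real.dist_eq, sub_zero, abs_of_pos hs.1]; linarith [hs.2]
    have hsl := hh hsm hd
    rw [Real.dist_eq, sub_zero, slope_def_field] at hsl
    have hval : (f s - g s - (f 0 - g 0)) / (s - 0) = (f s - g s) / s := by
      rw [hf0, hg0]; norm_num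
    rw [hval] at hsl
    have : |f s - g s| / s < ε := by
      rwa [abs_div, abs_of_pos hs.1] at hsl
    have := (div_lt_iff₀ hs.1).mp this
    rw [hD]
    linarith
  -- KEY LEMMA B : constant propagation
  have keyB : ∀ t : ℝ, 0 < t → ∀ C : ℝ, 0 ≤ C → ∀ C' : ℝ, 0 ≤ C' →
      (∀ s ∈ Set.Ioc (0:ℝ) t, D s ≤ C * s) →
      (∀ s ∈ Set.Ioc (0:ℝ) (q*t), D s ≤ C' * s) →
      ∀ s ∈ Set.Ioc (0:ℝ) t, D s ≤ C' * s := by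
    intro t ht C hC C' hC' hCb hC'b
    have hiter : ∀ n : ℕ, ∀ s ∈ Set.Ioc (0:ℝ) t, D s ≤ (α^n * C + (1 - α^n) * C') * s := by
      intro n
      induction n with
      | zero => simpa using hCb
      | succ n ih =>
        have h1 : α^n ≤ 1 := pow_le_one₀ hα0 hα1.le
        have hCn : 0 ≤ α^n * C + (1 - α^n) * C' :=
          add_nonneg (mul_nonneg (pow_nonneg hα0 n) hC) (mul_nonneg (by linarith) hC')
        have hk := keyA t ht _ hCn C' hC' ih hC'b
        intro s hs
        have h2 := hk s hs
        have h3 : α * (α^n * C + (1 - α^n) * C') + β * C'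
            = α^(n+1) * C + (1 - α^(n+1)) * C' := by
          have hβα : β = 1 - α := by linarith
          rw [hβα]; ring
        rw [h3] at h2
        exact h2
    intro s hs
    have hlim : Tendsto (fun n : ℕ => (α^n * C + (1 - α^n) * C') * s) atTop
        (𝓝 ((0 * C + (1 - 0) * C') * s)) := by
      have h0 : Tendsto (fun n : ℕ => α^n) atTop (𝓝 0) :=
        tendsto_pow_atTop_nhds_zero_of_lt_one hα0 hα1
      exact ((h0.mul_const C).add ((tendsto_const_nhds.sub h0).mul_const C')).mul_const s
    have := ge_of_tendsto hlim (Eventually.of_forall fun n => hiter n s hs)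
    simpa using this
  -- conclusion
  intro a ha
  rcases eq_or_lt_of_le ha with h | ha0
  · rw [← h]; rw [hf0, hg0]
  have hDa : ∀ ε : ℝ, 0 < ε → D a ≤ ε * a := by
    intro ε hε
    obtain ⟨δ₁, hδ₁, hδb⟩ := hsmall ε hε
    set δ : ℝ := min δ₁ a with hδdef
    have hδ0 : 0 < δ := lt_min hδ₁ ha0
    have hδa : δ ≤ a := min_le_right _ _
    have hδsm : ∀ s ∈ Set.Ioc (0:ℝ) δ, D s ≤ ε * s :=
      fun s hs => hδb s ⟨hs.1, hs.2.trans (min_le_left _ _)⟩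
    set C₀ : ℝ := max ε (1/δ) with hC₀def
    have hC₀0 : 0 ≤ C₀ := le_trans hε.le (le_max_left _ _)
    have hC₀b : ∀ s ∈ Set.Ioc (0:ℝ) a, D s ≤ C₀ * s := by
      intro s hs
      rcases le_or_gt s δ with h | h
      · exact (hδsm s ⟨hs.1, h⟩).trans
          (mul_le_mul_of_nonneg_right (le_max_left _ _) hs.1.le)
      · calc D s ≤ 1 := hD1 s hs.1.le
          _ = (1/δ) * δ := by field_simp
          _ ≤ (1/δ) * s := by
              apply mul_le_mul_of_nonneg_left h.le (by positivity)
          _ ≤ C₀ * s := mul_le_mul_of_nonneg_right (le_max_right _ _) hs.1.le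
    have hclimb : ∀ n : ℕ, (∀ s ∈ Set.Ioc (0:ℝ) (q^n * a), D s ≤ ε * s) →
        ∀ s ∈ Set.Ioc (0:ℝ) a, D s ≤ ε * s := by
      intro n
      induction n with
      | zero => intro h; simpa using h
      | succ n ih =>
        intro hn
        apply ih
        have hqna : 0 < q^n * a := by positivity
        have hsub : q^n * a ≤ a := by
          have : q^n ≤ 1 := pow_le_one₀ hq0.le hq1.le
          nlinarith
        refine keyB (q^n * a) hqna C₀ hC₀0 ε hε.le
          (fun s hs => hC₀b s ⟨hs.1, hs.2.trans hsub⟩) (fun s hs => hn s ?_)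
        have heq : q * (q^n * a) = q^(n+1) * a := by rw [pow_succ]; ring
        rw [heq] at hs
        exact hs
    obtain ⟨n, hn⟩ := exists_pow_lt_of_lt_one (show (0:ℝ) < δ/a by positivity) hq1
    have hfin : ∀ s ∈ Set.Ioc (0:ℝ) (q^n * a), D s ≤ ε * s := by
      intro s hs
      apply hδsm s ⟨hs.1, ?_⟩
      have : q^n * a ≤ δ := by
        rw [lt_div_iff₀ ha0] at hn
        linarith
      linarith [hs.2]
    exact hclimb n hfin a ⟨ha0, le_refl a⟩
  have : D a ≤ 0 := by
    by_contra hcon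
    push_neg at hcon
    have h2 := hDa (D a / (2*a)) (by positivity)
    have h3 : D a / (2 * a) * a = D a / 2 := by field_simp
    rw [h3] at h2
    linarith
  have : D a = 0 := le_antisymm this (abs_nonneg _)
  have := abs_eq_zero.1 this
  linarith
end

section
/- Suppose η_c > 0 satisfies ψ_c(η_c) = 0, i.e. (1−p) ∫_{(0,∞)} e^{−η_c z} Λ(dz) = b(1−p) − η_c. Set P := η_c/(b(1−p)) and fix θ > 0, and define φ(a) := 1 − P + P θ/(a+θ) for a ≥ 0. Then for every a > 0, (1/b) ∫_{(0,∞)} exp{ b(1−p) ( ∫₀^z φ(a e^{−η_c u}) du − z ) } Λ(dz) = φ(a). -/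
open MeasureTheory Filter Set
open scoped Topology

/-- Step 3 in the proof of Theorem 4.6: if η_c > 0 is a root
of ψ_c, i.e. (1−p) ∫ e^{−η_c z} Λ(dz) = b(1−p) − η_c, P := η_c/(b(1−p)), θ > 0
and φ(a) := 1 − P + Pθ/(a+θ), then φ satisfies the functional equation
(1/b) ∫ exp{b(1−p)(∫₀^z φ(a e^{−η_c u}) du − z)} Λ(dz) = φ(a) for all a > 0. -/
theorem stmt_11
    (Λ : Measure ℝ) [IsFiniteMeasure Λ] (hΛne : Λ ≠ 0)
    (hsupp : Λ (Set.Iic 0) = 0)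
    (b : ℝ) (hb : b = (Λ Set.univ).toReal)
    (p : ℝ) (hp : p ∈ Set.Ioo (0 : ℝ) 1)
    (ηc : ℝ) (hηc0 : 0 < ηc)
    (hroot : (1 - p) * ∫ z, Real.exp (-(ηc * z)) ∂Λ = b * (1 - p) - ηc)
    (P : ℝ) (hP : P = ηc / (b * (1 - p)))
    (θ : ℝ) (hθ : 0 < θ)
    (φ : ℝ → ℝ) (hφ : ∀ a : ℝ, φ a = 1 - P + P * θ / (a + θ)) :
    ∀ a : ℝ, 0 < a →
      (1 / b) * ∫ z, Real.exp (b * (1 - p) *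
        ((∫ u in (0 : ℝ)..z, φ (a * Real.exp (-(ηc * u)))) - z)) ∂Λ = φ a := by
  obtain ⟨hp0, hp1⟩ := hp
  have hb0 : 0 < b := by
    rw [hb]
    exact ENNReal.toReal_pos (Measure.measure_univ_pos.mpr hΛne).ne' (measure_ne_top Λ _)
  have h1p : 0 < 1 - p := by linarith
  have hPmul : b * (1 - p) * P = ηc := by
    rw [hP]; field_simp
  intro a ha
  -- pointwise evaluation of the exponential
  have hpt : ∀ z : ℝ, Real.exp (b * (1 - p) *
        ((∫ u in (0 : ℝ)..z, φ (a * Real.exp (-(ηc * u)))) - z)) =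
      (a * Real.exp (-(ηc * z)) + θ) / (a + θ) := by
    intro z
    have hden : ∀ u : ℝ, 0 < a + θ * Real.exp (ηc * u) := fun u => by positivity
    have hden' : ∀ u : ℝ, 0 < a * Real.exp (-(ηc * u)) + θ := fun u => by positivity
    have hF : ∀ u : ℝ, HasDerivAt
        (fun v => (1 - P) * v + (P / ηc) * Real.log (a + θ * Real.exp (ηc * v)))
        (φ (a * Real.exp (-(ηc * u)))) u := by
      intro u
      have h1 : HasDerivAt (fun v : ℝ => a + θ * Real.exp (ηc * v))
          (θ * (Real.exp (ηc * u) * ηc)) u := by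
        have he : HasDerivAt (fun v : ℝ => Real.exp (ηc * v)) (Real.exp (ηc * u) * ηc) u := by
          simpa [mul_comm] using ((hasDerivAt_id u).const_mul ηc).exp
        exact (he.const_mul θ).const_add a
      have h2 := ((h1.log (hden u).ne').const_mul (P / ηc)).const_add 0
      have h3 := ((hasDerivAt_id u).const_mul (1 - P)).add
        ((h1.log (hden u).ne').const_mul (P / ηc))
      refine h3.congr_deriv ?_
      rw [hφ]
      have hexp := Real.exp_ne_zero (ηc * u)
      rw [Real.exp_neg]
      field_simp
    have hcont : Continuous (fun u : ℝ => φ (a * Real.exp (-(ηc * u)))) := by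
      simp only [hφ]
      exact continuous_const.add (continuous_const.div
        (by continuity) (fun u => (hden' u).ne'))
    have hI : (∫ u in (0 : ℝ)..z, φ (a * Real.exp (-(ηc * u)))) =
        ((1 - P) * z + (P / ηc) * Real.log (a + θ * Real.exp (ηc * z))) -
        ((1 - P) * 0 + (P / ηc) * Real.log (a + θ * Real.exp (ηc * 0))) :=
      intervalIntegral.integral_eq_sub_of_hasDerivAt (fun u _ => hF u)
        (hcont.intervalIntegrable 0 z)
    rw [hI]
    have harg : b * (1 - p) *
        ((((1 - P) * z + (P / ηc) * Real.log (a + θ * Real.exp (ηc * z))) -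
          ((1 - P) * 0 + (P / ηc) * Real.log (a + θ * Real.exp (ηc * 0)))) - z) =
        -(ηc * z) + (Real.log (a + θ * Real.exp (ηc * z)) - Real.log (a + θ)) := by
      have hη : ηc ≠ 0 := hηc0.ne'
      simp only [mul_zero, Real.exp_zero, mul_one]
      field_simp
      simp only [mul_comm z ηc]
      linear_combination (Real.log (a + θ * Real.exp (ηc * z)) - Real.log (a + θ) - ηc * z) * hPmul
    rw [harg, Real.exp_add, Real.exp_sub, Real.exp_log (hden z), Real.exp_log (by positivity : (0:ℝ) < a + θ)]
    rw [Real.exp_neg]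
    have hexp := Real.exp_ne_zero (ηc * z)
    field_simp
  rw [integral_congr_ae (Filter.Eventually.of_forall hpt)]
  -- a.e. positivity
  have hae : ∀ᵐ z ∂Λ, 0 < z := by
    have h := measure_eq_zero_iff_ae_notMem.mp hsupp
    filter_upwards [h] with z hz
    simpa using hz
  have hint : Integrable (fun z => Real.exp (-(ηc * z))) Λ := by
    refine Integrable.mono' (integrable_const 1) (Real.continuous_exp.comp (continuous_const.mul continuous_id).neg).aestronglyMeasurable ?_
    filter_upwards [hae] with z hz
    rw [Real.norm_eq_abs, Real.abs_exp, Real.exp_le_one_iff]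
    nlinarith
  have hJ : (∫ z, Real.exp (-(ηc * z)) ∂Λ) = b - ηc / (1 - p) := by
    field_simp at hroot ⊢
    linarith
  have hsum : (∫ z, (a * Real.exp (-(ηc * z)) + θ) / (a + θ) ∂Λ) =
      (a * (b - ηc / (1 - p)) + θ * b) / (a + θ) := by
    rw [integral_div, integral_add (hint.const_mul a) (integrable_const θ),
      integral_const_mul, hJ, integral_const, smul_eq_mul, measureReal_def, ← hb]
    ring
  rw [hsum, hφ, hP]
  field_simp
  ring
end

section
/- Suppose (1−p) m > 1 and σ² := ∫_{(0,∞)} r² Λ(dr) < ∞; let η_c > 0 be the largest root of ψ_c, set P := η_c/(b(1−p)) (which lies in (0,1)), and fix θ > 0. Then φ(a) := 1 − P + P θ/(a+θ) is the unique function f : [0,∞) → [0,1] such that: (i) f is continuous with f(0) = 1; (ii) f is differentiable at 0 with f′(0) = −P/θ; (iii) for every a > 0, f(a) = (1/b) ∫_{(0,∞)} exp{ b(1−p) ∫₀^z ( f(a e^{−η_c u}) − 1 ) du } Λ(dz). -/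
open MeasureTheory Filter Set
open scoped Topology

lemma exp_lip {X Y : ℝ} (hX : X ≤ 0) (hY : Y ≤ 0) :
    |Real.exp X - Real.exp Y| ≤ |X - Y| := by
  wlog h : Y ≤ X generalizing X Y
  · rw [abs_sub_comm, abs_sub_comm X Y]; exact this hY hX (le_of_not_ge h)
  have h1 : Real.exp Y ≤ Real.exp X := Real.exp_le_exp.mpr h
  rw [abs_of_nonneg (by linarith), abs_of_nonneg (by linarith)]
  have h4 : Real.exp X ≤ 1 := Real.exp_le_one_iff.mpr hX
  have k1 : Real.exp X * (1 + (Y - X)) ≤ Real.exp X * Real.exp (Y - X) :=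
    mul_le_mul_of_nonneg_left (by linarith [Real.add_one_le_exp (Y - X)]) (Real.exp_pos X).le
  have k2 : Real.exp X * Real.exp (Y - X) = Real.exp Y := by rw [← Real.exp_add]; ring_nf
  have k3 : Real.exp X * (X - Y) ≤ 1 * (X - Y) :=
    mul_le_mul_of_nonneg_right h4 (by linarith)
  nlinarith [k1, k2, k3]

lemma cont_comp {f : ℝ → ℝ} (hfc : ContinuousOn f (Ici 0)) {c ηc : ℝ} (hc : 0 < c) :
    Continuous fun u : ℝ => f (c * Real.exp (-(ηc * u))) := by
  rw [continuous_iff_continuousAt]; intro u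
  have h1 : ContinuousAt f (c * Real.exp (-(ηc * u))) :=
    hfc.continuousAt (Ici_mem_nhds (by positivity))
  exact ContinuousAt.comp h1 (by fun_prop)

lemma int_exp_const (ηc C : ℝ) (hηc : 0 < ηc) (z : ℝ) :
    ∫ u in (0:ℝ)..z, C * Real.exp (-(ηc * u)) = C * (1 - Real.exp (-(ηc * z))) / ηc := by
  have hF : ∀ u ∈ Set.uIcc (0:ℝ) z, HasDerivAt (fun u => -(C / ηc) * Real.exp (-(ηc * u)))
      (C * Real.exp (-(ηc * u))) u := by
    intro u _
    have h1 : HasDerivAt (fun u : ℝ => -(ηc * u)) (-ηc) u := by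
      have h := ((hasDerivAt_id u).const_mul ηc).neg; simp only [id_eq, mul_one] at h; exact h
    have h3 := h1.exp.const_mul (-(C / ηc))
    refine h3.congr_deriv ?_
    field_simp
  rw [intervalIntegral.integral_eq_sub_of_hasDerivAt hF
    (Continuous.intervalIntegrable (by fun_prop) _ _)]
  simp only [mul_zero, neg_zero, Real.exp_zero]
  field_simp; ring

lemma zero_of_int_zero {g : ℝ → ℝ} (hg : Continuous g) {t : ℝ} (ht : 0 < t)
    (hnn : ∀ u, u ∈ Icc 0 t → 0 ≤ g u) (hz : (∫ u in (0:ℝ)..t, g u) = 0) :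
    ∀ u ∈ Icc (0:ℝ) t, g u = 0 := by
  intro u hu
  by_contra hne
  have hgu : 0 < g u := lt_of_le_of_ne (hnn u hu) (Ne.symm hne)
  have := intervalIntegral.integral_pos ht (hg.continuousOn)
    (fun x hx => hnn x (Ioc_subset_Icc_self hx)) ⟨u, hu, hgu⟩
  linarith

lemma stmt12_core
    (Λ : Measure ℝ) [IsFiniteMeasure Λ] (hΛne : Λ ≠ 0)
    (b p ηc : ℝ) (hb0 : 0 < b) (h1p : 0 < 1 - p) (hηc0 : 0 < ηc)
    (hpos : ∀ᵐ z ∂Λ, 0 < z)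
    (hmint : Integrable (fun r : ℝ => r) Λ)
    (hint1 : Integrable (fun z : ℝ => 1 - Real.exp (-(ηc * z))) Λ)
    (hroot : ∫ z, (1 - Real.exp (-(ηc * z))) ∂Λ = ηc / (1 - p))
    (f g : ℝ → ℝ)
    (hf01 : ∀ a : ℝ, 0 ≤ a → f a ∈ Icc (0:ℝ) 1)
    (hg01 : ∀ a : ℝ, 0 ≤ a → g a ∈ Icc (0:ℝ) 1)
    (hfc : ContinuousOn f (Ici 0)) (hgc : ContinuousOn g (Ici 0))
    (hffe : ∀ a : ℝ, 0 < a → f a = (1 / b) *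
        ∫ z, Real.exp (b * (1 - p) *
          ∫ u in (0 : ℝ)..z, (f (a * Real.exp (-(ηc * u))) - 1)) ∂Λ)
    (hgfe : ∀ a : ℝ, 0 < a → g a = (1 / b) *
        ∫ z, Real.exp (b * (1 - p) *
          ∫ u in (0 : ℝ)..z, (g (a * Real.exp (-(ηc * u))) - 1)) ∂Λ)
    (ε c : ℝ) (hε : 0 < ε) (hc : 0 < c)
    (hle : ∀ x : ℝ, 0 ≤ x → x ≤ c → |f x - g x| ≤ ε * x)
    (heq : |f c - g c| = ε * c) :
    ∃ z₀ : ℝ, 0 < z₀ ∧ ∀ u : ℝ, 0 ≤ u → u ≤ z₀ →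
      |f (c * Real.exp (-(ηc * u))) - g (c * Real.exp (-(ηc * u)))|
        = ε * (c * Real.exp (-(ηc * u))) := by
  have hbp : 0 < b * (1 - p) := mul_pos hb0 h1p
  set F : ℝ → ℝ := fun u => f (c * Real.exp (-(ηc * u))) with hF
  set G : ℝ → ℝ := fun u => g (c * Real.exp (-(ηc * u))) with hG
  have contF : Continuous F := cont_comp hfc hc
  have contG : Continuous G := cont_comp hgc hc
  have hargpos : ∀ u : ℝ, 0 < c * Real.exp (-(ηc * u)) := fun u => by positivity
  have bF : ∀ u, F u ∈ Icc (0:ℝ) 1 := fun u => hf01 _ (hargpos u).le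
  have bG : ∀ u, G u ∈ Icc (0:ℝ) 1 := fun u => hg01 _ (hargpos u).le
  set X : ℝ → ℝ := fun z => b * (1 - p) * ∫ u in (0:ℝ)..z, (F u - 1) with hX
  set Y : ℝ → ℝ := fun z => b * (1 - p) * ∫ u in (0:ℝ)..z, (G u - 1) with hY
  set Gf : ℝ → ℝ := fun z => b * (1 - p) * (ε * c * (1 - Real.exp (-(ηc * z))) / ηc) with hGf
  have contX : Continuous X := continuous_const.mul
    (intervalIntegral.continuous_primitive
      (fun a b => ((contF.sub continuous_const).intervalIntegrable a b)) 0)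
  have contY : Continuous Y := continuous_const.mul
    (intervalIntegral.continuous_primitive
      (fun a b => ((contG.sub continuous_const).intervalIntegrable a b)) 0)
  have contGf : Continuous Gf := by fun_prop
  -- X z ≤ 0 for z > 0
  have hXle : ∀ z : ℝ, 0 < z → X z ≤ 0 := by
    intro z hz
    apply mul_nonpos_of_nonneg_of_nonpos hbp.le
    have : (∫ u in (0:ℝ)..z, (F u - 1)) ≤ ∫ u in (0:ℝ)..z, (0:ℝ) :=
      intervalIntegral.integral_mono_on hz.le
        ((contF.sub continuous_const).intervalIntegrable _ _)
        intervalIntegrable_const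
        (fun u _ => by have := (bF u).2; linarith)
    simpa using this
  have hYle : ∀ z : ℝ, 0 < z → Y z ≤ 0 := by
    intro z hz
    apply mul_nonpos_of_nonneg_of_nonpos hbp.le
    have : (∫ u in (0:ℝ)..z, (G u - 1)) ≤ ∫ u in (0:ℝ)..z, (0:ℝ) :=
      intervalIntegral.integral_mono_on hz.le
        ((contG.sub continuous_const).intervalIntegrable _ _)
        intervalIntegrable_const
        (fun u _ => by have := (bG u).2; linarith)
    simpa using this
  -- |X z - Y z| ≤ b(1-p) ∫ |F - G| ≤ Gf z  for z > 0
  have hXYsub : ∀ z : ℝ, X z - Y z = b * (1 - p) * ∫ u in (0:ℝ)..z, (F u - G u) := by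
    intro z
    rw [hX, hY, ← mul_sub, ← intervalIntegral.integral_sub (f := fun u => F u - 1) (g := fun u => G u - 1)
      ((contF.sub continuous_const).intervalIntegrable _ _)
      ((contG.sub continuous_const).intervalIntegrable _ _)]
    simp only [sub_sub_sub_cancel_right]
  have habs1 : ∀ z : ℝ, 0 ≤ z →
      |X z - Y z| ≤ b * (1 - p) * ∫ u in (0:ℝ)..z, |F u - G u| := by
    intro z hz
    rw [hXYsub z, abs_mul, abs_of_nonneg hbp.le]
    exact mul_le_mul_of_nonneg_left
      (intervalIntegral.abs_integral_le_integral_abs hz) hbp.le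
  have habs2 : ∀ z : ℝ, 0 ≤ z →
      (∫ u in (0:ℝ)..z, |F u - G u|) ≤ ∫ u in (0:ℝ)..z, ε * c * Real.exp (-(ηc * u)) := by
    intro z hz
    apply intervalIntegral.integral_mono_on hz
      (((contF.sub contG).abs).intervalIntegrable _ _)
      (Continuous.intervalIntegrable (by fun_prop) _ _)
    intro u hu
    have h1 : c * Real.exp (-(ηc * u)) ≤ c := by
      nth_rewrite 2 [← mul_one c]
      apply mul_le_mul_of_nonneg_left _ hc.le
      exact Real.exp_le_one_iff.mpr (by nlinarith [hu.1])
    have := hle (c * Real.exp (-(ηc * u))) (hargpos u).le h1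
    calc |F u - G u| ≤ ε * (c * Real.exp (-(ηc * u))) := this
      _ = ε * c * Real.exp (-(ηc * u)) := by ring
  have hXY : ∀ z : ℝ, 0 < z → |X z - Y z| ≤ Gf z := by
    intro z hz
    calc |X z - Y z| ≤ b * (1 - p) * ∫ u in (0:ℝ)..z, |F u - G u| := habs1 z hz.le
      _ ≤ b * (1 - p) * ∫ u in (0:ℝ)..z, ε * c * Real.exp (-(ηc * u)) :=
          mul_le_mul_of_nonneg_left (habs2 z hz.le) hbp.le
      _ = Gf z := by rw [int_exp_const ηc (ε * c) hηc0 z]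
  -- integrabilities
  have hXbd : ∀ z : ℝ, |X z| ≤ b * (1 - p) * |z| := by
    intro z
    rw [hX, abs_mul, abs_of_nonneg hbp.le]
    apply mul_le_mul_of_nonneg_left _ hbp.le
    have := intervalIntegral.norm_integral_le_of_norm_le_const
      (C := 1) (a := (0:ℝ)) (b := z) (f := fun u => F u - 1) ?_
    · simpa using this
    · intro u _
      have h1 := (bF u).1; have h2 := (bF u).2
      rw [Real.norm_eq_abs, abs_le]
      constructor
      · show -1 ≤ F u - 1; linarith
      · show F u - 1 ≤ 1; linarith
  have hYbd : ∀ z : ℝ, |Y z| ≤ b * (1 - p) * |z| := by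
    intro z
    rw [hY, abs_mul, abs_of_nonneg hbp.le]
    apply mul_le_mul_of_nonneg_left _ hbp.le
    have := intervalIntegral.norm_integral_le_of_norm_le_const
      (C := 1) (a := (0:ℝ)) (b := z) (f := fun u => G u - 1) ?_
    · simpa using this
    · intro u _
      have h1 := (bG u).1; have h2 := (bG u).2
      rw [Real.norm_eq_abs, abs_le]
      constructor
      · show -1 ≤ G u - 1; linarith
      · show G u - 1 ≤ 1; linarith
  have intXY : Integrable (fun z => |X z - Y z|) Λ := by
    apply Integrable.mono' ((hmint.norm.const_mul (2 * (b * (1 - p)))))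
      ((contX.sub contY).abs.aestronglyMeasurable)
    apply ae_of_all
    intro z
    have h1 := hXbd z; have h2 := hYbd z
    have : |X z - Y z| ≤ |X z| + |Y z| := abs_sub _ _
    simp only [Real.norm_eq_abs]
    rw [abs_abs]
    calc |X z - Y z| ≤ |X z| + |Y z| := abs_sub _ _
      _ ≤ 2 * (b * (1 - p)) * |z| := by linarith
  have intGf : Integrable Gf Λ := by
    apply Integrable.mono' (integrable_const (b * (1 - p) * (ε * c / ηc)))
      contGf.aestronglyMeasurable
    filter_upwards [hpos] with z hz
    have he1 : Real.exp (-(ηc * z)) ≤ 1 := Real.exp_le_one_iff.mpr (by nlinarith)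
    have he0 : 0 < Real.exp (-(ηc * z)) := Real.exp_pos _
    have hGfz : Gf z = b * (1 - p) * (ε * c * (1 - Real.exp (-(ηc * z))) / ηc) := rfl
    have e1 : ‖Gf z‖ = b * (1 - p) * (ε * c * (1 - Real.exp (-(ηc * z))) / ηc) := by
      rw [Real.norm_eq_abs, hGfz]
      exact abs_of_nonneg (mul_nonneg hbp.le (div_nonneg
        (mul_nonneg (by positivity) (by linarith)) hηc0.le))
    rw [e1]
    have h2 : ε * c * (1 - Real.exp (-(ηc * z))) ≤ ε * c := by nlinarith [mul_pos hε hc]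
    calc b * (1 - p) * (ε * c * (1 - Real.exp (-(ηc * z))) / ηc)
        ≤ b * (1 - p) * (ε * c / ηc) := by gcongr
      _ = b * (1 - p) * (ε * c / ηc) := rfl
  have intGfval : ∫ z, Gf z ∂Λ = b * (ε * c) := by
    have : ∫ z, Gf z ∂Λ = (b * (1 - p) * (ε * c / ηc)) * ∫ z, (1 - Real.exp (-(ηc * z))) ∂Λ := by
      rw [← integral_const_mul]
      congr 1 with z
      rw [hGf]; ring
    rw [this, hroot]
    field_simp
  have intexpX : Integrable (fun z => Real.exp (X z)) Λ := by
    apply Integrable.mono' (integrable_const 1)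
      (contX.rexp.aestronglyMeasurable)
    filter_upwards [hpos] with z hz
    rw [Real.norm_eq_abs, abs_of_pos (Real.exp_pos _)]
    exact Real.exp_le_one_iff.mpr (hXle z hz)
  have intexpY : Integrable (fun z => Real.exp (Y z)) Λ := by
    apply Integrable.mono' (integrable_const 1)
      (contY.rexp.aestronglyMeasurable)
    filter_upwards [hpos] with z hz
    rw [Real.norm_eq_abs, abs_of_pos (Real.exp_pos _)]
    exact Real.exp_le_one_iff.mpr (hYle z hz)
  -- the chain
  have e1 : f c - g c = (1 / b) * ∫ z, (Real.exp (X z) - Real.exp (Y z)) ∂Λ := by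
    rw [integral_sub intexpX intexpY, hffe c hc, hgfe c hc]; ring
  have e2 : |f c - g c| ≤ (1 / b) * ∫ z, |X z - Y z| ∂Λ := by
    rw [e1, abs_mul, abs_of_nonneg (by positivity : (0:ℝ) ≤ 1 / b)]
    apply mul_le_mul_of_nonneg_left _ (by positivity)
    calc |∫ z, (Real.exp (X z) - Real.exp (Y z)) ∂Λ|
        ≤ ∫ z, |Real.exp (X z) - Real.exp (Y z)| ∂Λ := by
          simpa [Real.norm_eq_abs] using norm_integral_le_integral_norm
            (fun z => Real.exp (X z) - Real.exp (Y z)) (μ := Λ)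
      _ ≤ ∫ z, |X z - Y z| ∂Λ := by
          apply integral_mono_ae ((intexpX.sub intexpY).abs) intXY
          filter_upwards [hpos] with z hz
          exact exp_lip (hXle z hz) (hYle z hz)
  have e3 : ∫ z, |X z - Y z| ∂Λ ≤ ∫ z, Gf z ∂Λ := by
    apply integral_mono_ae intXY intGf
    filter_upwards [hpos] with z hz
    exact hXY z hz
  have e4 : ∫ z, |X z - Y z| ∂Λ = ∫ z, Gf z ∂Λ := by
    apply le_antisymm e3
    by_contra hlt
    push_neg at hlt
    have : (1 / b) * ∫ z, |X z - Y z| ∂Λ < (1 / b) * (b * (ε * c)) := by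
      rw [← intGfval]
      exact mul_lt_mul_of_pos_left hlt (by positivity)
    rw [heq] at e2
    have : ε * c < ε * c := by
      calc ε * c ≤ (1 / b) * ∫ z, |X z - Y z| ∂Λ := e2
        _ < (1 / b) * (b * (ε * c)) := this
        _ = ε * c := by field_simp
    linarith
  -- deficit is 0 a.e.
  have e5 : ∀ᵐ z ∂Λ, Gf z - |X z - Y z| = 0 := by
    have hnn : 0 ≤ᵐ[Λ] fun z => Gf z - |X z - Y z| := by
      filter_upwards [hpos] with z hz
      have := hXY z hz
      simp only [Pi.zero_apply]
      show (0:ℝ) ≤ Gf z - |X z - Y z|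
      linarith
    have hz : ∫ z, (Gf z - |X z - Y z|) ∂Λ = 0 := by
      rw [integral_sub intGf intXY, e4]; ring
    have := (integral_eq_zero_iff_of_nonneg_ae hnn (intGf.sub intXY)).mp hz
    filter_upwards [this] with z hz2
    simpa using hz2
  have hne : (MeasureTheory.ae Λ).NeBot := ae_neBot.mpr hΛne
  obtain ⟨z₀, hz₀D, hz₀pos⟩ := (e5.and hpos).exists
  refine ⟨z₀, hz₀pos, ?_⟩
  -- now Gf z₀ = |X z₀ - Y z₀|, squeeze the inner integrals
  have f1 : Gf z₀ = b * (1 - p) * ∫ u in (0:ℝ)..z₀, ε * c * Real.exp (-(ηc * u)) := by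
    rw [int_exp_const ηc (ε * c) hηc0 z₀]
  have f2 : (∫ u in (0:ℝ)..z₀, ε * c * Real.exp (-(ηc * u)))
      ≤ ∫ u in (0:ℝ)..z₀, |F u - G u| := by
    have h1 : |X z₀ - Y z₀| = Gf z₀ := by linarith [sub_eq_zero.mp hz₀D]
    by_contra hlt
    push_neg at hlt
    have h2 := habs1 z₀ hz₀pos.le
    have h3 : b * (1 - p) * (∫ u in (0:ℝ)..z₀, |F u - G u|)
        < b * (1 - p) * ∫ u in (0:ℝ)..z₀, ε * c * Real.exp (-(ηc * u)) :=
      mul_lt_mul_of_pos_left hlt hbp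
    rw [h1, f1] at h2
    linarith
  have f3 : ∫ u in (0:ℝ)..z₀, (ε * c * Real.exp (-(ηc * u)) - |F u - G u|) = 0 := by
    have hi1 : IntervalIntegrable (fun u => ε * c * Real.exp (-(ηc * u))) volume 0 z₀ :=
      Continuous.intervalIntegrable (by fun_prop) _ _
    have hi2 : IntervalIntegrable (fun u => |F u - G u|) volume 0 z₀ :=
      ((contF.sub contG).abs).intervalIntegrable _ _
    rw [intervalIntegral.integral_sub hi1 hi2]
    have := habs2 z₀ hz₀pos.le
    linarith
  have f4 := zero_of_int_zero (g := fun u => ε * c * Real.exp (-(ηc * u)) - |F u - G u|)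
    (by fun_prop) hz₀pos ?_ f3
  · intro u hu huz
    have h6 : ε * c * Real.exp (-(ηc * u)) - |F u - G u| = 0 := f4 u ⟨hu, huz⟩
    have h5 : |F u - G u| = ε * c * Real.exp (-(ηc * u)) := by linarith
    calc |f (c * Real.exp (-(ηc * u))) - g (c * Real.exp (-(ηc * u)))| = |F u - G u| := rfl
      _ = ε * c * Real.exp (-(ηc * u)) := h5
      _ = ε * (c * Real.exp (-(ηc * u))) := by ring
  · intro u hu
    have h1 : c * Real.exp (-(ηc * u)) ≤ c := by
      nth_rewrite 2 [← mul_one c]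
      apply mul_le_mul_of_nonneg_left _ hc.le
      exact Real.exp_le_one_iff.mpr (by nlinarith [hu.1])
    have h7 : |F u - G u| ≤ ε * (c * Real.exp (-(ηc * u))) :=
      hle (c * Real.exp (-(ηc * u))) (hargpos u).le h1
    show (0:ℝ) ≤ ε * c * Real.exp (-(ηc * u)) - |F u - G u|
    linarith

lemma phi_fe (Λ : Measure ℝ) [IsFiniteMeasure Λ]
    (b p ηc P θ : ℝ) (hb0 : 0 < b) (h1p : 0 < 1 - p) (hηc0 : 0 < ηc) (hθ : 0 < θ)
    (hbuniv : (Λ Set.univ).toReal = b)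
    (hint_exp : Integrable (fun z : ℝ => Real.exp (-(ηc * z))) Λ)
    (hIexp : ∫ z, Real.exp (-(ηc * z)) ∂Λ = b - ηc / (1 - p))
    (hbP : b * (1 - p) * P = ηc)
    (a : ℝ) (ha : 0 < a) :
    1 - P + P * θ / (a + θ) = (1 / b) *
      ∫ z, Real.exp (b * (1 - p) *
        ∫ u in (0 : ℝ)..z, ((1 - P + P * θ / (a * Real.exp (-(ηc * u)) + θ)) - 1)) ∂Λ := by
  have hbne : b ≠ 0 := hb0.ne'
  have hηne : ηc ≠ 0 := hηc0.ne'
  have hpne : (1:ℝ) - p ≠ 0 := h1p.ne'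
  have hden : ∀ u : ℝ, 0 < a * Real.exp (-(ηc * u)) + θ := fun u => by positivity
  have haθ : 0 < a + θ := by linarith
  -- step 1 : closed form of the exponent
  have hlog : ∀ z : ℝ, b * (1 - p) *
      ∫ u in (0 : ℝ)..z, ((1 - P + P * θ / (a * Real.exp (-(ηc * u)) + θ)) - 1)
      = Real.log (a * Real.exp (-(ηc * z)) + θ) - Real.log (a + θ) := by
    intro z
    have hF : ∀ u ∈ Set.uIcc (0:ℝ) z,
        HasDerivAt (fun u => (P / ηc) * Real.log (a * Real.exp (-(ηc * u)) + θ))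
          ((1 - P + P * θ / (a * Real.exp (-(ηc * u)) + θ)) - 1) u := by
      intro u _
      have h1 : HasDerivAt (fun u : ℝ => -(ηc * u)) (-ηc) u := by
        have h := ((hasDerivAt_id u).const_mul ηc).neg; simp only [id_eq, mul_one] at h; exact h
      have h2 : HasDerivAt (fun u : ℝ => a * Real.exp (-(ηc * u)) + θ)
          (a * (Real.exp (-(ηc * u)) * -ηc)) u := (h1.exp.const_mul a).add_const θ
      have h3 := (h2.log (hden u).ne').const_mul (P / ηc)
      refine h3.congr_deriv ?_
      have hd := (hden u).ne'
      field_simp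
      ring
    have hcont : Continuous fun u : ℝ =>
        (1 - P + P * θ / (a * Real.exp (-(ηc * u)) + θ)) - 1 := by
      apply Continuous.sub _ continuous_const
      apply Continuous.add continuous_const
      exact Continuous.div continuous_const (by fun_prop) (fun u => (hden u).ne')
    rw [intervalIntegral.integral_eq_sub_of_hasDerivAt hF (hcont.intervalIntegrable _ _)]
    have : b * (1 - p) * (P / ηc) = 1 := by
      field_simp
      linarith [hbP]
    simp only [mul_zero, neg_zero, Real.exp_zero, mul_one]
    calc b * (1 - p) * (P / ηc * Real.log (a * Real.exp (-(ηc * z)) + θ)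
          - P / ηc * Real.log (a + θ))
        = (b * (1 - p) * (P / ηc)) *
          (Real.log (a * Real.exp (-(ηc * z)) + θ) - Real.log (a + θ)) := by ring
      _ = Real.log (a * Real.exp (-(ηc * z)) + θ) - Real.log (a + θ) := by rw [this]; ring
  -- step 2 : the integrand of the Λ-integral
  have hexp : ∀ z : ℝ, Real.exp (b * (1 - p) *
      ∫ u in (0 : ℝ)..z, ((1 - P + P * θ / (a * Real.exp (-(ηc * u)) + θ)) - 1))
      = (a * Real.exp (-(ηc * z)) + θ) / (a + θ) := by
    intro z
    rw [hlog z, Real.exp_sub, Real.exp_log (hden z), Real.exp_log haθ]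
  rw [integral_congr_ae (ae_of_all _ hexp)]
  -- step 3 : compute the Λ-integral
  have h4 : ∫ z, (a * Real.exp (-(ηc * z)) + θ) / (a + θ) ∂Λ
      = (a * (b - ηc / (1 - p)) + θ * b) / (a + θ) := by
    have e1 : ∫ z, (a * Real.exp (-(ηc * z)) + θ) / (a + θ) ∂Λ
        = (∫ z, (a * Real.exp (-(ηc * z)) + θ) ∂Λ) / (a + θ) := by
      simp only [div_eq_mul_inv]
      exact integral_mul_const _ _
    rw [e1, integral_add (hint_exp.const_mul a) (integrable_const θ),
      integral_const_mul, hIexp, integral_const, measureReal_def, hbuniv]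
    rw [smul_eq_mul]
    ring_nf
  rw [h4]
  have hη' : ηc = b * (1 - p) * P := hbP.symm
  rw [hη']
  field_simp
  ring
set_option maxHeartbeats 1000000 in
/-- Steps 2–3 in the proof of Theorem 4.6: suppose (1−p)m > 1 and
σ² < ∞, let η_c > 0 be the largest root of ψ_c, set P := η_c/(b(1−p)) ∈ (0,1)
and fix θ > 0. Then φ(a) = 1 − P + Pθ/(a+θ) is the unique [0,1]-valued function
on [0,∞) which is continuous with φ(0) = 1, differentiable at 0 with
φ′(0) = −P/θ, and satisfies the functional equation
f(a) = (1/b) ∫ exp{b(1−p) ∫₀^z (f(a e^{−η_c u}) − 1) du} Λ(dz) for all a > 0. -/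
theorem stmt_12
    (Λ : Measure ℝ) [IsFiniteMeasure Λ] (hΛne : Λ ≠ 0)
    (hsupp : Λ (Set.Iic 0) = 0)
    (hnoatom : ∀ x : ℝ, Λ {x} = 0)
    (b : ℝ) (hb : b = (Λ Set.univ).toReal)
    (p : ℝ) (hp : p ∈ Set.Ioo (0 : ℝ) 1)
    (hmint : Integrable (fun r : ℝ => r) Λ)
    (hm : 1 < (1 - p) * ∫ r, r ∂Λ)
    (hσint : Integrable (fun r : ℝ => r ^ 2) Λ)
    (ψc : ℝ → ℝ)
    (hψc : ∀ l : ℝ, ψc l = l - (1 - p) * ∫ r, (1 - Real.exp (-(l * r))) ∂Λ)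
    (ηc : ℝ) (hηc0 : 0 < ηc) (hηcroot : ψc ηc = 0)
    (hηclargest : ∀ x : ℝ, ψc x = 0 → x ≤ ηc)
    (P : ℝ) (hP : P = ηc / (b * (1 - p))) (hP01 : P ∈ Set.Ioo (0 : ℝ) 1)
    (θ : ℝ) (hθ : 0 < θ)
    (φ : ℝ → ℝ) (hφ : ∀ a : ℝ, φ a = 1 - P + P * θ / (a + θ)) :
    ((∀ a : ℝ, 0 ≤ a → φ a ∈ Set.Icc (0 : ℝ) 1) ∧
      ContinuousOn φ (Set.Ici 0) ∧ φ 0 = 1 ∧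
      HasDerivWithinAt φ (-(P / θ)) (Set.Ici 0) 0 ∧
      (∀ a : ℝ, 0 < a → φ a = (1 / b) *
        ∫ z, Real.exp (b * (1 - p) *
          ∫ u in (0 : ℝ)..z, (φ (a * Real.exp (-(ηc * u))) - 1)) ∂Λ)) ∧
    (∀ f : ℝ → ℝ,
      (∀ a : ℝ, 0 ≤ a → f a ∈ Set.Icc (0 : ℝ) 1) →
      ContinuousOn f (Set.Ici 0) → f 0 = 1 →
      HasDerivWithinAt f (-(P / θ)) (Set.Ici 0) 0 →
      (∀ a : ℝ, 0 < a → f a = (1 / b) *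
        ∫ z, Real.exp (b * (1 - p) *
          ∫ u in (0 : ℝ)..z, (f (a * Real.exp (-(ηc * u))) - 1)) ∂Λ) →
      ∀ a : ℝ, 0 ≤ a → f a = φ a) := by
  obtain ⟨hp0, hp1⟩ := hp
  obtain ⟨hP0, hP1⟩ := hP01
  have h1p : (0:ℝ) < 1 - p := by linarith
  have hb0 : 0 < b := by
    rw [hb]
    apply ENNReal.toReal_pos
    · simpa [Measure.measure_univ_eq_zero] using hΛne
    · exact measure_ne_top Λ _
  have hbne : b ≠ 0 := hb0.ne'
  have hθne : θ ≠ 0 := hθ.ne'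
  have hbuniv : (Λ Set.univ).toReal = b := hb.symm
  have hpos : ∀ᵐ z ∂Λ, 0 < z := by
    have h1 : ∀ᵐ z ∂Λ, z ∉ Set.Iic 0 := measure_eq_zero_iff_ae_notMem.mp hsupp
    filter_upwards [h1] with z hz
    simpa using hz
  have hint_exp : Integrable (fun z : ℝ => Real.exp (-(ηc * z))) Λ := by
    apply Integrable.mono' (integrable_const 1)
      (Continuous.aestronglyMeasurable (by fun_prop))
    filter_upwards [hpos] with z hz
    rw [Real.norm_eq_abs, abs_of_pos (Real.exp_pos _)]
    exact Real.exp_le_one_iff.mpr (by nlinarith)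
  have hIroot : ∫ z, (1 - Real.exp (-(ηc * z))) ∂Λ = ηc / (1 - p) := by
    have h2 := hψc ηc
    rw [hηcroot] at h2
    rw [eq_div_iff h1p.ne']
    linarith
  have hint1 : Integrable (fun z : ℝ => 1 - Real.exp (-(ηc * z))) Λ :=
    (integrable_const 1).sub hint_exp
  have hIexp : ∫ z, Real.exp (-(ηc * z)) ∂Λ = b - ηc / (1 - p) := by
    have h4 : ∫ z, ((1:ℝ) - Real.exp (-(ηc * z))) ∂Λ
        = (∫ _z, (1:ℝ) ∂Λ) - ∫ z, Real.exp (-(ηc * z)) ∂Λ :=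
      integral_sub (integrable_const 1) hint_exp
    rw [integral_const, measureReal_def, hbuniv, smul_eq_mul, mul_one, hIroot] at h4
    linarith
  have hbP : b * (1 - p) * P = ηc := by rw [hP]; field_simp
  obtain rfl : φ = fun a => 1 - P + P * θ / (a + θ) := funext hφ
  -- part 1 components
  have hIcc : ∀ a : ℝ, 0 ≤ a → (fun a => 1 - P + P * θ / (a + θ)) a ∈ Set.Icc (0:ℝ) 1 := by
    intro a ha
    have haθ : 0 < a + θ := by linarith
    constructor
    · have h5 : 0 ≤ P * θ / (a + θ) := by positivity
      show (0:ℝ) ≤ 1 - P + P * θ / (a + θ)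
      linarith
    · show 1 - P + P * θ / (a + θ) ≤ 1
      have h5 : P * θ / (a + θ) ≤ P := by
        rw [div_le_iff₀ haθ]; nlinarith
      linarith
  have hcont : ContinuousOn (fun a : ℝ => 1 - P + P * θ / (a + θ)) (Set.Ici 0) := by
    apply ContinuousOn.add continuousOn_const
    apply ContinuousOn.div continuousOn_const (by fun_prop)
    intro x hx
    have h6 : (0:ℝ) ≤ x := hx
    positivity
  have hval0 : (fun a : ℝ => 1 - P + P * θ / (a + θ)) 0 = 1 := by
    show 1 - P + P * θ / (0 + θ) = 1
    rw [zero_add, mul_div_cancel_right₀ _ hθne]; ring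
  have hderiv : HasDerivAt (fun a : ℝ => 1 - P + P * θ / (a + θ)) (-(P / θ)) 0 := by
    have h1 : HasDerivAt (fun a : ℝ => a + θ) 1 0 := (hasDerivAt_id 0).add_const θ
    have h2 : HasDerivAt (fun a : ℝ => P * θ / (a + θ))
        ((0 * (0 + θ) - P * θ * 1) / (0 + θ)^2) 0 :=
      (hasDerivAt_const 0 (P * θ)).div h1 (by positivity)
    have h3 := h2.const_add (1 - P)
    refine h3.congr_deriv ?_
    rw [zero_add]
    field_simp
    ring
  have hFE : ∀ a : ℝ, 0 < a → (fun a => 1 - P + P * θ / (a + θ)) a = (1 / b) *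
      ∫ z, Real.exp (b * (1 - p) *
        ∫ u in (0 : ℝ)..z,
          ((fun a => 1 - P + P * θ / (a + θ)) (a * Real.exp (-(ηc * u))) - 1)) ∂Λ := by
    intro a ha
    exact phi_fe Λ b p ηc P θ hb0 h1p hηc0 hθ hbuniv hint_exp hIexp hbP a ha
  refine ⟨⟨hIcc, hcont, hval0, hderiv.hasDerivWithinAt, hFE⟩, ?_⟩
  -- uniqueness
  intro f hf01 hfc hf0 hfd hfFE
  set d : ℝ → ℝ := fun x => |f x - (1 - P + P * θ / (x + θ))| with hd
  have key : ∀ ε : ℝ, 0 < ε → ∀ x : ℝ, 0 ≤ x → d x ≤ ε * x := by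
    intro ε hε
    by_contra hbad
    push_neg at hbad
    obtain ⟨x₁, hx₁0, hx₁⟩ := hbad
    -- derivative of the difference vanishes at 0
    have hdd : HasDerivWithinAt (fun x => f x - (1 - P + P * θ / (x + θ))) 0 (Set.Ici 0) 0 := by
      have h7 := hfd.sub hderiv.hasDerivWithinAt
      exact h7.congr_deriv (sub_self _)
    have hsub0 : f 0 - (1 - P + P * θ / (0 + θ)) = 0 := by
      rw [hf0, zero_add, mul_div_cancel_right₀ _ hθne]; ring
    have hev : ∀ᶠ x in 𝓝[Set.Ici 0] 0, d x ≤ ε / 2 * x := by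
      have hlo := hasDerivWithinAt_iff_isLittleO.mp hdd
      have h6 := hlo.def (half_pos hε)
      filter_upwards [h6, self_mem_nhdsWithin] with x hx hx0
      have hx0' : (0:ℝ) ≤ x := hx0
      simp only [sub_zero, smul_zero, hsub0, Real.norm_eq_abs] at hx
      calc d x = |f x - (1 - P + P * θ / (x + θ))| := rfl
        _ ≤ ε / 2 * |x| := hx
        _ = ε / 2 * x := by rw [abs_of_nonneg hx0']
    obtain ⟨δ, hδ0, hδ⟩ := Metric.mem_nhdsWithin_iff.mp hev
    have hδ' : ∀ x : ℝ, 0 ≤ x → x < δ → d x ≤ ε / 2 * x := by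
      intro x h1 h2
      exact hδ ⟨by simpa [Real.dist_eq, abs_of_nonneg h1] using h2, h1⟩
    set T : Set ℝ := {x | 0 ≤ x ∧ ε * x < d x} with hT
    have hTne : T.Nonempty := ⟨x₁, hx₁0, hx₁⟩
    have hTδ : ∀ x ∈ T, δ ≤ x := by
      rintro x ⟨h1, h2⟩
      by_contra h3
      push_neg at h3
      have h4 := hδ' x h1 h3
      nlinarith
    have hbdd : BddBelow T := ⟨0, fun x hx => hx.1⟩
    set a₀ := sInf T with ha₀
    have ha₀δ : δ ≤ a₀ := le_csInf hTne hTδ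
    have ha₀pos : 0 < a₀ := lt_of_lt_of_le hδ0 ha₀δ
    have hbelow : ∀ x : ℝ, 0 ≤ x → x < a₀ → d x ≤ ε * x := by
      intro x h1 h2
      by_contra h3
      push_neg at h3
      exact absurd (csInf_le hbdd ⟨h1, h3⟩) (not_le.mpr h2)
    have hdc : ∀ x : ℝ, 0 < x → ContinuousAt d x := by
      intro x hx
      have h1 : ContinuousAt f x := hfc.continuousAt (Ici_mem_nhds hx)
      have h2 : ContinuousAt (fun y : ℝ => 1 - P + P * θ / (y + θ)) x := by
        apply ContinuousAt.add continuousAt_const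
        exact ContinuousAt.div continuousAt_const (by fun_prop) (by positivity)
      exact (h1.sub h2).abs
    have ha₀cl : a₀ ∈ closure T := csInf_mem_closure hTne hbdd
    have hup : ε * a₀ ≤ d a₀ := by
      have hnb : (𝓝[T] a₀).NeBot := mem_closure_iff_nhdsWithin_neBot.mp ha₀cl
      have h1 : Tendsto (fun x => d x - ε * x) (𝓝[T] a₀) (𝓝 (d a₀ - ε * a₀)) :=
        (((hdc a₀ ha₀pos).sub (by fun_prop)).continuousWithinAt).tendsto
      have h2 : ∀ᶠ x in 𝓝[T] a₀, 0 ≤ d x - ε * x :=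
        eventually_mem_nhdsWithin.mono (fun x hx => by linarith [hx.2])
      have h3 := ge_of_tendsto h1 h2
      linarith
    have hdown : d a₀ ≤ ε * a₀ := by
      have hcl2 : a₀ ∈ closure (Set.Ico 0 a₀) := by
        rw [closure_Ico ha₀pos.ne]
        exact ⟨ha₀pos.le, le_rfl⟩
      have hnb : (𝓝[Set.Ico 0 a₀] a₀).NeBot := mem_closure_iff_nhdsWithin_neBot.mp hcl2
      have h1 : Tendsto (fun x => ε * x - d x) (𝓝[Set.Ico 0 a₀] a₀) (𝓝 (ε * a₀ - d a₀)) :=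
        (((continuous_const.mul continuous_id).continuousAt.sub
          (hdc a₀ ha₀pos)).continuousWithinAt).tendsto
      have h2 : ∀ᶠ x in 𝓝[Set.Ico 0 a₀] a₀, 0 ≤ ε * x - d x :=
        eventually_mem_nhdsWithin.mono (fun x hx => by linarith [hbelow x hx.1 hx.2])
      have h3 := ge_of_tendsto h1 h2
      linarith
    have heqa₀ : d a₀ = ε * a₀ := le_antisymm hdown hup
    set U : Set ℝ := {x | 0 < x ∧ x ≤ a₀ ∧ ∀ y : ℝ, x ≤ y → y ≤ a₀ → d y = ε * y} with hU
    have ha₀U : a₀ ∈ U := by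
      refine ⟨ha₀pos, le_rfl, fun y h1 h2 => ?_⟩
      have : y = a₀ := le_antisymm h2 h1
      rw [this, heqa₀]
    have hUbdd : BddBelow U := ⟨0, fun x hx => hx.1.le⟩
    have hUne : U.Nonempty := ⟨a₀, ha₀U⟩
    set c := sInf U with hc
    have hc0 : 0 ≤ c := le_csInf hUne (fun x hx => hx.1.le)
    have hca₀ : c ≤ a₀ := csInf_le hUbdd ha₀U
    have hUall : ∀ y : ℝ, c < y → y ≤ a₀ → d y = ε * y := by
      intro y h1 h2
      obtain ⟨u, huU, hu⟩ := exists_lt_of_csInf_lt hUne h1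
      exact huU.2.2 y hu.le h2
    rcases eq_or_lt_of_le hc0 with hc0'|hc0'
    · -- c = 0 : contradiction with the derivative bound near 0
      have hmin : 0 < min (δ / 2) a₀ := lt_min (by linarith) ha₀pos
      have hy : d (min (δ / 2) a₀) = ε * min (δ / 2) a₀ :=
        hUall _ (by rw [← hc0']; exact hmin) (min_le_right _ _)
      have h8 := hδ' (min (δ / 2) a₀) hmin.le
        (lt_of_le_of_lt (min_le_left _ _) (by linarith))
      nlinarith
    · -- c > 0 : descend using the core equality lemma
      have hceq : d c = ε * c := by
        have hclU : c ∈ closure U := csInf_mem_closure hUne hUbdd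
        have hnb : (𝓝[U] c).NeBot := mem_closure_iff_nhdsWithin_neBot.mp hclU
        have h1 : Tendsto (fun x => d x - ε * x) (𝓝[U] c) (𝓝 (d c - ε * c)) :=
          (((hdc c hc0').sub (by fun_prop)).continuousWithinAt).tendsto
        have h2 : ∀ᶠ x in 𝓝[U] c, d x - ε * x = (fun _ => (0:ℝ)) x :=
          eventually_mem_nhdsWithin.mono (fun x hx => by
            rw [hx.2.2 x le_rfl hx.2.1]; ring)
        have h4 : d c - ε * c = 0 :=
          tendsto_nhds_unique (h1.congr' h2) tendsto_const_nhds
        linarith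
      have hlec : ∀ x : ℝ, 0 ≤ x → x ≤ c → d x ≤ ε * x := by
        intro x h1 h2
        rcases lt_or_eq_of_le (le_trans h2 hca₀) with h|h
        · exact hbelow x h1 h
        · rw [h, heqa₀]
      obtain ⟨z₀, hz₀, hzeq⟩ := stmt12_core Λ hΛne b p ηc hb0 h1p hηc0 hpos hmint hint1
        hIroot f (fun a => 1 - P + P * θ / (a + θ)) hf01 hIcc hfc hcont hfFE hFE
        ε c hε hc0' hlec hceq
      have hc'pos : 0 < c * Real.exp (-(ηc * z₀)) := by positivity
      have hexplt : Real.exp (-(ηc * z₀)) < 1 := by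
        rw [Real.exp_lt_one_iff]
        nlinarith
      have hc'lt : c * Real.exp (-(ηc * z₀)) < c :=
        calc c * Real.exp (-(ηc * z₀)) < c * 1 := mul_lt_mul_of_pos_left hexplt hc0'
          _ = c := mul_one c
      have hc'U : c * Real.exp (-(ηc * z₀)) ∈ U := by
        refine ⟨hc'pos, by linarith, ?_⟩
        intro y h1 h2
        rcases lt_trichotomy y c with h|h|h
        · -- y ∈ [c', c)
          have hy0 : 0 < y := lt_of_lt_of_le hc'pos h1
          set u := Real.log (c / y) / ηc with hu
          have hcy : 1 ≤ c / y := by rw [le_div_iff₀ hy0]; linarith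
          have hu0 : 0 ≤ u := div_nonneg (Real.log_nonneg hcy) hηc0.le
          have huz : u ≤ z₀ := by
            rw [hu, div_le_iff₀ hηc0]
            have h3 : c / y ≤ Real.exp (ηc * z₀) := by
              rw [div_le_iff₀ hy0]
              calc c = c * Real.exp (-(ηc * z₀)) * Real.exp (ηc * z₀) := by
                    rw [mul_assoc, ← Real.exp_add]; simp
                _ ≤ y * Real.exp (ηc * z₀) :=
                    mul_le_mul_of_nonneg_right h1 (Real.exp_pos _).le
                _ = Real.exp (ηc * z₀) * y := by ring
            calc Real.log (c / y) ≤ Real.log (Real.exp (ηc * z₀)) :=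
                  Real.log_le_log (by positivity) h3
              _ = ηc * z₀ := Real.log_exp _
              _ = z₀ * ηc := by ring
          have hyval : c * Real.exp (-(ηc * u)) = y := by
            rw [hu]
            have h9 : ηc * (Real.log (c / y) / ηc) = Real.log (c / y) := by
              field_simp
            rw [h9, Real.exp_neg, Real.exp_log (by positivity)]
            field_simp
          have h10 := hzeq u hu0 huz
          rw [hyval] at h10
          exact h10
        · rw [h, hceq]
        · exact hUall y h h2
      have h11 := csInf_le hUbdd hc'U
      linarith
  -- conclude
  intro a ha
  rcases eq_or_lt_of_le ha with h|h
  · rw [← h, hf0]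
    show (1:ℝ) = 1 - P + P * θ / (0 + θ)
    rw [zero_add, mul_div_cancel_right₀ _ hθne]; ring
  · show f a = 1 - P + P * θ / (a + θ)
    by_contra hne
    have hd0 : 0 < d a := abs_pos.mpr (sub_ne_zero.mpr hne)
    have h12 := key (d a / (2 * a)) (div_pos hd0 (by linarith)) a ha
    rw [div_mul_eq_mul_div, mul_comm] at h12
    have : d a ≤ d a / 2 := by
      calc d a ≤ a * d a / (2 * a) := h12
        _ = d a / 2 := by field_simp
    linarith
end
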